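/- arXiv:2406.15876 — 15 statements merged into one kernel-verified Lean document; each statement's English description precedes it below -/
import Mathlib

section
/- Let k be a positive integer and δ ∈ (0,1]. Let A_1, …, A_n be pairwise independent events with x_i = Pr[A_i] and Σ_{i=1}^n x_i ≤ (1−δ)·k. Then Σ_{i=1}^n Pr[|R| ≥ k and A_i] ≤ (1−δ²)/δ², where R = {i ∈ [n] : A_i occurs} and |R| = Σ_{i=1}^n 1_{A_i}. -/
open MeasureTheory

set_option maxHeartbeats 1600000 in
/-- For pairwise independent events `A i` with
`∑ Pr[A i] ≤ (1 - δ) * k`, we have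
`∑_i Pr[|R| ≥ k and A i] ≤ (1 - δ²)/δ²`, where `R = {i | A i occurs}`. -/
theorem stmt_0 {Ω : Type*} [MeasurableSpace Ω] (μ : Measure Ω) [IsProbabilityMeasure μ]
    (n k : ℕ) (hk : 0 < k) (δ : ℝ) (hδ0 : 0 < δ) (hδ1 : δ ≤ 1)
    (A : Fin n → Set Ω) (hA : ∀ i, MeasurableSet (A i))
    (hpair : ∀ i j, i ≠ j → μ (A i ∩ A j) = μ (A i) * μ (A j))
    (hsum : ∑ i, (μ (A i)).toReal ≤ (1 - δ) * k) :
    ∑ i, (μ ({ω | k ≤ Set.ncard {j : Fin n | ω ∈ A j}} ∩ A i)).toReal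
      ≤ (1 - δ ^ 2) / δ ^ 2 := by
  classical
  set x : Fin n → ℝ := fun i => (μ (A i)).toReal with hxdef
  set S : ℝ := ∑ i, x i with hSdef
  have hx0 : ∀ i, 0 ≤ x i := fun i => ENNReal.toReal_nonneg
  have hx1 : ∀ i, x i ≤ 1 := by
    intro i
    have := prob_le_one (μ := μ) (s := A i)
    simpa [hxdef] using ENNReal.toReal_mono (by simp) this
  have hS0 : 0 ≤ S := Finset.sum_nonneg fun i _ => hx0 i
  have hSk : S ≤ (1 - δ) * k := hsum
  have hk1 : (1 : ℝ) ≤ (k : ℝ) := by exact_mod_cast hk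
  have hkS : S < (k : ℝ) := by nlinarith
  have hdk : δ * k ≤ (k : ℝ) - S := by nlinarith
  have hdk0 : 0 < δ * k := by positivity
  -- the random variable X = number of events that occur
  set X : Ω → ℝ := fun ω => ∑ i, (A i).indicator (fun _ => (1 : ℝ)) ω with hXdef
  have hXmeas : Measurable X := by
    apply Finset.measurable_sum
    intro i _
    exact (measurable_const).indicator (hA i)
  have hXint : Integrable X μ :=
    integrable_finset_sum _ fun i _ => (integrable_const (1 : ℝ)).indicator (hA i)
  have hX0 : ∀ ω, 0 ≤ X ω := fun ω =>
    Finset.sum_nonneg fun i _ => Set.indicator_nonneg (fun _ _ => zero_le_one) ω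
  -- the event E
  set E : Set Ω := {ω | k ≤ Set.ncard {j : Fin n | ω ∈ A j}} with hEdef
  have hXcard : ∀ ω, X ω = ((Finset.univ.filter fun j => ω ∈ A j).card : ℝ) := by
    intro ω
    simp only [hXdef, Set.indicator_apply]
    rw [Finset.sum_boole]
  have hEeq : E = {ω | (k : ℝ) ≤ X ω} := by
    ext ω
    have hn : Set.ncard {j : Fin n | ω ∈ A j}
        = (Finset.univ.filter fun j => ω ∈ A j).card := by
      rw [Set.ncard_eq_toFinset_card']
      congr 1
      ext j
      simp
    simp only [hEdef, Set.mem_setOf_eq, hXcard, hn]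
    exact_mod_cast Iff.rfl
  have hEmeas : MeasurableSet E := by
    rw [hEeq]; exact measurableSet_le measurable_const hXmeas
  have hEX : ∀ ω, ω ∈ E → (k : ℝ) ≤ X ω := by
    intro ω hω; rw [hEeq] at hω; exact hω
  -- first moment
  have hint1 : ∫ ω, X ω ∂μ = S := by
    rw [hXdef]
    rw [integral_finset_sum _ fun i _ => (integrable_const (1 : ℝ)).indicator (hA i)]
    refine Finset.sum_congr rfl fun i _ => ?_
    rw [integral_indicator_const (1 : ℝ) (hA i)]
    simp [hxdef]
    rfl
  -- second moment
  have hmul : ∀ ω, X ω * X ω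
      = ∑ i, ∑ j, (A i ∩ A j).indicator (fun _ => (1 : ℝ)) ω := by
    intro ω
    rw [hXdef, Finset.sum_mul_sum]
    refine Finset.sum_congr rfl fun i _ => Finset.sum_congr rfl fun j _ => ?_
    simp [Set.indicator_apply, Set.mem_inter_iff]
    by_cases h1 : ω ∈ A i <;> by_cases h2 : ω ∈ A j <;> simp [h1, h2]
  have hX2int : Integrable (fun ω => X ω * X ω) μ := by
    have : (fun ω => X ω * X ω)
        = fun ω => ∑ i, ∑ j, (A i ∩ A j).indicator (fun _ => (1 : ℝ)) ω := funext hmul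
    rw [this]
    exact integrable_finset_sum _ fun i _ =>
      integrable_finset_sum _ fun j _ =>
        (integrable_const (1 : ℝ)).indicator ((hA i).inter (hA j))
  have hint2 : ∫ ω, X ω * X ω ∂μ = ∑ i, ∑ j, (μ (A i ∩ A j)).toReal := by
    simp_rw [hmul]
    rw [integral_finset_sum _ fun i _ => integrable_finset_sum _ fun j _ =>
      (integrable_const (1 : ℝ)).indicator ((hA i).inter (hA j))]
    refine Finset.sum_congr rfl fun i _ => ?_
    rw [integral_finset_sum _ fun j _ => (integrable_const (1 : ℝ)).indicator ((hA i).inter (hA j))]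
    refine Finset.sum_congr rfl fun j _ => ?_
    rw [integral_indicator_const (1 : ℝ) ((hA i).inter (hA j))]
    simp
    rfl
  -- compute second moment via pairwise independence
  have hQ : ∑ i, ∑ j, (μ (A i ∩ A j)).toReal ≤ S + S * S := by
    have hterm : ∀ i j : Fin n, (μ (A i ∩ A j)).toReal
        = if i = j then x i else x i * x j := by
      intro i j
      by_cases h : i = j
      · simp [h, hxdef]
      · rw [if_neg h, hpair i j h, ENNReal.toReal_mul]
    have : ∑ i, ∑ j, (μ (A i ∩ A j)).toReal
        = ∑ i, (x i + (∑ j, x i * x j - x i * x i)) := by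
      refine Finset.sum_congr rfl fun i _ => ?_
      simp_rw [hterm]
      have h4 : ∑ j, (if i = j then x i else x i * x j)
          = ∑ j, (x i * x j + (if i = j then x i - x i * x i else 0)) := by
        refine Finset.sum_congr rfl fun j _ => ?_
        by_cases h : i = j
        · subst h; simp
        · simp [h]
      rw [h4, Finset.sum_add_distrib, Finset.sum_ite_eq Finset.univ i (fun _ => x i - x i * x i)]
      simp only [Finset.mem_univ, if_true]
      ring
    rw [this, Finset.sum_add_distrib]
    have h2 : ∑ i, (∑ j, x i * x j - x i * x i) ≤ S * S := by
      have : ∀ i : Fin n, ∑ j, x i * x j - x i * x i ≤ x i * S := by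
        intro i
        rw [← Finset.mul_sum, ← hSdef]
        nlinarith [hx0 i]
      calc ∑ i, (∑ j, x i * x j - x i * x i) ≤ ∑ i, x i * S :=
            Finset.sum_le_sum fun i _ => this i
        _ = S * S := by rw [← Finset.sum_mul, ← hSdef, mul_comm]
    linarith [h2]
  -- variance bound
  have hvar : ∫ ω, (X ω - S) ^ 2 ∂μ ≤ S := by
    have hexp : (fun ω => (X ω - S) ^ 2)
        = fun ω => X ω * X ω - (2 * S) * X ω + S ^ 2 := by
      funext ω; ring
    rw [hexp]
    rw [integral_add (by exact (hX2int.sub (hXint.const_mul (2 * S))) ) (integrable_const _)]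
    rw [integral_sub hX2int (hXint.const_mul (2 * S))]
    rw [integral_const_mul, hint1, hint2]
    simp only [integral_const, probReal_univ, ENNReal.toReal_one, smul_eq_mul, one_mul]
    nlinarith [hQ]
  -- the pointwise bound
  have hptwise : ∀ ω, E.indicator (fun _ => (1 : ℝ)) ω * X ω
      ≤ (k : ℝ) * (X ω - S) ^ 2 / ((k : ℝ) - S) ^ 2 := by
    intro ω
    by_cases hω : ω ∈ E
    · rw [Set.indicator_of_mem hω, one_mul]
      have ht : (k : ℝ) ≤ X ω := hEX ω hω
      rw [le_div_iff₀ (pow_pos (by linarith : (0:ℝ) < (k : ℝ) - S) 2)]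
      have hfac : 0 ≤ (X ω - (k : ℝ)) * ((k : ℝ) * X ω - S * S) := by
        apply mul_nonneg (by linarith)
        nlinarith
      nlinarith [hfac]
    · rw [Set.indicator_of_notMem hω, zero_mul]
      positivity
  -- rewrite LHS as an integral
  have hlhs : ∑ i, (μ (E ∩ A i)).toReal
      = ∫ ω, E.indicator (fun _ => (1 : ℝ)) ω * X ω ∂μ := by
    have : ∀ ω, E.indicator (fun _ => (1 : ℝ)) ω * X ω
        = ∑ i, (E ∩ A i).indicator (fun _ => (1 : ℝ)) ω := by
      intro ω
      rw [hXdef, Finset.mul_sum]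
      refine Finset.sum_congr rfl fun i _ => ?_
      simp only [Set.indicator_apply, Set.mem_inter_iff]
      by_cases h1 : ω ∈ E <;> by_cases h2 : ω ∈ A i <;> simp [h1, h2]
    simp_rw [this]
    rw [integral_finset_sum _ fun i _ =>
      (integrable_const (1 : ℝ)).indicator (hEmeas.inter (hA i))]
    refine Finset.sum_congr rfl fun i _ => ?_
    rw [integral_indicator_const (1 : ℝ) (hEmeas.inter (hA i))]
    simp
    rfl
  rw [hlhs]
  have hIint : Integrable (fun ω => E.indicator (fun _ => (1 : ℝ)) ω * X ω) μ := by
    have : (fun ω => E.indicator (fun _ => (1 : ℝ)) ω * X ω)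
        = fun ω => ∑ i, (E ∩ A i).indicator (fun _ => (1 : ℝ)) ω := by
      funext ω
      rw [hXdef, Finset.mul_sum]
      refine Finset.sum_congr rfl fun i _ => ?_
      simp only [Set.indicator_apply, Set.mem_inter_iff]
      by_cases h1 : ω ∈ E <;> by_cases h2 : ω ∈ A i <;> simp [h1, h2]
    rw [this]
    exact integrable_finset_sum _ fun i _ =>
      (integrable_const (1 : ℝ)).indicator (hEmeas.inter (hA i))
  have hRint : Integrable (fun ω => (k : ℝ) * (X ω - S) ^ 2 / ((k : ℝ) - S) ^ 2) μ := by
    have hsq : Integrable (fun ω => (X ω - S) ^ 2) μ := by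
      have : (fun ω => (X ω - S) ^ 2)
          = fun ω => X ω * X ω - (2 * S) * X ω + S ^ 2 := by
        funext ω; ring
      rw [this]
      exact ((hX2int.sub (hXint.const_mul (2 * S))).add (integrable_const _))
    have heq : (fun ω => (k : ℝ) * (X ω - S) ^ 2 / ((k : ℝ) - S) ^ 2)
        = fun ω => ((k : ℝ) / ((k : ℝ) - S) ^ 2) * (X ω - S) ^ 2 := by
      funext ω; ring
    rw [heq]
    exact hsq.const_mul _
  calc ∫ ω, E.indicator (fun _ => (1 : ℝ)) ω * X ω ∂μ
      ≤ ∫ ω, (k : ℝ) * (X ω - S) ^ 2 / ((k : ℝ) - S) ^ 2 ∂μ :=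
        integral_mono hIint hRint hptwise
    _ = (k : ℝ) / ((k : ℝ) - S) ^ 2 * ∫ ω, (X ω - S) ^ 2 ∂μ := by
        rw [← integral_const_mul]
        refine integral_congr_ae (Filter.Eventually.of_forall fun ω => ?_)
        ring
    _ ≤ (k : ℝ) / ((k : ℝ) - S) ^ 2 * S := by
        apply mul_le_mul_of_nonneg_left hvar
        positivity
    _ ≤ (1 - δ ^ 2) / δ ^ 2 := by
        have hδ2 : 0 ≤ 1 - δ ^ 2 := by nlinarith
        have hk0 : (0:ℝ) ≤ (k:ℝ) := Nat.cast_nonneg k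
        rw [div_mul_eq_mul_div,
          div_le_div_iff₀ (pow_pos (by linarith : (0:ℝ) < (k:ℝ) - S) 2) (pow_pos hδ0 2)]
        have h1 : (δ * k) ^ 2 ≤ ((k : ℝ) - S) ^ 2 := pow_le_pow_left₀ hdk0.le hdk 2
        have h2 : (k : ℝ) * S * δ ^ 2 ≤ (1 - δ ^ 2) * (δ * k) ^ 2 := by
          nlinarith [mul_le_mul_of_nonneg_left hSk (show (0:ℝ) ≤ (k:ℝ) * δ ^ 2 by positivity),
            mul_nonneg (mul_nonneg (mul_nonneg hδ0.le (sq_nonneg δ)) (sub_nonneg.2 hδ1))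
              (mul_nonneg hk0 hk0)]
        nlinarith [mul_le_mul_of_nonneg_left h1 hδ2]
end

section
/- Let k be a positive integer, δ ∈ (0,1), and n ≥ 1. Let A_1, …, A_n be pairwise independent events with x_i = Pr[A_i] and Σ_{i=1}^n x_i = (1−δ)·k. Then there exists an index i ∈ [n] such that Pr[|R| ≥ k and A_i] ≤ ((1+δ)/(δ²·k))·Pr[A_i], where R = {i ∈ [n] : A_i occurs}. -/
open MeasureTheory

set_option maxHeartbeats 1000000

/-- For pairwise independent events `A i` with
`∑ Pr[A i] = (1 - δ) * k`, there exists an index `i` with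
`Pr[|R| ≥ k and A i] ≤ ((1+δ)/(δ²·k)) · Pr[A i]`. -/
theorem stmt_1 {Ω : Type*} [MeasurableSpace Ω] (μ : Measure Ω) [IsProbabilityMeasure μ]
    (n k : ℕ) (hk : 0 < k) (hn : 1 ≤ n) (δ : ℝ) (hδ0 : 0 < δ) (hδ1 : δ < 1)
    (A : Fin n → Set Ω) (hA : ∀ i, MeasurableSet (A i))
    (hpair : ∀ i j, i ≠ j → μ (A i ∩ A j) = μ (A i) * μ (A j))
    (hsum : ∑ i, (μ (A i)).toReal = (1 - δ) * k) :
    ∃ i : Fin n,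
      (μ ({ω | k ≤ Set.ncard {j : Fin n | ω ∈ A j}} ∩ A i)).toReal
        ≤ ((1 + δ) / (δ ^ 2 * k)) * (μ (A i)).toReal := by
  classical
  by_contra hcon
  push_neg at hcon
  have hk0 : (0:ℝ) < (k:ℝ) := by exact_mod_cast hk
  set x : Fin n → ℝ := fun i => (μ (A i)).toReal with hxdef
  have hx0 : ∀ i, 0 ≤ x i := fun i => ENNReal.toReal_nonneg
  set m : ℝ := (1 - δ) * k with hmdef
  have hm0 : 0 < m := by
    have h1 : 0 < 1 - δ := by linarith
    positivity
  set f : Ω → ℝ := fun ω => ∑ i, (A i).indicator 1 ω with hfdef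
  have hfmeas : Measurable f := by
    apply Finset.measurable_sum
    intro i _
    exact measurable_const.indicator (hA i)
  set B : Set Ω := {ω | (k:ℝ) ≤ f ω} with hBdef
  have hBmeas : MeasurableSet B := measurableSet_le measurable_const hfmeas
  -- the ncard set is B
  have hfval : ∀ ω, f ω = ((Finset.univ.filter fun j : Fin n => ω ∈ A j).card : ℝ) := by
    intro ω
    simp [hfdef, Set.indicator_apply]
  have hSB : {ω | k ≤ Set.ncard {j : Fin n | ω ∈ A j}} = B := by
    ext ω
    have hcard : Set.ncard {j : Fin n | ω ∈ A j}
        = (Finset.univ.filter fun j : Fin n => ω ∈ A j).card := by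
      rw [Set.ncard_eq_toFinset_card']
      congr 1
      ext j
      simp
    simp only [Set.mem_setOf_eq, hBdef, hcard, hfval ω]
    exact ⟨fun h => by exact_mod_cast h, fun h => by exact_mod_cast h⟩
  -- integrability of indicators
  have hint_ind : ∀ (s : Set Ω), MeasurableSet s →
      Integrable ((s.indicator (1 : Ω → ℝ))) μ := by
    intro s hs
    rw [integrable_indicator_iff hs]
    exact integrableOn_const (measure_lt_top μ s).ne
  have hintf : Integrable f μ :=
    integrable_finset_sum _ fun i _ => hint_ind _ (hA i)
  have hIf : ∫ ω, f ω ∂μ = m := by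
    rw [hfdef, integral_finset_sum _ fun i _ => hint_ind _ (hA i)]
    rw [Finset.sum_congr rfl fun i _ => integral_indicator_one (hA i)]
    exact hsum
  -- second moment
  have hffsum : (fun ω => f ω * f ω)
      = fun ω => ∑ i, ∑ j, (A i ∩ A j).indicator (1 : Ω → ℝ) ω := by
    funext ω
    rw [hfdef]
    rw [Finset.sum_mul_sum]
    refine Finset.sum_congr rfl fun i _ => Finset.sum_congr rfl fun j _ => ?_
    rw [Set.inter_indicator_one]
    rfl
  have hintff : Integrable (fun ω => f ω * f ω) μ := by
    rw [hffsum]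
    exact integrable_finset_sum _ fun i _ =>
      integrable_finset_sum _ fun j _ => hint_ind _ ((hA i).inter (hA j))
  have hIff : ∫ ω, f ω * f ω ∂μ ≤ m + m * m := by
    rw [hffsum, integral_finset_sum _ fun i _ =>
      integrable_finset_sum _ fun j _ => hint_ind _ ((hA i).inter (hA j))]
    have hstep : ∀ i : Fin n,
        ∫ ω, (∑ j, (A i ∩ A j).indicator (1 : Ω → ℝ) ω) ∂μ ≤ x i + x i * m := by
      intro i
      rw [integral_finset_sum _ fun j _ => hint_ind _ ((hA i).inter (hA j))]
      rw [Finset.sum_congr rfl fun j _ => integral_indicator_one ((hA i).inter (hA j))]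
      rw [← Finset.add_sum_erase _ _ (Finset.mem_univ i)]
      have h1 : (μ (A i ∩ A i)).toReal = x i := by simp [hxdef, Set.inter_self]
      have h2 : ∑ j ∈ Finset.univ.erase i, (μ (A i ∩ A j)).toReal ≤ x i * m := by
        have hc : ∀ j ∈ Finset.univ.erase i, (μ (A i ∩ A j)).toReal = x i * x j := by
          intro j hj
          rw [hpair i j (Ne.symm (Finset.ne_of_mem_erase hj)), ENNReal.toReal_mul]
        rw [Finset.sum_congr rfl hc, ← Finset.mul_sum]
        have hsub : ∑ j ∈ Finset.univ.erase i, x j ≤ m := by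
          rw [← hsum]
          exact Finset.sum_le_sum_of_subset_of_nonneg
            (Finset.subset_univ _) (fun j _ _ => hx0 j)
        exact mul_le_mul_of_nonneg_left hsub (hx0 i)
      simp only [measureReal_def]
      linarith [h1, h2]
    calc ∑ i, ∫ ω, (∑ j, (A i ∩ A j).indicator (1 : Ω → ℝ) ω) ∂μ
        ≤ ∑ i, (x i + x i * m) := Finset.sum_le_sum fun i _ => hstep i
      _ = m + m * m := by
          rw [Finset.sum_add_distrib, ← Finset.sum_mul, hsum]
  -- variance bound
  have hsq_eq : (fun ω => (f ω - m)^2)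
      = fun ω => (f ω * f ω - (2*m) * f ω) + m^2 := by
    funext ω; ring
  have hint1 : Integrable (fun ω => f ω * f ω - 2*m*f ω) μ :=
    hintff.sub (hintf.const_mul (2*m))
  have hintsq : Integrable (fun ω => (f ω - m)^2) μ := by
    rw [hsq_eq]
    exact hint1.add (integrable_const _)
  have hV : ∫ ω, (f ω - m)^2 ∂μ ≤ m := by
    rw [hsq_eq, integral_add hint1 (integrable_const _),
      integral_sub hintff (hintf.const_mul (2*m)), integral_const_mul, hIf,
      integral_const]
    simp only [measure_univ, probReal_univ, ENNReal.toReal_one, smul_eq_mul, one_mul]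
    nlinarith [hIff]
  -- pointwise bound
  set C : ℝ := 1/(δ*k) + m/(δ*k)^2 with hCdef
  have hdk : (0:ℝ) < δ * k := by positivity
  have hC0 : 0 ≤ C := by positivity
  set g : Ω → ℝ := fun ω => ∑ i, (B ∩ A i).indicator (1 : Ω → ℝ) ω with hgdef
  have hpt : ∀ ω, g ω ≤ C * (f ω - m)^2 := by
    intro ω
    by_cases hω : ω ∈ B
    · have hg_le : g ω ≤ f ω := by
        refine Finset.sum_le_sum fun i _ => ?_
        by_cases hi : ω ∈ A i
        · simp [Set.indicator_apply, hi, hω]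
        · simp [Set.indicator_apply, hi]
      have hfk : (k:ℝ) ≤ f ω := hω
      set t : ℝ := f ω - m with htdef
      have ht : δ * k ≤ t := by
        rw [htdef, hmdef]; nlinarith
      have h1 : t ≤ t^2 / (δ*k) := by
        rw [le_div_iff₀ hdk]; nlinarith
      have h2 : m ≤ m * t^2 / (δ*k)^2 := by
        rw [le_div_iff₀ (by positivity : (0:ℝ) < (δ*k)^2)]
        have hsq : (δ*k)^2 ≤ t^2 := by nlinarith
        nlinarith [mul_le_mul_of_nonneg_left hsq hm0.le]
      have : C * t^2 = t^2/(δ*k) + m * t^2/(δ*k)^2 := by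
        rw [hCdef]; ring
      rw [this]
      have : f ω = t + m := by rw [htdef]; ring
      linarith [hg_le]
    · have : g ω = 0 := by
        rw [hgdef]
        refine Finset.sum_eq_zero fun i _ => ?_
        simp [Set.indicator_apply, Set.mem_inter_iff, hω]
      rw [this]
      positivity
  have hgint : Integrable g μ :=
    integrable_finset_sum _ fun i _ => hint_ind _ (hBmeas.inter (hA i))
  have hImain : ∑ i, (μ (B ∩ A i)).toReal ≤ C * m := by
    have h1 : ∫ ω, g ω ∂μ ≤ ∫ ω, C * (f ω - m)^2 ∂μ :=
      integral_mono hgint (hintsq.const_mul C) hpt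
    have h2 : ∫ ω, g ω ∂μ = ∑ i, (μ (B ∩ A i)).toReal := by
      rw [hgdef, integral_finset_sum _ fun i _ => hint_ind _ (hBmeas.inter (hA i))]
      exact Finset.sum_congr rfl fun i _ => integral_indicator_one (hBmeas.inter (hA i))
    have h3 : ∫ ω, C * (f ω - m)^2 ∂μ ≤ C * m := by
      rw [integral_const_mul]
      exact mul_le_mul_of_nonneg_left hV hC0
    linarith
  -- derive contradiction
  set c : ℝ := (1 + δ) / (δ ^ 2 * k) with hcdef
  have hcon' : ∀ i : Fin n, c * x i < (μ (B ∩ A i)).toReal := by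
    intro i
    have := hcon i
    rw [hSB] at this
    exact this
  have hne : (Finset.univ : Finset (Fin n)).Nonempty := ⟨⟨0, hn⟩, Finset.mem_univ _⟩
  have hlt : ∑ i, c * x i < ∑ i, (μ (B ∩ A i)).toReal :=
    Finset.sum_lt_sum_of_nonempty hne fun i _ => hcon' i
  have hsum' : ∑ i, c * x i = c * m := by
    rw [← Finset.mul_sum, hsum]
  have hfinal : C * m < c * m := by
    have hδ2 : (0:ℝ) < δ^2 := by positivity
    have e1 : C * m = (1-δ)/δ^2 := by
      rw [hCdef, hmdef]
      field_simp
      ring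
    have e2 : c * m = (1+δ)*(1-δ)/δ^2 := by
      rw [hcdef, hmdef]
      field_simp
    rw [e1, e2, div_lt_div_iff₀ hδ2 hδ2]
    have h1δ : (0:ℝ) < 1 - δ := by linarith
    nlinarith [mul_pos (mul_pos hδ0 h1δ) hδ2]
  rw [hsum'] at hlt
  linarith [hImain]
end

section
/- Let k be a positive integer and b ∈ (0,1]. Let A_1, …, A_n be pairwise independent events with Σ_{j=1}^n Pr[A_j] ≤ b·k. Then for every i ∈ [n] with Pr[A_i] > 0, the conditional probability Pr[ Σ_{j ≠ i} 1_{A_j} ≥ k | A_i ] ≤ b. -/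
/-!
Conditioned on `A i`, the expected number of other events that occur is
`∑_{j ≠ i} Pr[A j ∩ A i] / Pr[A i] = ∑_{j ≠ i} Pr[A j] ≤ b k` by pairwise independence,
so Markov's inequality bounds the conditional probability that at least `k` of them occur by `b`.
-/

open MeasureTheory ENNReal Finset

section

variable {Ω ι : Type*} [MeasurableSpace Ω] {μ : Measure Ω}

lemma measurable_card_filter_mem (s : Finset ι) {A : ι → Set Ω}
    (hA : ∀ j ∈ s, MeasurableSet (A j)) [∀ ω, DecidablePred (ω ∈ A ·)] :
    Measurable fun ω => #{j ∈ s | ω ∈ A j} := by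
  simp_rw [card_filter]
  exact Finset.measurable_sum s fun j hj => measurable_const.ite (hA j hj) measurable_const

lemma lintegral_card_filter_mem (s : Finset ι) {A : ι → Set Ω}
    (hA : ∀ j ∈ s, MeasurableSet (A j)) [∀ ω, DecidablePred (ω ∈ A ·)] :
    ∫⁻ ω, (#{j ∈ s | ω ∈ A j} : ℝ≥0∞) ∂μ = ∑ j ∈ s, μ (A j) := by
  have hindicator (ω : Ω) : (#{j ∈ s | ω ∈ A j} : ℝ≥0∞) = ∑ j ∈ s, (A j).indicator 1 ω := by
    simp [Set.indicator_apply, sum_boole]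
  simp_rw [hindicator]
  rw [lintegral_finsetSum s fun j hj => measurable_one.indicator (hA j hj)]
  exact sum_congr rfl fun j hj => lintegral_indicator_one (hA j hj)

lemma natCast_mul_measure_card_ge_le (s : Finset ι) {A : ι → Set Ω}
    (hA : ∀ j ∈ s, MeasurableSet (A j)) [∀ ω, DecidablePred (ω ∈ A ·)] (k : ℕ) :
    k * μ {ω | k ≤ #{j ∈ s | ω ∈ A j}} ≤ ∑ j ∈ s, μ (A j) := by
  calc (k : ℝ≥0∞) * μ {ω | k ≤ #{j ∈ s | ω ∈ A j}}
      = k * μ {ω | (k : ℝ≥0∞) ≤ #{j ∈ s | ω ∈ A j}} := by simp_rw [Nat.cast_le]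
    _ ≤ ∫⁻ ω, (#{j ∈ s | ω ∈ A j} : ℝ≥0∞) ∂μ :=
      mul_meas_ge_le_lintegral₀
        (measurable_from_nat.comp (measurable_card_filter_mem s hA)).aemeasurable _
    _ = ∑ j ∈ s, μ (A j) := lintegral_card_filter_mem s hA

lemma natCast_mul_measureReal_card_ge_inter_le [IsFiniteMeasure μ] (s : Finset ι)
    {A : ι → Set Ω} (hA : ∀ j ∈ s, MeasurableSet (A j)) [∀ ω, DecidablePred (ω ∈ A ·)]
    {B : Set Ω} (hindep : ∀ j ∈ s, μ (A j ∩ B) = μ (A j) * μ B) (k : ℕ) :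
    k * μ.real ({ω | k ≤ #{j ∈ s | ω ∈ A j}} ∩ B) ≤ (∑ j ∈ s, μ.real (A j)) * μ.real B := by
  have hMarkov := natCast_mul_measure_card_ge_le (μ := μ.restrict B) s hA k
  have hS : MeasurableSet {ω | k ≤ #{j ∈ s | ω ∈ A j}} :=
    measurableSet_le measurable_const (measurable_card_filter_mem s hA)
  rw [Measure.restrict_apply hS, sum_congr rfl fun j hj => Measure.restrict_apply (hA j hj),
    sum_congr rfl hindep, ← sum_mul] at hMarkov
  have hfinite : (∑ j ∈ s, μ (A j)) * μ B ≠ ∞ :=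
    mul_ne_top (sum_ne_top.2 fun _ _ => measure_ne_top _ _) (measure_ne_top _ _)
  simpa [toReal_mul, toReal_sum, measureReal_def] using ENNReal.toReal_mono hfinite hMarkov

end

theorem stmt_2_general {Ω : Type*} [MeasurableSpace Ω] (μ : Measure Ω) [IsProbabilityMeasure μ]
    (n k : ℕ) (hk : 0 < k) (b : ℝ)
    (A : Fin n → Set Ω) (hA : ∀ i, MeasurableSet (A i))
    (hpair : ∀ i j, i ≠ j → μ (A i ∩ A j) = μ (A i) * μ (A j))
    (hsum : ∑ j, (μ (A j)).toReal ≤ b * k)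
    (i : Fin n) (hi : 0 < (μ (A i)).toReal) :
    (μ ({ω | k ≤ Set.ncard {j : Fin n | j ≠ i ∧ ω ∈ A j}} ∩ A i)).toReal
      / (μ (A i)).toReal ≤ b := by
  classical
  simp only [← measureReal_def] at hsum hi ⊢
  have hcount (ω : Ω) : {j | j ≠ i ∧ ω ∈ A j}.ncard = #{j ∈ univ.erase i | ω ∈ A j} := by
    rw [← Set.ncard_coe_finset]
    congr 1
    ext j
    simp
  have hMarkov := natCast_mul_measureReal_card_ge_inter_le (μ := μ) (univ.erase i)
    (fun j _ => hA j) (fun j hj => hpair j i (ne_of_mem_erase hj)) k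
  have hrest : ∑ j ∈ univ.erase i, μ.real (A j) ≤ b * k :=
    (sum_le_sum_of_subset_of_nonneg (erase_subset i univ) fun _ _ _ => measureReal_nonneg).trans
      hsum
  simp_rw [← hcount] at hMarkov
  rw [div_le_iff₀ hi]
  refine le_of_mul_le_mul_left ?_ (Nat.cast_pos.mpr hk : (0 : ℝ) < k)
  calc (k : ℝ) * μ.real ({ω | k ≤ {j | j ≠ i ∧ ω ∈ A j}.ncard} ∩ A i)
      ≤ (∑ j ∈ univ.erase i, μ.real (A j)) * μ.real (A i) := hMarkov
    _ ≤ b * k * μ.real (A i) := by gcongr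
    _ = k * (b * μ.real (A i)) := by ring

/-- For pairwise independent events `A j` with `∑ Pr[A j] ≤ b·k`,
for every `i` with `Pr[A i] > 0`,
`Pr[ #{j ≠ i : A j occurs} ≥ k | A i ] ≤ b`. -/
theorem stmt_2 {Ω : Type*} [MeasurableSpace Ω] (μ : Measure Ω) [IsProbabilityMeasure μ]
    (n k : ℕ) (hk : 0 < k) (b : ℝ) (hb0 : 0 < b) (hb1 : b ≤ 1)
    (A : Fin n → Set Ω) (hA : ∀ i, MeasurableSet (A i))
    (hpair : ∀ i j, i ≠ j → μ (A i ∩ A j) = μ (A i) * μ (A j))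
    (hsum : ∑ j, (μ (A j)).toReal ≤ b * k)
    (i : Fin n) (hi : 0 < (μ (A i)).toReal) :
    (μ ({ω | k ≤ Set.ncard {j : Fin n | j ≠ i ∧ ω ∈ A j}} ∩ A i)).toReal
      / (μ (A i)).toReal ≤ b :=
  stmt_2_general μ n k hk b A hA hpair hsum i hi
end

section
/- Let x_1, …, x_n be nonnegative real numbers with Σ_{i=1}^n x_i ≤ 1. Then there exist q_1, …, q_n ∈ [0,1] such that for every i ∈ [n], q_i · (1 − Σ_{j<i} x_j·q_j) ≥ √2 − 1. (In fact one may take q_i = f(Σ_{j<i} x_j) where f(t) = 1/√((3+2√2) − (2+2√2)t).) -/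
/-!
Take `q i = c / √(1 - 2 c sᵢ)` with `c = √2 - 1` and `sᵢ = ∑_{j<i} x j`, and put
`wᵢ = √(1 - 2 c sᵢ)`. Since `wᵢ² - wᵢ₊₁² = 2 c xᵢ`, each term `xᵢ qᵢ = (wᵢ² - wᵢ₊₁²) / (2 wᵢ)` is at
most `wᵢ - wᵢ₊₁`, so the sum telescopes to `∑_{j<i} x j q j ≤ 1 - wᵢ` and
`qᵢ (1 - ∑_{j<i} x j q j) ≥ qᵢ wᵢ = c`. The choice `c² + 2c = 1` is exactly what makes `wᵢ ≥ c`,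
i.e. `qᵢ ≤ 1`, for every `sᵢ ≤ 1`.
-/

open Finset

lemma sq_sub_sq_div_two_mul_le {w : ℝ} (hw : 0 < w) (v : ℝ) : (w ^ 2 - v ^ 2) / (2 * w) ≤ w - v := by
  rw [div_le_iff₀ (by positivity)]
  nlinarith [sq_nonneg (w - v)]

/-- The weight `f(t) = c / √(1 - 2ct)`; for `c = √2 - 1` it is `1 / √((3 + 2√2) - (2 + 2√2) t)`. -/
noncomputable def weight (c t : ℝ) : ℝ := c / √(1 - 2 * c * t)

section Weight

variable {c : ℝ}

lemma sq_le_one_sub_two_mul (hc : 0 ≤ c) (hc1 : c ^ 2 + 2 * c ≤ 1) {t : ℝ} (ht : t ≤ 1) :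
    c ^ 2 ≤ 1 - 2 * c * t := by
  nlinarith

lemma weight_mem_Icc (hc : 0 ≤ c) (hc1 : c ^ 2 + 2 * c ≤ 1) {t : ℝ} (ht : t ≤ 1) :
    weight c t ∈ Set.Icc 0 1 := by
  have hsqrt : c ≤ √(1 - 2 * c * t) :=
    Real.le_sqrt_of_sq_le (sq_le_one_sub_two_mul hc hc1 ht)
  exact ⟨div_nonneg hc (Real.sqrt_nonneg _), div_le_one_of_le₀ hsqrt (Real.sqrt_nonneg _)⟩

lemma weight_mul_sqrt {t : ℝ} (hpos : 0 < 1 - 2 * c * t) : weight c t * √(1 - 2 * c * t) = c :=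
  div_mul_cancel₀ c (Real.sqrt_pos.2 hpos).ne'

variable (X : ℕ → ℝ)

lemma sum_mul_weight_le (m : ℕ) (hpos : ∀ j ≤ m, 0 < 1 - 2 * c * ∑ k ∈ range j, X k) :
    ∑ j ∈ range m, X j * weight c (∑ k ∈ range j, X k) ≤ 1 - √(1 - 2 * c * ∑ k ∈ range m, X k) := by
  induction m with
  | zero => simp
  | succ m ih =>
    set w := √(1 - 2 * c * ∑ k ∈ range m, X k)
    set v := √(1 - 2 * c * ∑ k ∈ range (m + 1), X k)
    have hw : 0 < w := Real.sqrt_pos.2 (hpos m m.le_succ)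
    have hterm : X m * weight c (∑ k ∈ range m, X k) = (w ^ 2 - v ^ 2) / (2 * w) := by
      have hweight : weight c (∑ k ∈ range m, X k) = c / w := rfl
      rw [hweight, Real.sq_sqrt (hpos m m.le_succ).le, Real.sq_sqrt (hpos (m + 1) le_rfl).le,
        sum_range_succ]
      field_simp
      ring
    rw [sum_range_succ, hterm]
    linarith [ih fun j hj => hpos j (hj.trans m.le_succ), sq_sub_sq_div_two_mul_le hw v]

lemma le_weight_mul_one_sub_sum (hc : 0 ≤ c) (m : ℕ)
    (hpos : ∀ j ≤ m, 0 < 1 - 2 * c * ∑ k ∈ range j, X k) :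
    c ≤ weight c (∑ k ∈ range m, X k) *
      (1 - ∑ j ∈ range m, X j * weight c (∑ k ∈ range j, X k)) := by
  have hweight : 0 ≤ weight c (∑ k ∈ range m, X k) :=
    div_nonneg hc (Real.sqrt_nonneg _)
  calc c = weight c (∑ k ∈ range m, X k) * √(1 - 2 * c * ∑ k ∈ range m, X k) :=
        (weight_mul_sqrt (hpos m le_rfl)).symm
    _ ≤ _ := mul_le_mul_of_nonneg_left (by linarith [sum_mul_weight_le X m hpos]) hweight

end Weight

lemma Fin.sum_filter_lt_eq_sum_range {M : Type*} [AddCommMonoid M] {n : ℕ} (g : ℕ → M)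
    (i : Fin n) : ∑ j ∈ univ.filter (fun j => j < i), g j = ∑ k ∈ range i, g k := by
  rw [filter_gt_eq_Iio, ← Nat.Iio_eq_range, ← Fin.map_valEmbedding_Iio, sum_map]
  rfl

lemma sqrt_two_sub_one_sq_add : (√2 - 1) ^ 2 + 2 * (√2 - 1) = 1 := by
  nlinarith [Real.sq_sqrt (show (0 : ℝ) ≤ 2 by norm_num)]

/-- Given nonnegative reals `x i` summing to at most 1, there exist
`q i ∈ [0,1]` with `q i * (1 - ∑_{j<i} x j * q j) ≥ √2 - 1` for all `i`. -/
theorem stmt_3 (n : ℕ) (x : Fin n → ℝ) (hx : ∀ i, 0 ≤ x i) (hsum : ∑ i, x i ≤ 1) :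
    ∃ q : Fin n → ℝ, (∀ i, q i ∈ Set.Icc (0 : ℝ) 1) ∧
      ∀ i : Fin n,
        Real.sqrt 2 - 1 ≤
          q i * (1 - ∑ j ∈ Finset.univ.filter (fun j => j < i), x j * q j) := by
  set c := √2 - 1
  have hc : 0 < c := by simp [c, Real.lt_sqrt]
  set X : ℕ → ℝ := fun k => if h : k < n then x ⟨k, h⟩ else 0
  have hX : ∀ j : Fin n, X j = x j := fun j => by simp [X]
  have hpartial : ∀ m ≤ n, ∑ k ∈ range m, X k ≤ 1 := fun m hm =>
    calc ∑ k ∈ range m, X k ≤ ∑ k ∈ range n, X k :=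
          sum_le_sum_of_subset_of_nonneg (range_subset_range.2 hm) fun k _ _ => by
            by_cases h : k < n <;> simp [X, h, hx]
      _ = ∑ i, x i := by rw [← Fin.sum_univ_eq_sum_range]; simp [hX]
      _ ≤ 1 := hsum
  have hpos : ∀ m ≤ n, 0 < 1 - 2 * c * ∑ k ∈ range m, X k := fun m hm =>
    (pow_pos hc 2).trans_le (sq_le_one_sub_two_mul hc.le sqrt_two_sub_one_sq_add.le (hpartial m hm))
  refine ⟨fun i => weight c (∑ k ∈ range i, X k), fun i =>
    weight_mem_Icc hc.le sqrt_two_sub_one_sq_add.le (hpartial i i.is_le'), fun i => ?_⟩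
  simp_rw [← hX]
  rw [Fin.sum_filter_lt_eq_sum_range (fun j => X j * weight c (∑ k ∈ range j, X k))]
  exact le_weight_mul_one_sub_sum X hc.le i fun j hj => hpos j (hj.trans i.is_le')
end

section
/- For every integer n ≥ 2 and every q_1, …, q_n ∈ [0,1], the minimum over i ∈ [n] of the quantity q_i · (1 − (1/n)·Σ_{j<i} q_j) is at most (√2 − 1) + 1/n. -/
set_option maxHeartbeats 1600000


/-- For `n ≥ 2` and `q i ∈ [0,1]`, some index `i` has
`q i * (1 - (1/n) ∑_{j<i} q j) ≤ (√2 - 1) + 1/n`. -/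
theorem stmt_4 (n : ℕ) (hn : 2 ≤ n) (q : Fin n → ℝ) (hq : ∀ i, q i ∈ Set.Icc (0 : ℝ) 1) :
    ∃ i : Fin n,
      q i * (1 - (1 / (n : ℝ)) * ∑ j ∈ Finset.univ.filter (fun j => j < i), q j)
        ≤ (Real.sqrt 2 - 1) + 1 / (n : ℝ) := by
  by_contra hcon
  push_neg at hcon
  set s : ℝ := Real.sqrt 2 with hs
  have hs2 : s ^ 2 = 2 := Real.sq_sqrt (by norm_num)
  have hs0 : 0 ≤ s := Real.sqrt_nonneg 2
  have hs1 : 1 < s := by nlinarith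
  have hnR : (2 : ℝ) ≤ (n : ℝ) := by exact_mod_cast hn
  have hn0 : (0 : ℝ) < (n : ℝ) := by linarith
  set c : ℝ := s - 1 + 1 / (n : ℝ) with hc
  have hc0 : 0 < c := by
    have : 0 < 1 / (n : ℝ) := by positivity
    simp only [hc]; linarith
  set T : ℕ → ℝ := fun k => ∑ j ∈ Finset.univ.filter (fun j : Fin n => (j : ℕ) < k), q j
    with hT
  have hcon' : ∀ k (hk : k < n), c < q ⟨k, hk⟩ * (1 - (1 / (n : ℝ)) * T k) := by
    intro k hk
    have := hcon ⟨k, hk⟩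
    have hfe : (Finset.univ.filter (fun j : Fin n => j < (⟨k, hk⟩ : Fin n)))
        = Finset.univ.filter (fun j : Fin n => (j : ℕ) < k) := by
      apply Finset.filter_congr
      intro j _
      simp [Fin.lt_def]
    rw [hfe] at this
    exact this
  have hTsucc : ∀ k (hk : k < n), T (k + 1) = T k + q ⟨k, hk⟩ := by
    intro k hk
    have hset : (Finset.univ.filter (fun j : Fin n => (j : ℕ) < k + 1))
        = insert (⟨k, hk⟩ : Fin n) (Finset.univ.filter (fun j : Fin n => (j : ℕ) < k)) := by
      ext j
      simp only [Finset.mem_filter, Finset.mem_univ, true_and, Finset.mem_insert, Fin.ext_iff]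
      omega
    simp only [hT, hset]
    rw [Finset.sum_insert (by simp)]
    ring
  have key : ∀ k, k < n →
      (1 - (1 / (n : ℝ)) * T k) ^ 2 ≤ 1 - (k : ℝ) * (2 * c / (n : ℝ) - 1 / (n : ℝ) ^ 2) := by
    intro k
    induction k with
    | zero =>
      intro _
      have : T 0 = 0 := by simp [hT]
      rw [this]
      norm_num
    | succ k ih =>
      intro hk
      have hk' : k < n := Nat.lt_of_succ_lt hk
      have hb := ih hk'
      have hq' := hq ⟨k, hk'⟩
      obtain ⟨hq0, hq1⟩ := hq'
      set qk := q ⟨k, hk'⟩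
      set a := 1 - (1 / (n : ℝ)) * T k with ha
      have hca : c < qk * a := hcon' k hk'
      have ha0 : 0 < a := by nlinarith
      have haq : c < a := by nlinarith
      have hTs : T (k + 1) = T k + qk := hTsucc k hk'
      have hexp : 1 - (1 / (n : ℝ)) * T (k + 1) = a - qk / (n : ℝ) := by
        rw [hTs, ha]; field_simp; ring
      rw [hexp]
      have hstep : (a - qk / (n : ℝ)) ^ 2 ≤ a ^ 2 - 2 * c / (n : ℝ) + 1 / (n : ℝ) ^ 2 := by
        have h1 : (a - qk / (n : ℝ)) ^ 2 = a ^ 2 - 2 * (qk * a) / (n : ℝ) + qk ^ 2 / (n : ℝ) ^ 2 := by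
          field_simp; ring
        have h2 : qk ^ 2 ≤ 1 := by nlinarith
        have h3 : 2 * c / (n : ℝ) ≤ 2 * (qk * a) / (n : ℝ) := by
          gcongr
        have h4 : qk ^ 2 / (n : ℝ) ^ 2 ≤ 1 / (n : ℝ) ^ 2 := by
          gcongr
        linarith [h1.le, h1.ge]
      push_cast
      nlinarith [hstep, hb]
  -- apply at k = n - 1
  have hlast : n - 1 < n := by omega
  have hkey := key (n - 1) hlast
  have hcl := hcon' (n - 1) hlast
  obtain ⟨hq0, hq1⟩ := hq ⟨n - 1, hlast⟩
  set a := 1 - (1 / (n : ℝ)) * T (n - 1) with ha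
  have ha0 : 0 < a := by
    by_contra h
    push_neg at h
    have h2 : q ⟨n - 1, hlast⟩ * a ≤ 0 := mul_nonpos_of_nonneg_of_nonpos hq0 h
    linarith
  have haq : c < a := hcl.trans_le (mul_le_of_le_one_left ha0.le hq1)
  have hcast : ((n - 1 : ℕ) : ℝ) = (n : ℝ) - 1 := by
    have : 1 ≤ n := by omega
    push_cast [this]
    ring
  rw [hcast] at hkey
  clear_value a T
  have hca2 : c ^ 2 < a ^ 2 := by
    have := pow_lt_pow_left₀ haq hc0.le (two_ne_zero)
    simpa using this
  have hfin : c ^ 2 < 1 - ((n : ℝ) - 1) * (2 * c / (n : ℝ) - 1 / (n : ℝ) ^ 2) :=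
    hca2.trans_le hkey
  have hid : 1 - ((n : ℝ) - 1) * (2 * c / (n : ℝ) - 1 / (n : ℝ) ^ 2) = c ^ 2 - 1 / (n : ℝ) := by
    rw [hc]
    have hne : (n : ℝ) ≠ 0 := hn0.ne'
    field_simp
    ring_nf
    have h7 : ((n : ℝ)) ^ 2 * s ^ 2 = ((n : ℝ)) ^ 2 * 2 := by rw [hs2]
    linarith [h7]
  rw [hid] at hfin
  have : 0 < 1 / (n : ℝ) := by positivity
  linarith
end

section
/- Let r = (√5 − 1)/2 and t = (1 + r²)/2. Then for all q ∈ [0,1] and s ∈ [0,1], q·t + (1−q)·(r + (1−r)·s − s²/2) ≤ (2√5 − 4)·(r²/4 + r + 3/4), and moreover (2√5 − 4)·(r²/4 + r + 3/4) = (5 − √5)/4 = t. -/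
/-! The quadratic `s ↦ r + (1 - r) s - s²/2` peaks at `s = 1 - r` with value `(1 + r²)/2 = t`,
so every mixture `q t + (1 - q)(…)` with `q ≤ 1` is at most `t`. The remaining identities only
use `√5² = 5`. -/

theorem add_mul_sub_sq_div_two_le (a s : ℝ) : a + (1 - a) * s - s ^ 2 / 2 ≤ (1 + a ^ 2) / 2 := by
  nlinarith [sq_nonneg (s - (1 - a))]

theorem mul_add_one_sub_mul_le {x t : ℝ} (q : ℝ) (hq : q ≤ 1) (hx : x ≤ t) :
    q * t + (1 - q) * x ≤ t :=
  calc q * t + (1 - q) * x ≤ q * t + (1 - q) * t := by gcongr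
    _ = t := by ring

theorem one_add_sq_golden_div_two :
    (1 + ((Real.sqrt 5 - 1) / 2) ^ 2) / 2 = (5 - Real.sqrt 5) / 4 := by
  linear_combination (1 / 8 : ℝ) * Real.sq_sqrt (show (0 : ℝ) ≤ 5 by norm_num)

theorem two_sqrt_five_sub_four_mul_golden :
    (2 * Real.sqrt 5 - 4) * (((Real.sqrt 5 - 1) / 2) ^ 2 / 4 + (Real.sqrt 5 - 1) / 2 + 3 / 4)
      = (5 - Real.sqrt 5) / 4 := by
  linear_combination ((2 * Real.sqrt 5 + 8) / 16) * Real.sq_sqrt (show (0 : ℝ) ≤ 5 by norm_num)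

/-- With `r = (√5 - 1)/2` and `t = (1 + r²)/2`, for all `q, s ∈ [0,1]`,
`q·t + (1-q)·(r + (1-r)·s - s²/2) ≤ (2√5 - 4)·(r²/4 + r + 3/4)`, and moreover
`(2√5 - 4)·(r²/4 + r + 3/4) = (5 - √5)/4 = t`. -/
theorem stmt_5 (r t : ℝ) (hr : r = (Real.sqrt 5 - 1) / 2) (ht : t = (1 + r ^ 2) / 2) :
    (∀ q ∈ Set.Icc (0 : ℝ) 1, ∀ s ∈ Set.Icc (0 : ℝ) 1,
      q * t + (1 - q) * (r + (1 - r) * s - s ^ 2 / 2)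
        ≤ (2 * Real.sqrt 5 - 4) * (r ^ 2 / 4 + r + 3 / 4)) ∧
    (2 * Real.sqrt 5 - 4) * (r ^ 2 / 4 + r + 3 / 4) = (5 - Real.sqrt 5) / 4 ∧
    (5 - Real.sqrt 5) / 4 = t := by
  have hvalue : (2 * Real.sqrt 5 - 4) * (r ^ 2 / 4 + r + 3 / 4) = (5 - Real.sqrt 5) / 4 := by
    rw [hr, two_sqrt_five_sub_four_mul_golden]
  have ht' : (5 - Real.sqrt 5) / 4 = t := by rw [ht, hr, one_add_sq_golden_div_two]
  refine ⟨fun q hq s _ => ?_, hvalue, ht'⟩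
  rw [hvalue, ht']
  exact mul_add_one_sub_mul_le q hq.2 (ht ▸ add_mul_sub_sq_div_two_le r s)
end

section
/- Let n be a positive integer, c ∈ [0,1] a real number, and t a positive even integer. Consider f_t(x) = Σ_{k=1}^t (−1)^{k−1} · e_k(x_1,…,x_n), where e_k is the k-th elementary symmetric polynomial. Then over all x ∈ ℝ^n with x ≥ 0 and Σ_{i=1}^n x_i = c, the minimum of f_t(x) equals Σ_{k=1}^t (−1)^{k−1} · binom(n,k) · c^k / n^k, and is attained only at the point x_1 = ⋯ = x_n = c/n. -/
open Finset

variable {ι : Type*} [DecidableEq ι]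

noncomputable def esum (s : Finset ι) (k : ℕ) (x : ι → ℝ) : ℝ :=
  ∑ S ∈ s.powersetCard k, ∏ i ∈ S, x i

lemma esum_zero (s : Finset ι) (x : ι → ℝ) : esum s 0 x = 1 := by
  simp [esum]

lemma esum_insert {a : ι} {s : Finset ι} (h : a ∉ s) (k : ℕ) (x : ι → ℝ) :
    esum (insert a s) (k+1) x = esum s (k+1) x + x a * esum s k x := by
  unfold esum
  rw [Finset.powersetCard_succ_insert h, Finset.sum_union, Finset.sum_image]
  · congr 1
    rw [Finset.mul_sum]
    refine Finset.sum_congr rfl fun S hS => ?_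
    have haS : a ∉ S := fun hc => h ((Finset.mem_powersetCard.mp hS).1 hc)
    rw [Finset.prod_insert haS]
  · intro S hS T hT hST
    have haS : a ∉ S := fun hc => h ((Finset.mem_powersetCard.mp hS).1 hc)
    have haT : a ∉ T := fun hc => h ((Finset.mem_powersetCard.mp hT).1 hc)
    have := congrArg (fun U => Finset.erase U a) hST
    simpa [Finset.erase_insert haS, Finset.erase_insert haT] using this
  · rw [Finset.disjoint_left]
    intro S hS hS'
    have haS : a ∉ S := fun hc => h ((Finset.mem_powersetCard.mp hS).1 hc)
    obtain ⟨T, hT, rfl⟩ := Finset.mem_image.mp hS'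
    exact haS (Finset.mem_insert_self a T)

noncomputable def altP (s : Finset ι) (m : ℕ) (x : ι → ℝ) : ℝ :=
  ∑ j ∈ Finset.range (m+1), (-1 : ℝ)^j * esum s j x

lemma altP_zero (s : Finset ι) (x : ι → ℝ) : altP s 0 x = 1 := by
  simp [altP, esum_zero]

lemma altP_empty (m : ℕ) (x : ι → ℝ) : altP (∅ : Finset ι) m x = 1 := by
  unfold altP
  rw [Finset.sum_range_succ']
  have : ∀ j ∈ Finset.range m, (-1:ℝ)^(j+1) * esum (∅ : Finset ι) (j+1) x = 0 := by
    intro j _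
    unfold esum
    rw [Finset.powersetCard_eq_empty.mpr (by simp), Finset.sum_empty, mul_zero]
  rw [Finset.sum_congr rfl this]
  simp [esum_zero]

lemma altP_insert {a : ι} {s : Finset ι} (h : a ∉ s) (r : ℕ) (x : ι → ℝ) :
    altP (insert a s) (r+1) x = altP s (r+1) x - x a * altP s r x := by
  unfold altP
  rw [Finset.sum_range_succ' _ (r+1), Finset.sum_range_succ' (fun j => (-1:ℝ)^j * esum s j x) (r+1)]
  simp only [esum_zero, pow_zero, one_mul]
  rw [Finset.mul_sum]
  have : ∀ j ∈ Finset.range (r+1),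
      (-1:ℝ)^(j+1) * esum (insert a s) (j+1) x
        = (-1:ℝ)^(j+1) * esum s (j+1) x - x a * ((-1:ℝ)^j * esum s j x) := by
    intro j _
    rw [esum_insert h]
    ring
  rw [Finset.sum_congr rfl this, Finset.sum_sub_distrib]
  ring
lemma bonferroni (x : ι → ℝ) :
    ∀ (s : Finset ι), (∀ i ∈ s, 0 ≤ x i ∧ x i ≤ 1) →
    ∀ m : ℕ, (Even m → ∏ i ∈ s, (1 - x i) ≤ altP s m x) ∧
             (Odd m → altP s m x ≤ ∏ i ∈ s, (1 - x i)) := by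
  intro s
  induction s using Finset.induction_on with
  | empty =>
    intro _ m
    simp [altP_empty]
  | @insert a s ha ih =>
    intro hb m
    have hs : ∀ i ∈ s, 0 ≤ x i ∧ x i ≤ 1 := fun i hi => hb i (Finset.mem_insert_of_mem hi)
    have ha0 : 0 ≤ x a := (hb a (Finset.mem_insert_self a s)).1
    have ha1 : x a ≤ 1 := (hb a (Finset.mem_insert_self a s)).2
    have hprod0 : (0:ℝ) ≤ ∏ i ∈ s, (1 - x i) :=
      Finset.prod_nonneg fun i hi => by linarith [(hs i hi).1, (hs i hi).2]
    rw [Finset.prod_insert ha]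
    match m with
    | 0 =>
      refine ⟨fun _ => ?_, fun h => (by simp at h : False).elim⟩
      rw [altP_zero]
      have h1 : ∏ i ∈ s, (1 - x i) ≤ 1 :=
        Finset.prod_le_one (fun i hi => by linarith [(hs i hi).2]) (fun i hi => by linarith [(hs i hi).1])
      nlinarith
    | r + 1 =>
      rw [altP_insert ha]
      constructor
      · intro hev
        have hr : Odd r := by
          rcases Nat.even_or_odd r with h | h
          · exact absurd hev (by simp [Nat.even_add_one, h])
          · exact h
        have h1 := (ih hs (r+1)).1 hev
        have h2 := (ih hs r).2 hr
        nlinarith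
      · intro hod
        have hr : Even r := by
          rcases Nat.even_or_odd r with h | h
          · exact h
          · exact absurd hod (by simp [Nat.odd_add_one, h])
        have h1 := (ih hs (r+1)).2 hod
        have h2 := (ih hs r).1 hr
        nlinarith

lemma altP_pos (x : ι → ℝ) (s : Finset ι) (h0 : ∀ i ∈ s, 0 ≤ x i)
    (hsum : ∑ i ∈ s, x i < 1) (m : ℕ) (hm : Even m) : 0 < altP s m x := by
  have h1 : ∀ i ∈ s, x i < 1 := fun i hi =>
    lt_of_le_of_lt (Finset.single_le_sum h0 hi) hsum
  have hb := (bonferroni x s (fun i hi => ⟨h0 i hi, (h1 i hi).le⟩) m).1 hm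
  refine lt_of_lt_of_le (Finset.prod_pos fun i hi => ?_) hb
  linarith [h1 i hi]
lemma esum_congr (s : Finset ι) (k : ℕ) {x y : ι → ℝ} (h : ∀ i ∈ s, x i = y i) :
    esum s k x = esum s k y := by
  unfold esum
  refine Finset.sum_congr rfl fun S hS => Finset.prod_congr rfl fun i hi => ?_
  exact h i ((Finset.mem_powersetCard.mp hS).1 hi)

lemma altP_congr (s : Finset ι) (m : ℕ) {x y : ι → ℝ} (h : ∀ i ∈ s, x i = y i) :
    altP s m x = altP s m y := by
  unfold altP
  exact Finset.sum_congr rfl fun j _ => by rw [esum_congr s j h]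

lemma esum_const (n k : ℕ) (v : ℝ) :
    esum (univ : Finset (Fin n)) k (fun _ => v) = (n.choose k : ℝ) * v ^ k := by
  unfold esum
  have : ∀ S ∈ Finset.powersetCard k (univ : Finset (Fin n)), ∏ _i ∈ S, v = v ^ k := by
    intro S hS
    rw [Finset.prod_const, (Finset.mem_powersetCard.mp hS).2]
  rw [Finset.sum_congr rfl this, Finset.sum_const, Finset.card_powersetCard,
    Finset.card_univ, Fintype.card_fin, nsmul_eq_mul]

lemma F_eq (n t : ℕ) (x : Fin n → ℝ) :
    ∑ k ∈ Finset.Icc 1 t, (-1:ℝ)^(k-1) *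
        ∑ S ∈ Finset.powersetCard k (Finset.univ : Finset (Fin n)), ∏ i ∈ S, x i
      = 1 - altP Finset.univ t x := by
  have hE : ∀ k, (∑ S ∈ Finset.powersetCard k (Finset.univ : Finset (Fin n)), ∏ i ∈ S, x i)
      = esum Finset.univ k x := fun k => rfl
  unfold altP
  rw [Finset.sum_range_succ']
  simp only [esum_zero, pow_zero, one_mul]
  rw [← Finset.Ico_add_one_right_eq_Icc, Finset.sum_Ico_eq_sum_range]
  simp only [Nat.succ_sub_one, Nat.add_sub_cancel, hE]
  have : ∀ j ∈ Finset.range t,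
      (-1:ℝ)^(1+j-1) * esum Finset.univ (1+j) x = -((-1:ℝ)^(j+1) * esum Finset.univ (j+1) x) := by
    intro j _
    have : 1 + j - 1 = j := by omega
    rw [this, add_comm 1 j, pow_succ]
    ring
  rw [Finset.sum_congr rfl this, Finset.sum_neg_distrib]
  ring
lemma maximizer_uniform {n : ℕ} {c : ℝ} (hc1 : c ≤ 1) {t : ℕ} (ht : Even t) (ht0 : 0 < t)
    {x : Fin n → ℝ} (hx0 : ∀ i, 0 ≤ x i) (hxs : ∑ i, x i = c)
    (hmax : ∀ y : Fin n → ℝ, (∀ i, 0 ≤ y i) → ∑ i, y i = c →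
      altP Finset.univ t y ≤ altP Finset.univ t x) :
    ∀ i j, x i = x j := by
  by_contra hcon
  push_neg at hcon
  obtain ⟨i, j, hij⟩ := hcon
  have hne : i ≠ j := fun h => hij (by rw [h])
  set m : ℝ := (x i + x j)/2 with hm
  set y : Fin n → ℝ := Function.update (Function.update x i m) j m with hy
  have hyi : y i = m := by rw [hy, Function.update_of_ne hne, Function.update_self]
  have hyj : y j = m := by rw [hy, Function.update_self]
  have hyo : ∀ l, l ≠ i → l ≠ j → y l = x l := by
    intro l hli hlj
    rw [hy, Function.update_of_ne hlj, Function.update_of_ne hli]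
  set s : Finset (Fin n) := (Finset.univ.erase i).erase j with hs
  have hjmem : j ∈ Finset.univ.erase i :=
    Finset.mem_erase.mpr ⟨Ne.symm hne, Finset.mem_univ j⟩
  have h1 : insert j s = Finset.univ.erase i := Finset.insert_erase hjmem
  have hinotin : i ∉ insert j s := by rw [h1]; exact Finset.notMem_erase i _
  have hjnotin : j ∉ s := Finset.notMem_erase j _
  have h2 : insert i (insert j s) = Finset.univ := by
    rw [h1, Finset.insert_erase (Finset.mem_univ i)]
  have hmem_s : ∀ l ∈ s, l ≠ i ∧ l ≠ j := by
    intro l hl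
    have h' := Finset.mem_erase.mp hl
    exact ⟨(Finset.mem_erase.mp h'.2).1, h'.1⟩
  obtain ⟨r, hr, hrE⟩ : ∃ r, t = r + 2 ∧ Even r := by
    obtain ⟨w, hw⟩ := ht
    exact ⟨t - 2, by omega, ⟨w - 1, by omega⟩⟩
  have decomp : ∀ z : Fin n → ℝ, altP Finset.univ t z
      = altP s (r+2) z - (z i + z j) * altP s (r+1) z + (z i * z j) * altP s r z := by
    intro z
    rw [hr, ← h2, altP_insert hinotin (r+1), altP_insert hjnotin (r+1), altP_insert hjnotin r]
    ring
  have hcong : ∀ q, altP s q y = altP s q x := fun q =>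
    altP_congr s q (fun l hl => hyo l (hmem_s l hl).1 (hmem_s l hl).2)
  have ex : x i + (x j + ∑ l ∈ s, x l) = c := by
    rw [← Finset.sum_insert hjnotin, ← Finset.sum_insert hinotin, h2]
    exact hxs
  have hxij : 0 < x i + x j := by
    rcases lt_or_eq_of_le (add_nonneg (hx0 i) (hx0 j)) with h | h
    · exact h
    · exfalso
      apply hij
      have hi0 : x i = 0 := by linarith [hx0 i, hx0 j]
      have hj0 : x j = 0 := by linarith [hx0 i, hx0 j]
      rw [hi0, hj0]
  have hslt : ∑ l ∈ s, x l < 1 := by linarith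
  have hpos : 0 < altP s r x := altP_pos x s (fun l _ => hx0 l) hslt r hrE
  have hy0 : ∀ l, 0 ≤ y l := by
    intro l
    rcases eq_or_ne l i with h | hli
    · rw [h, hyi]; linarith
    rcases eq_or_ne l j with h | hlj
    · rw [h, hyj]; linarith
    · rw [hyo l hli hlj]; exact hx0 l
  have hsum_y : ∑ l, y l = c := by
    have hsy : ∑ l ∈ Finset.univ, y l = y i + (y j + ∑ l ∈ s, y l) := by
      rw [← Finset.sum_insert hjnotin, ← Finset.sum_insert hinotin, h2]
    have hys : ∑ l ∈ s, y l = ∑ l ∈ s, x l :=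
      Finset.sum_congr rfl (fun l hl => hyo l (hmem_s l hl).1 (hmem_s l hl).2)
    rw [hsy, hyi, hyj, hys]
    rw [hm]
    linarith
  have h5 : 0 < (x i - x j)^2 :=
    lt_of_le_of_ne (sq_nonneg _) (Ne.symm (pow_ne_zero 2 (sub_ne_zero.mpr hij)))
  have h4 : x i * x j < m * m := by rw [hm]; nlinarith
  have hgt : altP Finset.univ t x < altP Finset.univ t y := by
    rw [decomp x, decomp y, hyi, hyj, hcong (r+2), hcong (r+1), hcong r]
    have hmm : m + m = x i + x j := by rw [hm]; ring
    rw [hmm]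
    have hprod : 0 < (m * m - x i * x j) * altP s r x :=
      mul_pos (by linarith) hpos
    nlinarith [hprod]
  exact absurd (hmax y hy0 hsum_y) (not_le.mpr hgt)
/-- Over the simplex `{x ≥ 0 : ∑ x i = c}` (with `c ∈ [0,1]`, `t` a positive
even integer), the minimum of `f_t(x) = ∑_{k=1}^t (-1)^{k-1} e_k(x)` equals
`∑_{k=1}^t (-1)^{k-1} binom(n,k) c^k / n^k`, attained only at `x = (c/n, …, c/n)`. -/
theorem stmt_7 (n : ℕ) (hn : 0 < n) (c : ℝ) (hc0 : 0 ≤ c) (hc1 : c ≤ 1)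
    (t : ℕ) (ht : Even t) (ht0 : 0 < t) :
    IsLeast
      ((fun x : Fin n → ℝ =>
        ∑ k ∈ Finset.Icc 1 t, (-1 : ℝ) ^ (k - 1) *
          ∑ S ∈ Finset.powersetCard k (Finset.univ : Finset (Fin n)), ∏ i ∈ S, x i) ''
        {x | (∀ i, 0 ≤ x i) ∧ ∑ i, x i = c})
      (∑ k ∈ Finset.Icc 1 t,
        (-1 : ℝ) ^ (k - 1) * (n.choose k : ℝ) * c ^ k / (n : ℝ) ^ k) ∧
    ∀ x : Fin n → ℝ, (∀ i, 0 ≤ x i) → ∑ i, x i = c →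
      (∑ k ∈ Finset.Icc 1 t, (-1 : ℝ) ^ (k - 1) *
          ∑ S ∈ Finset.powersetCard k (Finset.univ : Finset (Fin n)), ∏ i ∈ S, x i) =
        (∑ k ∈ Finset.Icc 1 t,
          (-1 : ℝ) ^ (k - 1) * (n.choose k : ℝ) * c ^ k / (n : ℝ) ^ k) →
      x = fun _ => c / n := by
  classical
  have hnR : (0:ℝ) < n := by exact_mod_cast hn
  set F : (Fin n → ℝ) → ℝ := fun x =>
    ∑ k ∈ Finset.Icc 1 t, (-1 : ℝ) ^ (k - 1) *
      ∑ S ∈ Finset.powersetCard k (Finset.univ : Finset (Fin n)), ∏ i ∈ S, x i with hF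
  set M : ℝ := ∑ k ∈ Finset.Icc 1 t,
      (-1 : ℝ) ^ (k - 1) * (n.choose k : ℝ) * c ^ k / (n : ℝ) ^ k with hMdef
  set K : Set (Fin n → ℝ) := {x | (∀ i, 0 ≤ x i) ∧ ∑ i, x i = c} with hK
  set u : Fin n → ℝ := fun _ => c / n with hu
  have hu0 : ∀ i, 0 ≤ u i := fun i => div_nonneg hc0 hnR.le
  have husum : ∑ i, u i = c := by
    rw [hu]
    rw [Finset.sum_const, Finset.card_univ, Fintype.card_fin, nsmul_eq_mul]
    field_simp
  have huK : u ∈ K := ⟨hu0, husum⟩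
  -- value at the uniform point
  have hM : M = F u := by
    rw [hMdef, hF]
    refine Finset.sum_congr rfl fun k _ => ?_
    have : (∑ S ∈ Finset.powersetCard k (Finset.univ : Finset (Fin n)), ∏ i ∈ S, u i)
        = (n.choose k : ℝ) * (c / n) ^ k := esum_const n k (c / n)
    rw [this, div_pow]
    field_simp
  -- F in terms of altP
  have hFalt : ∀ x : Fin n → ℝ, F x = 1 - altP Finset.univ t x := fun x => F_eq n t x
  -- compactness of K
  have hKsub : K ⊆ Set.Icc (fun _ => (0:ℝ)) (fun _ => c) := by
    intro x hx
    refine ⟨fun i => hx.1 i, fun i => ?_⟩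
    calc x i ≤ ∑ l, x l := Finset.single_le_sum (fun l _ => hx.1 l) (Finset.mem_univ i)
    _ = c := hx.2
  have hsumcont : Continuous fun x : Fin n → ℝ => ∑ i, x i :=
    continuous_finset_sum _ fun i _ => continuous_apply i
  have hKclosed : IsClosed K := by
    have : K = (⋂ l, {x : Fin n → ℝ | 0 ≤ x l}) ∩ {x | ∑ i, x i = c} := by
      ext x
      simp [hK, Set.mem_iInter]
    rw [this]
    exact IsClosed.inter
      (isClosed_iInter fun l => isClosed_le continuous_const (continuous_apply l))
      (isClosed_eq hsumcont continuous_const)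
  have hKcomp : IsCompact K :=
    IsCompact.of_isClosed_subset isCompact_Icc hKclosed hKsub
  have hFcont : Continuous F := by
    rw [hF]
    exact continuous_finset_sum _ fun k _ =>
      continuous_const.mul (continuous_finset_sum _ fun S _ =>
        continuous_finset_prod _ fun i _ => continuous_apply i)
  obtain ⟨x₀, hx₀K, hmin⟩ := hKcomp.exists_isMinOn ⟨u, huK⟩ hFcont.continuousOn
  -- any minimizer is the uniform point
  have huniq : ∀ x, x ∈ K → (∀ y ∈ K, F x ≤ F y) → x = u := by
    intro x hx hxmin
    have hmax : ∀ y : Fin n → ℝ, (∀ i, 0 ≤ y i) → ∑ i, y i = c →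
        altP Finset.univ t y ≤ altP Finset.univ t x := by
      intro y hy0 hys
      have h := hxmin y ⟨hy0, hys⟩
      rw [hFalt x, hFalt y] at h
      linarith
    have hall := maximizer_uniform hc1 ht ht0 hx.1 hx.2 hmax
    funext l
    have hsl : ∑ i, x i = (n : ℝ) * x l := by
      rw [Finset.sum_congr rfl fun i _ => hall i l, Finset.sum_const,
        Finset.card_univ, Fintype.card_fin, nsmul_eq_mul]
    have : c = (n : ℝ) * x l := by rw [← hx.2, hsl]
    rw [hu]
    field_simp
    linarith
  have hx₀u : x₀ = u := huniq x₀ hx₀K (fun y hy => isMinOn_iff.mp hmin y hy)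
  have hlb : ∀ y ∈ K, M ≤ F y := by
    intro y hy
    have := isMinOn_iff.mp hmin y hy
    rw [hx₀u, ← hM] at this
    exact this
  refine ⟨⟨⟨u, huK, hM.symm⟩, ?_⟩, ?_⟩
  · rintro v ⟨y, hy, rfl⟩
    exact hlb y hy
  · intro x h0 hs hFx
    refine huniq x ⟨h0, hs⟩ ?_
    intro y hy
    have : F x = M := hFx
    rw [this]
    exact hlb y hy
end

section
/- For every real number c ∈ [0,1], every positive even integer t, and every integer n ≥ t, we have Σ_{k=1}^t (−1)^{k−1} · (c^k / n^k) · binom(n,k) ≥ Σ_{k=1}^t (−1)^{k−1} · c^k / k!. -/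
lemma aux1 (n j : ℕ) : n.descFactorial (j+2) ≤ (n-1) * n^(j+1) := by
  induction j with
  | zero =>
    simp [Nat.descFactorial_succ, Nat.descFactorial]
  | succ m ih =>
    rw [Nat.descFactorial_succ]
    calc (n - (m+2)) * n.descFactorial (m+2) ≤ n * ((n-1) * n^(m+1)) :=
          Nat.mul_le_mul (Nat.sub_le _ _) ih
      _ = (n-1) * n^(m+2) := by ring

lemma aux2 (n k : ℕ) (hk : 2 ≤ k) : (n+1) * n.descFactorial k ≤ n^(k+1) := by
  obtain ⟨j, rfl⟩ : ∃ j, k = j + 2 := ⟨k - 2, by omega⟩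
  calc (n+1) * n.descFactorial (j+2) ≤ (n+1) * ((n-1) * n^(j+1)) :=
        Nat.mul_le_mul_left _ (aux1 n j)
    _ = ((n+1) * (n-1)) * n^(j+1) := by ring
    _ ≤ (n * n) * n^(j+1) := by
        apply Nat.mul_le_mul_right
        cases n with
        | zero => simp
        | succ m => simp [Nat.succ_sub_one]; nlinarith
    _ = n^(j+2+1) := by ring

lemma key (n k : ℕ) (hk : 2 ≤ k) :
    (k+1) * (n * n.descFactorial k) ≤ k * n^(k+1) + n.descFactorial (k+1) := by
  rcases le_or_gt k n with h | h
  · rw [Nat.descFactorial_succ]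
    have h1 : (k+1) * (n * n.descFactorial k)
        = (n-k) * n.descFactorial k + k * ((n+1) * n.descFactorial k) := by
      have : (k+1) * n = (n-k) + k*(n+1) := by zify [h]; ring
      calc (k+1) * (n * n.descFactorial k) = ((k+1)*n) * n.descFactorial k := by ring
        _ = ((n-k) + k*(n+1)) * n.descFactorial k := by rw [this]
        _ = _ := by ring
    rw [h1]
    have := Nat.mul_le_mul_left k (aux2 n k hk)
    omega
  · rw [Nat.descFactorial_eq_zero_iff_lt.2 h]
    simp

lemma e_form (c : ℝ) (n k : ℕ) (hn : 0 < n) :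
    c^k/(k.factorial:ℝ) - c^k * (n.choose k)/ (n:ℝ)^k
      = c^k * ((n:ℝ)^k - (n.descFactorial k : ℝ)) / ((k.factorial:ℝ) * (n:ℝ)^k) := by
  have hd : (n.descFactorial k : ℝ) = (k.factorial:ℝ) * (n.choose k:ℝ) := by
    exact_mod_cast Nat.descFactorial_eq_factorial_mul_choose n k
  have h1 : ((k.factorial:ℝ)) ≠ 0 := by positivity
  have h2 : ((n:ℝ)^k) ≠ 0 := by positivity
  rw [hd]; field_simp

lemma e_nonneg (c : ℝ) (hc0 : 0 ≤ c) (n k : ℕ) (hn : 0 < n) :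
    0 ≤ c^k/(k.factorial:ℝ) - c^k * (n.choose k)/ (n:ℝ)^k := by
  rw [e_form c n k hn]
  have hA : ((n.descFactorial k : ℝ)) ≤ (n:ℝ)^k := by
    exact_mod_cast Nat.descFactorial_le_pow n k
  have : (0:ℝ) < (k.factorial:ℝ) * (n:ℝ)^k := by positivity
  apply div_nonneg (mul_nonneg (by positivity) (by linarith)) this.le

lemma e_decr (c : ℝ) (hc0 : 0 ≤ c) (hc1 : c ≤ 1) (n k : ℕ) (hn : 0 < n) (hk : 2 ≤ k) :
    c^(k+1)/((k+1).factorial:ℝ) - c^(k+1) * (n.choose (k+1))/ (n:ℝ)^(k+1)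
      ≤ c^k/(k.factorial:ℝ) - c^k * (n.choose k)/ (n:ℝ)^k := by
  rw [e_form c n k hn, e_form c n (k+1) hn]
  have hNpos : (0:ℝ) < (n:ℝ) := by exact_mod_cast hn
  have hApow : ((n.descFactorial k : ℝ)) ≤ (n:ℝ)^k := by exact_mod_cast Nat.descFactorial_le_pow n k
  have hBpow : ((n.descFactorial (k+1) : ℝ)) ≤ (n:ℝ)^(k+1) := by
    exact_mod_cast Nat.descFactorial_le_pow n (k+1)
  have hkey : ((k:ℝ)+1)*((n:ℝ)*(n.descFactorial k : ℝ)) ≤ (k:ℝ)*(n:ℝ)^(k+1) + (n.descFactorial (k+1) : ℝ) := by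
    have := key n k hk
    exact_mod_cast this
  set N : ℝ := (n:ℝ) with hN
  set A : ℝ := (n.descFactorial k : ℝ) with hA
  set B : ℝ := (n.descFactorial (k+1) : ℝ) with hB
  have hpow : N^(k+1) = N * N^k := by rw [pow_succ]; ring
  have hfac : (((k+1).factorial:ℝ)) = ((k:ℝ)+1) * (k.factorial:ℝ) := by
    push_cast [Nat.factorial_succ]; ring
  have hmid : N^(k+1) - B ≤ ((k:ℝ)+1)*N*(N^k - A) := by nlinarith [hkey, hpow]
  rw [div_le_div_iff₀ (by positivity) (by positivity)]
  have hL : 0 ≤ (N^(k+1) - B) * ((k.factorial:ℝ) * N^k) := by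
    apply mul_nonneg (by linarith) (by positivity)
  calc c^(k+1) * (N^(k+1) - B) * ((k.factorial:ℝ) * N^k)
      ≤ c^k * ((N^(k+1) - B) * ((k.factorial:ℝ) * N^k)) := by
        rw [mul_assoc]
        exact mul_le_mul_of_nonneg_right (pow_le_pow_of_le_one hc0 hc1 (by omega)) hL
    _ ≤ c^k * ((((k:ℝ)+1)*N*(N^k - A)) * ((k.factorial:ℝ) * N^k)) := by
        apply mul_le_mul_of_nonneg_left _ (by positivity)
        apply mul_le_mul_of_nonneg_right hmid (by positivity)
    _ = c^k * (N^k - A) * (((k+1).factorial:ℝ) * N^(k+1)) := by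
        rw [hfac, hpow]; ring

/-- For `c ∈ [0,1]`, `t` a positive even integer, and `n ≥ t`,
`∑_{k=1}^t (-1)^{k-1} (c^k/n^k) binom(n,k) ≥ ∑_{k=1}^t (-1)^{k-1} c^k / k!`. -/
theorem stmt_8 (c : ℝ) (hc0 : 0 ≤ c) (hc1 : c ≤ 1)
    (t : ℕ) (ht : Even t) (ht0 : 0 < t) (n : ℕ) (hn : t ≤ n) :
    ∑ k ∈ Finset.Icc 1 t, (-1 : ℝ) ^ (k - 1) * (c ^ k / (n : ℝ) ^ k) * (n.choose k : ℝ)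
      ≥ ∑ k ∈ Finset.Icc 1 t, (-1 : ℝ) ^ (k - 1) * c ^ k / (k.factorial : ℝ) := by
  have hn1 : 0 < n := by omega
  set e : ℕ → ℝ := fun k => c^k/(k.factorial:ℝ) - c^k * (n.choose k)/ (n:ℝ)^k with he
  have hnR : ((n:ℝ)) ≠ 0 := by positivity
  have he1 : e 1 = 0 := by
    simp only [he, pow_one, Nat.factorial_one, Nat.choose_one_right, Nat.cast_one]
    field_simp
    ring
  have hsum : ∀ j, 1 ≤ j → e (2*j) ≤ ∑ k ∈ Finset.Icc 1 (2*j), (-1:ℝ)^k * e k := by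
    intro j hj
    induction j, hj using Nat.le_induction with
    | base =>
      have h2 : Finset.Icc 1 2 = {1, 2} := by decide
      rw [show 2*1 = 2 from rfl, h2]
      simp [he1]
    | succ m hm ih =>
      have h1 : 2*(m+1) = (2*m+1)+1 := by ring
      rw [h1, Finset.sum_Icc_succ_top (by omega), Finset.sum_Icc_succ_top (by omega)]
      have d1 : e (2*m+1) ≤ e (2*m) := e_decr c hc0 hc1 n (2*m) hn1 (by omega)
      have hp1 : (-1:ℝ)^(2*m+1) = -1 := by
        rw [pow_succ, pow_mul]; simp
      have hp2 : (-1:ℝ)^(2*m+1+1) = 1 := by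
        rw [pow_succ, hp1]; ring
      rw [hp1, hp2]
      have := ih
      nlinarith [this, d1]
  rw [ge_iff_le, ← sub_nonneg, ← Finset.sum_sub_distrib]
  have hcong : ∀ k ∈ Finset.Icc 1 t,
      ((-1 : ℝ) ^ (k - 1) * (c ^ k / (n : ℝ) ^ k) * (n.choose k : ℝ)
        - (-1 : ℝ) ^ (k - 1) * c ^ k / (k.factorial : ℝ)) = (-1:ℝ)^k * e k := by
    intro k hk
    have hk1 : 1 ≤ k := (Finset.mem_Icc.mp hk).1
    obtain ⟨m, rfl⟩ : ∃ m, k = m + 1 := ⟨k - 1, by omega⟩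
    simp only [he, Nat.add_sub_cancel, pow_succ]
    ring
  rw [Finset.sum_congr rfl hcong]
  obtain ⟨j, hj⟩ : ∃ j, t = 2*j := by
    have := Nat.even_iff.mp ht; exact ⟨t/2, by omega⟩
  subst hj
  have hj1 : 1 ≤ j := by omega
  have h0 : 0 ≤ e (2*j) := e_nonneg c hc0 n (2*j) hn1
  linarith [hsum j hj1]
end

section
/- For every integer n ≥ 2 there exists a probability distribution of a random subset R of [n] such that: (a) Pr[R = S] depends only on |S|; (b) Pr[|R| = 0] = (n−1)/(2n), Pr[|R| = 1] = 1/n, Pr[|R| = 2] = (n−1)/(2n), and Pr[|R| = j] = 0 for j ≥ 3; (c) Pr[i ∈ R] = 1/n for every i ∈ [n]; and (d) the events {i ∈ R} are pairwise independent, i.e., Pr[{i,j} ⊆ R] = 1/n² for all i ≠ j. -/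
/-- For `n ≥ 2` there is a symmetric pairwise-independent distribution
over subsets of `[n]` supported on sizes `0, 1, 2` with
`Pr[|R|=0] = (n-1)/(2n)`, `Pr[|R|=1] = 1/n`, `Pr[|R|=2] = (n-1)/(2n)`,
marginals `Pr[i ∈ R] = 1/n`, and `Pr[{i,j} ⊆ R] = 1/n²` for `i ≠ j`. -/
theorem stmt_13 (n : ℕ) (hn : 2 ≤ n) :
    ∃ p : Finset (Fin n) → ℝ,
      (∀ S, 0 ≤ p S) ∧
      (∑ S : Finset (Fin n), p S = 1) ∧
      (∀ S T : Finset (Fin n), S.card = T.card → p S = p T) ∧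
      (∑ S ∈ Finset.univ.filter (fun S : Finset (Fin n) => S.card = 0), p S
        = ((n : ℝ) - 1) / (2 * (n : ℝ))) ∧
      (∑ S ∈ Finset.univ.filter (fun S : Finset (Fin n) => S.card = 1), p S
        = 1 / (n : ℝ)) ∧
      (∑ S ∈ Finset.univ.filter (fun S : Finset (Fin n) => S.card = 2), p S
        = ((n : ℝ) - 1) / (2 * (n : ℝ))) ∧
      (∀ j : ℕ, 3 ≤ j →
        ∑ S ∈ Finset.univ.filter (fun S : Finset (Fin n) => S.card = j), p S = 0) ∧
      (∀ i : Fin n,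
        ∑ S ∈ Finset.univ.filter (fun S : Finset (Fin n) => i ∈ S), p S = 1 / (n : ℝ)) ∧
      (∀ i j : Fin n, i ≠ j →
        ∑ S ∈ Finset.univ.filter (fun S : Finset (Fin n) => i ∈ S ∧ j ∈ S), p S
          = 1 / (n : ℝ) ^ 2) := by
  have hnR : (2:ℝ) ≤ (n:ℝ) := by exact_mod_cast hn
  have hnpos : (0:ℝ) < (n:ℝ) := by linarith
  have hn0 : (n:ℝ) ≠ 0 := ne_of_gt hnpos
  set a : ℝ := ((n:ℝ) - 1) / (2 * (n:ℝ)) with ha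
  set b : ℝ := 1 / (n:ℝ)^2 with hb
  set p : Finset (Fin n) → ℝ :=
    fun S => if S.card = 0 then a else if S.card ≤ 2 then b else 0 with hp
  have ha0 : 0 ≤ a := by
    apply div_nonneg <;> nlinarith
  have hb0 : 0 ≤ b := by positivity
  -- number of subsets of a given size
  have hfilt : ∀ k : ℕ,
      (Finset.univ.filter (fun S : Finset (Fin n) => S.card = k))
        = Finset.powersetCard k (Finset.univ : Finset (Fin n)) := by
    intro k
    rw [Finset.powersetCard_eq_filter, Finset.powerset_univ]
  have hcard : ∀ k : ℕ,
      (Finset.univ.filter (fun S : Finset (Fin n) => S.card = k)).card = n.choose k := by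
    intro k
    rw [hfilt, Finset.card_powersetCard, Finset.card_univ, Fintype.card_fin]
  -- sums over a fixed positive size ≤ 2
  have hsumk : ∀ k : ℕ, k ≠ 0 → k ≤ 2 →
      ∑ S ∈ Finset.univ.filter (fun S : Finset (Fin n) => S.card = k), p S
        = (n.choose k : ℝ) * b := by
    intro k hk hk2
    have : ∀ S ∈ Finset.univ.filter (fun S : Finset (Fin n) => S.card = k), p S = b := by
      intro S hS
      simp only [Finset.mem_filter] at hS
      simp only [hp]
      rw [hS.2, if_neg hk, if_pos hk2]
    rw [Finset.sum_congr rfl this, Finset.sum_const, hcard, nsmul_eq_mul]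
  have h0 : ∑ S ∈ Finset.univ.filter (fun S : Finset (Fin n) => S.card = 0), p S = a := by
    have hset : Finset.univ.filter (fun S : Finset (Fin n) => S.card = 0)
        = {(∅ : Finset (Fin n))} := by
      ext S
      simp [Finset.card_eq_zero]
    rw [hset, Finset.sum_singleton]
    simp [hp]
  have hc2 : ((n.choose 2 : ℕ) : ℝ) = (n:ℝ) * ((n:ℝ) - 1) / 2 := by
    have heven : 2 ∣ n * (n - 1) := by
      rcases Nat.even_or_odd n with h | h
      · exact Dvd.dvd.mul_right h.two_dvd _
      · have he : Even (n - 1) := by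
          rcases h with ⟨k, hk⟩; exact ⟨k, by omega⟩
        exact Dvd.dvd.mul_left he.two_dvd _
    have hnat : n.choose 2 * 2 = n * (n - 1) := by
      rw [Nat.choose_two_right]
      exact Nat.div_mul_cancel heven
    have h1n : (1:ℕ) ≤ n := by omega
    have hR : ((n.choose 2 * 2 : ℕ) : ℝ) = ((n * (n - 1) : ℕ) : ℝ) := by
      exact_mod_cast congrArg (fun m : ℕ => (m : ℝ)) hnat
    push_cast [Nat.cast_sub h1n] at hR
    linarith
  have h1 : ∑ S ∈ Finset.univ.filter (fun S : Finset (Fin n) => S.card = 1), p S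
      = 1 / (n:ℝ) := by
    rw [hsumk 1 (by omega) (by omega)]
    rw [Nat.choose_one_right, hb]
    field_simp
  have h2 : ∑ S ∈ Finset.univ.filter (fun S : Finset (Fin n) => S.card = 2), p S = a := by
    rw [hsumk 2 (by omega) (by omega), hc2, ha, hb]
    field_simp
  have h3 : ∀ j : ℕ, 3 ≤ j →
      ∑ S ∈ Finset.univ.filter (fun S : Finset (Fin n) => S.card = j), p S = 0 := by
    intro j hj
    apply Finset.sum_eq_zero
    intro S hS
    simp only [Finset.mem_filter] at hS
    simp only [hp]
    rw [hS.2, if_neg (by omega), if_neg (by omega)]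
  -- total sum
  have htot : ∑ S : Finset (Fin n), p S = 1 := by
    have hps : (Finset.univ : Finset (Finset (Fin n)))
        = (Finset.univ : Finset (Fin n)).powerset := (Finset.powerset_univ).symm
    rw [hps, Finset.sum_powerset]
    have hrw : ∀ j : ℕ, ∑ S ∈ Finset.powersetCard j (Finset.univ : Finset (Fin n)), p S
        = ∑ S ∈ Finset.univ.filter (fun S : Finset (Fin n) => S.card = j), p S := by
      intro j; rw [hfilt]
    have hcu : (Finset.univ : Finset (Fin n)).card = n := by
      rw [Finset.card_univ, Fintype.card_fin]
    rw [hcu]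
    have hsplit := Finset.sum_range_add_sum_Ico
      (fun j => ∑ S ∈ Finset.powersetCard j (Finset.univ : Finset (Fin n)), p S)
      (show 3 ≤ n + 1 by omega)
    rw [← hsplit]
    have hico : ∑ j ∈ Finset.Ico 3 (n+1),
        ∑ S ∈ Finset.powersetCard j (Finset.univ : Finset (Fin n)), p S = 0 := by
      apply Finset.sum_eq_zero
      intro j hj
      rw [hrw]
      exact h3 j (Finset.mem_Ico.mp hj).1
    rw [hico, add_zero]
    rw [Finset.sum_range_succ, Finset.sum_range_succ, Finset.sum_range_one]
    rw [hrw 0, hrw 1, hrw 2, h0, h1, h2, ha]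
    field_simp
    ring
  -- symmetric
  have hsym : ∀ S T : Finset (Fin n), S.card = T.card → p S = p T := by
    intro S T h
    simp only [hp]
    rw [h]
  -- marginals
  have hmarg : ∀ i : Fin n,
      ∑ S ∈ Finset.univ.filter (fun S : Finset (Fin n) => i ∈ S), p S = 1 / (n:ℝ) := by
    intro i
    rw [← Finset.sum_filter_add_sum_filter_not
      (Finset.univ.filter (fun S : Finset (Fin n) => i ∈ S))
      (fun S => S.card ≤ 2) p]
    have hz : ∑ S ∈ (Finset.univ.filter (fun S : Finset (Fin n) => i ∈ S)).filter
        (fun S => ¬ S.card ≤ 2), p S = 0 := by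
      apply Finset.sum_eq_zero
      intro S hS
      simp only [Finset.mem_filter] at hS
      have : S.card ≠ 0 := by omega
      simp only [hp]
      rw [if_neg this, if_neg hS.2]
    rw [hz, add_zero]
    have himg : (Finset.univ.filter (fun S : Finset (Fin n) => i ∈ S)).filter
        (fun S => S.card ≤ 2)
        = Finset.univ.image (fun j : Fin n => ({i, j} : Finset (Fin n))) := by
      ext S
      simp only [Finset.mem_filter, Finset.mem_univ, true_and, Finset.mem_image]
      constructor
      · rintro ⟨hiS, hc2'⟩
        have hc1 : 1 ≤ S.card := Finset.card_pos.mpr ⟨i, hiS⟩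
        interval_cases h : S.card
        · obtain ⟨x, hx⟩ := Finset.card_eq_one.mp h
          have : i = x := by rw [hx] at hiS; simpa using hiS
          exact ⟨i, by rw [hx, ← this]; simp⟩
        · obtain ⟨x, y, hxy, hS2⟩ := Finset.card_eq_two.mp h
          rw [hS2] at hiS
          rcases Finset.mem_insert.mp hiS with h' | h'
          · exact ⟨y, by rw [hS2, h']⟩
          · have : i = y := by simpa using h'
            exact ⟨x, by rw [hS2, this, Finset.pair_comm]⟩
      · rintro ⟨j, rfl⟩
        refine ⟨by simp, ?_⟩
        exact le_trans (Finset.card_insert_le _ _) (by simp)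
    rw [himg]
    have hconst : ∀ S ∈ Finset.univ.image (fun j : Fin n => ({i, j} : Finset (Fin n))),
        p S = b := by
      intro S hS
      obtain ⟨j, _, rfl⟩ := Finset.mem_image.mp hS
      have h1' : ({i, j} : Finset (Fin n)).card ≠ 0 :=
        Finset.card_ne_zero_of_mem (by simp : i ∈ ({i, j} : Finset (Fin n)))
      have h2' : ({i, j} : Finset (Fin n)).card ≤ 2 :=
        le_trans (Finset.card_insert_le _ _) (by simp)
      simp only [hp]
      rw [if_neg h1', if_pos h2']
    rw [Finset.sum_congr rfl hconst, Finset.sum_const, nsmul_eq_mul]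
    have hinj : Function.Injective (fun j : Fin n => ({i, j} : Finset (Fin n))) := by
      intro x y hxy
      simp only at hxy
      have hx : x ∈ ({i, y} : Finset (Fin n)) := by rw [← hxy]; simp
      have hy : y ∈ ({i, x} : Finset (Fin n)) := by rw [hxy]; simp
      simp only [Finset.mem_insert, Finset.mem_singleton] at hx hy
      rcases hx with h | h
      · rcases hy with h' | h'
        · rw [h, h']
        · rw [h']
      · exact h
    rw [Finset.card_image_of_injective _ hinj, Finset.card_univ, Fintype.card_fin, hb]
    field_simp
  -- pairs
  have hpair : ∀ i j : Fin n, i ≠ j →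
      ∑ S ∈ Finset.univ.filter (fun S : Finset (Fin n) => i ∈ S ∧ j ∈ S), p S
        = 1 / (n:ℝ)^2 := by
    intro i j hij
    have hmem : ({i, j} : Finset (Fin n)) ∈
        Finset.univ.filter (fun S : Finset (Fin n) => i ∈ S ∧ j ∈ S) := by
      simp
    rw [Finset.sum_eq_single_of_mem _ hmem]
    · have hc : ({i, j} : Finset (Fin n)).card = 2 := Finset.card_pair hij
      simp [hp, hc, hb]
    · intro S hS hne
      simp only [Finset.mem_filter, Finset.mem_univ, true_and] at hS
      have hsub : ({i, j} : Finset (Fin n)) ⊆ S := by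
        intro x hx
        simp only [Finset.mem_insert, Finset.mem_singleton] at hx
        rcases hx with rfl | rfl
        · exact hS.1
        · exact hS.2
      have hc2' : ¬ S.card ≤ 2 := by
        intro hle
        have : S = ({i, j} : Finset (Fin n)) := by
          apply (Finset.eq_of_subset_of_card_le hsub ?_).symm
          rw [Finset.card_pair hij]; exact hle
        exact hne this
      have hc0 : S.card ≠ 0 := by
        have := Finset.card_le_card hsub
        rw [Finset.card_pair hij] at this
        omega
      simp only [hp]
      rw [if_neg hc0, if_neg hc2']
  exact ⟨p, fun S => by
      simp only [hp]
      split_ifs <;> first | exact ha0 | exact hb0 | exact le_rfl,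
    htot, hsym, h0, h1, h2, h3, hmarg, hpair⟩
end

section
/- For every integer n ≥ 4 there exists a probability distribution of a random subset R of [n] such that: (a) Pr[R = S] depends only on |S|; (b) Pr[|R| = 0] = (n³ − 2n² + 3n − 2)/(2n³), Pr[|R| = 1] = (2n−2)/n², Pr[|R| = 2] = (n−1)²/(2n²), Pr[|R| = n] = 1/n³, and Pr[|R| = j] = 0 for all other j; and (c) the events {i ∈ R} are 3-wise independent with Pr[i ∈ R] = 1/n, i.e., Pr[S ⊆ R] = n^{−|S|} for every S ⊆ [n] with |S| ≤ 3. -/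
private lemma sum_choose_cond (m t : ℕ) (x : ℝ) (P : ℕ → Prop) [DecidablePred P]
    (hP : ∀ i, P i ↔ i = t) (ht : t ≤ m) :
    ∑ i ∈ Finset.range (m + 1), (m.choose i : ℝ) * (if P i then x else 0)
      = (m.choose t : ℝ) * x := by
  have h1 : ∀ i ∈ Finset.range (m + 1), (m.choose i : ℝ) * (if P i then x else 0)
      = if i = t then (m.choose i : ℝ) * x else 0 := by
    intro i _
    by_cases h : P i
    · rw [if_pos h, if_pos ((hP i).mp h)]
    · rw [if_neg h, if_neg (fun hh => h ((hP i).mpr hh)), mul_zero]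
  rw [Finset.sum_congr rfl h1,
    Finset.sum_ite_eq' (Finset.range (m + 1)) t (fun i => (m.choose i : ℝ) * x),
    if_pos (Finset.mem_range.mpr (Nat.lt_succ_of_le ht))]

private lemma sum_choose_cond_false (m : ℕ) (x : ℝ) (P : ℕ → Prop) [DecidablePred P]
    (hP : ∀ i, ¬ P i) :
    ∑ i ∈ Finset.range (m + 1), (m.choose i : ℝ) * (if P i then x else 0) = 0 :=
  Finset.sum_eq_zero fun i _ => by rw [if_neg (hP i), mul_zero]

/-- For `n ≥ 4` there is a symmetric 3-wise independent distribution over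
subsets of `[n]` with `Pr[|R|=0] = (n³-2n²+3n-2)/(2n³)`, `Pr[|R|=1] = (2n-2)/n²`,
`Pr[|R|=2] = (n-1)²/(2n²)`, `Pr[|R|=n] = 1/n³`, all other sizes having probability 0,
and `Pr[S ⊆ R] = n^{-|S|}` for all `S` with `|S| ≤ 3`. -/
theorem stmt_14 (n : ℕ) (hn : 4 ≤ n) :
    ∃ p : Finset (Fin n) → ℝ,
      (∀ S, 0 ≤ p S) ∧
      (∑ S : Finset (Fin n), p S = 1) ∧
      (∀ S T : Finset (Fin n), S.card = T.card → p S = p T) ∧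
      (∑ S ∈ Finset.univ.filter (fun S : Finset (Fin n) => S.card = 0), p S
        = ((n : ℝ) ^ 3 - 2 * (n : ℝ) ^ 2 + 3 * (n : ℝ) - 2) / (2 * (n : ℝ) ^ 3)) ∧
      (∑ S ∈ Finset.univ.filter (fun S : Finset (Fin n) => S.card = 1), p S
        = (2 * (n : ℝ) - 2) / (n : ℝ) ^ 2) ∧
      (∑ S ∈ Finset.univ.filter (fun S : Finset (Fin n) => S.card = 2), p S
        = ((n : ℝ) - 1) ^ 2 / (2 * (n : ℝ) ^ 2)) ∧
      (∑ S ∈ Finset.univ.filter (fun S : Finset (Fin n) => S.card = n), p S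
        = 1 / (n : ℝ) ^ 3) ∧
      (∀ j : ℕ, j ≠ 0 → j ≠ 1 → j ≠ 2 → j ≠ n →
        ∑ S ∈ Finset.univ.filter (fun S : Finset (Fin n) => S.card = j), p S = 0) ∧
      (∀ S : Finset (Fin n), S.card ≤ 3 →
        ∑ T ∈ Finset.univ.filter (fun T : Finset (Fin n) => S ⊆ T), p T
          = ((n : ℝ) ^ S.card)⁻¹) := by
  classical
  have hN4 : (4 : ℝ) ≤ (n : ℝ) := by exact_mod_cast hn
  set N : ℝ := (n : ℝ) with hNdef
  have hN0 : N ≠ 0 := by linarith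
  set a : ℝ := (N ^ 3 - 2 * N ^ 2 + 3 * N - 2) / (2 * N ^ 3) with ha
  set b : ℝ := (2 * N - 2) / N ^ 3 with hb
  set c : ℝ := (N - 1) / N ^ 3 with hc
  set d : ℝ := 1 / N ^ 3 with hd
  set F : ℕ → ℝ := fun j =>
    if j = 0 then a else if j = 1 then b else if j = 2 then c else if j = n then d else 0
    with hF
  have hFeq : ∀ j, F j = (if j = 0 then a else 0) + (if j = 1 then b else 0)
      + (if j = 2 then c else 0) + (if j = n then d else 0) := by
    intro j
    simp only [hF]
    split_ifs <;> first | omega | ring1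
  have hchoose1 : ((n.choose 1 : ℕ) : ℝ) = N := by
    rw [Nat.choose_one_right]
  have hcast1 : (((n - 1 : ℕ)) : ℝ) = N - 1 := by
    rw [Nat.cast_sub (by omega)]; simp [hNdef]
  have hchoose2 : ((n.choose 2 : ℕ) : ℝ) = N * (N - 1) / 2 := by
    have heven : 2 ∣ n * (n - 1) := by
      have h := Nat.even_mul_succ_self (n - 1)
      rw [Nat.sub_add_cancel (by omega)] at h
      rw [Nat.mul_comm]
      exact h.two_dvd
    have h2 : 2 * n.choose 2 = n * (n - 1) := by
      rw [Nat.choose_two_right, Nat.mul_div_cancel' heven]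
    have := congrArg (fun k : ℕ => (k : ℝ)) h2
    push_cast [Nat.cast_sub (by omega : 1 ≤ n)] at this
    linarith
  -- size sums
  have hsize : ∀ j : ℕ,
      ∑ S ∈ Finset.univ.filter (fun S : Finset (Fin n) => S.card = j), F S.card
        = ((n.choose j : ℕ) : ℝ) * F j := by
    intro j
    have h1 : Finset.univ.filter (fun S : Finset (Fin n) => S.card = j)
        = Finset.powersetCard j Finset.univ := by
      rw [Finset.powersetCard_eq_filter, Finset.powerset_univ]
    rw [h1]
    have h2 : ∀ S ∈ Finset.powersetCard j (Finset.univ : Finset (Fin n)),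
        F S.card = F j := fun S hS => by rw [(Finset.mem_powersetCard.mp hS).2]
    rw [Finset.sum_congr rfl h2, Finset.sum_const, Finset.card_powersetCard,
      Finset.card_univ, Fintype.card_fin, nsmul_eq_mul]
  -- the key total computation
  have key0 : ∑ i ∈ Finset.range (n + 1), ((n.choose i : ℕ) : ℝ) * F i = 1 := by
    simp only [hFeq, mul_add]
    rw [Finset.sum_add_distrib, Finset.sum_add_distrib, Finset.sum_add_distrib,
      sum_choose_cond n 0 a (fun i => i = 0) (fun i => Iff.rfl) (by omega),
      sum_choose_cond n 1 b (fun i => i = 1) (fun i => Iff.rfl) (by omega),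
      sum_choose_cond n 2 c (fun i => i = 2) (fun i => Iff.rfl) (by omega),
      sum_choose_cond n n d (fun i => i = n) (fun i => Iff.rfl) le_rfl,
      hchoose2, hchoose1, Nat.choose_zero_right, Nat.choose_self, Nat.cast_one, ha, hb, hc, hd]
    field_simp
    ring
  refine ⟨fun S => F S.card, ?_, ?_, ?_, ?_, ?_, ?_, ?_, ?_, ?_⟩
  · -- nonneg
    intro S
    have hden : (0 : ℝ) < N ^ 3 := by positivity
    simp only [hF]
    split_ifs
    · rw [ha]; apply div_nonneg; nlinarith; nlinarith
    · rw [hb]; apply div_nonneg; nlinarith; nlinarith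
    · rw [hc]; apply div_nonneg; nlinarith; nlinarith
    · rw [hd]; positivity
    · exact le_refl 0
  · -- total sum
    dsimp only
    rw [← Finset.powerset_univ, Finset.sum_powerset_apply_card F,
      Finset.card_univ, Fintype.card_fin]
    rw [← key0]
    exact Finset.sum_congr rfl fun i _ => by rw [nsmul_eq_mul]
  · -- symmetric
    intro S T h
    dsimp only
    rw [h]
  · -- size 0
    dsimp only
    rw [hsize 0, Nat.choose_zero_right, Nat.cast_one, one_mul]
    simp only [hF]
    norm_num
  · -- size 1
    dsimp only
    rw [hsize 1, hchoose1]
    simp only [hF]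
    norm_num
    rw [hb]
    field_simp
  · -- size 2
    dsimp only
    rw [hsize 2, hchoose2]
    simp only [hF]
    norm_num
    rw [hc]
    field_simp
  · -- size n
    dsimp only
    rw [hsize n, Nat.choose_self, Nat.cast_one, one_mul]
    have hFn : F n = d := by
      simp only [hF]
      rw [if_neg (by omega : ¬ n = 0), if_neg (by omega : ¬ n = 1),
        if_neg (by omega : ¬ n = 2)]
      simp
    rw [hFn, hd]
  · -- other sizes
    intro j h0 h1 h2 hjn
    dsimp only
    rw [hsize j]
    simp only [hF]
    rw [if_neg h0, if_neg h1, if_neg h2, if_neg hjn, mul_zero]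
  · -- independence
    intro S hS
    dsimp only
    have hbij : ∑ T ∈ Finset.univ.filter (fun T : Finset (Fin n) => S ⊆ T), F T.card
        = ∑ U ∈ Sᶜ.powerset, F (S.card + U.card) := by
      refine Finset.sum_nbij' (fun T => T \ S) (fun U => S ∪ U) ?_ ?_ ?_ ?_ ?_
      · intro T hT
        rw [Finset.mem_powerset]
        intro x hx
        rw [Finset.mem_sdiff] at hx
        rw [Finset.mem_compl]
        exact hx.2
      · intro U hU
        simp [Finset.subset_union_left]
      · intro T hT
        rw [Finset.mem_filter] at hT
        exact Finset.union_sdiff_of_subset hT.2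
      · intro U hU
        rw [Finset.mem_powerset] at hU
        apply Finset.union_sdiff_cancel_left
        rw [Finset.disjoint_left]
        intro x hxS hxU
        exact (Finset.mem_compl.mp (hU hxU)) hxS
      · intro T hT
        rw [Finset.mem_filter] at hT
        have h2 := Finset.card_sdiff_add_card_eq_card hT.2
        show F T.card = F (S.card + (T \ S).card)
        congr 1
        omega
    rw [hbij, Finset.sum_powerset_apply_card (fun i => F (S.card + i))]
    have hm : Sᶜ.card = n - S.card := by
      rw [Finset.card_compl, Fintype.card_fin]
    obtain ⟨k, hk⟩ : ∃ k, k = S.card := ⟨_, rfl⟩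
    rw [← hk] at hS hm ⊢
    have hsum : ∑ m ∈ Finset.range (Sᶜ.card + 1), Sᶜ.card.choose m • F (k + m)
        = ∑ m ∈ Finset.range (n - k + 1), ((n - k).choose m : ℝ) * F (k + m) := by
      rw [hm]
      exact Finset.sum_congr rfl fun i _ => by rw [nsmul_eq_mul]
    rw [hsum]
    interval_cases k
    · -- k = 0
      simp only [Nat.zero_add, Nat.sub_zero, pow_zero, inv_one]
      exact key0
    · -- k = 1
      simp only [hFeq, mul_add]
      rw [Finset.sum_add_distrib, Finset.sum_add_distrib, Finset.sum_add_distrib,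
        sum_choose_cond_false (n - 1) a (fun i => 1 + i = 0) (by omega),
        sum_choose_cond (n - 1) 0 b (fun i => 1 + i = 1) (fun i => by omega) (by omega),
        sum_choose_cond (n - 1) 1 c (fun i => 1 + i = 2) (fun i => by omega) (by omega),
        sum_choose_cond (n - 1) (n - 1) d (fun i => 1 + i = n) (fun i => by omega) le_rfl,
        Nat.choose_zero_right, Nat.choose_one_right, Nat.choose_self, Nat.cast_one,
        hcast1, hb, hc, hd]
      field_simp
      ring
    · -- k = 2
      simp only [hFeq, mul_add]
      rw [Finset.sum_add_distrib, Finset.sum_add_distrib, Finset.sum_add_distrib,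
        sum_choose_cond_false (n - 2) a (fun i => 2 + i = 0) (by omega),
        sum_choose_cond_false (n - 2) b (fun i => 2 + i = 1) (by omega),
        sum_choose_cond (n - 2) 0 c (fun i => 2 + i = 2) (fun i => by omega) (by omega),
        sum_choose_cond (n - 2) (n - 2) d (fun i => 2 + i = n) (fun i => by omega) le_rfl,
        Nat.choose_zero_right, Nat.choose_self, Nat.cast_one, hc, hd]
      field_simp
      ring
    · -- k = 3
      simp only [hFeq, mul_add]
      rw [Finset.sum_add_distrib, Finset.sum_add_distrib, Finset.sum_add_distrib,
        sum_choose_cond_false (n - 3) a (fun i => 3 + i = 0) (by omega),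
        sum_choose_cond_false (n - 3) b (fun i => 3 + i = 1) (by omega),
        sum_choose_cond_false (n - 3) c (fun i => 3 + i = 2) (by omega),
        sum_choose_cond (n - 3) (n - 3) d (fun i => 3 + i = n) (fun i => by omega) le_rfl,
        Nat.choose_self, Nat.cast_one, hd]
      field_simp
      ring
end

section
/- For every even integer t ≥ 2 there exist a constant C > 0 and an integer n₀ such that for every n ≥ n₀ there exists a probability distribution of a random subset R of [n] satisfying: (a) |R| ≤ t almost surely; (b) Pr[R = S] depends only on |S|; (c) Pr[S ⊆ R] = n^{−|S|} for every S ⊆ [n] with |S| ≤ t (t-wise independence with marginals 1/n); and (d) Pr[R = ∅] ≥ Σ_{b=0}^{t} (−1)^b/b! − C/n. -/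
open Finset

/-- Alternating sums of antitone nonnegative sequences are nonnegative. -/
lemma alt_nonneg_aux (a : ℕ → ℝ) (h0 : ∀ j, 0 ≤ a j) (hd : ∀ j, a (j + 1) ≤ a j) (K : ℕ) :
    0 ≤ ∑ j ∈ Finset.range K, (-1 : ℝ) ^ j * a j := by
  have heven : ∀ k, 0 ≤ ∑ j ∈ Finset.range (2 * k), (-1 : ℝ) ^ j * a j := by
    intro k
    induction k with
    | zero => simp
    | succ k ih =>
      rw [show 2 * (k + 1) = (2 * k) + 1 + 1 by ring, Finset.sum_range_succ,
        Finset.sum_range_succ]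
      have e1 : (-1 : ℝ) ^ (2 * k) = 1 := by rw [pow_mul]; norm_num
      have e2 : (-1 : ℝ) ^ (2 * k + 1) = -1 := by rw [pow_succ, e1]; norm_num
      rw [e1, e2]
      have := hd (2 * k)
      nlinarith
  rcases Nat.even_or_odd K with ⟨k, hk⟩ | ⟨k, hk⟩
  · rw [hk, ← two_mul]; exact heven k
  · rw [hk]
    rw [Finset.sum_range_succ]
    have e1 : (-1 : ℝ) ^ (2 * k) = 1 := by rw [pow_mul]; norm_num
    rw [e1, one_mul]
    have := heven k
    have := h0 (2 * k)
    linarith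

/-- Diagonal reindexing of a triangular double sum. -/
lemma diag_sum (M : ℕ) (F : ℕ → ℕ → ℝ) :
    ∑ i ∈ Finset.range (M + 1), ∑ j ∈ Finset.range (M + 1 - i), F i j
      = ∑ m ∈ Finset.range (M + 1), ∑ i ∈ Finset.range (m + 1), F i (m - i) := by
  rw [Finset.sum_sigma' (Finset.range (M + 1)) (fun i => Finset.range (M + 1 - i))
    (fun i j => F i j),
    Finset.sum_sigma' (Finset.range (M + 1)) (fun m => Finset.range (m + 1))
    (fun m i => F i (m - i))]
  refine Finset.sum_nbij' (fun p => ⟨p.1 + p.2, p.1⟩) (fun q => ⟨q.2, q.1 - q.2⟩) ?_ ?_ ?_ ?_ ?_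
  · rintro ⟨i, j⟩ h
    simp only [Finset.mem_sigma, Finset.mem_range] at h ⊢
    omega
  · rintro ⟨m, i⟩ h
    simp only [Finset.mem_sigma, Finset.mem_range] at h ⊢
    omega
  · rintro ⟨i, j⟩ h
    simp only [Finset.mem_sigma, Finset.mem_range] at h
    simp only
    congr 1
    omega
  · rintro ⟨m, i⟩ h
    simp only [Finset.mem_sigma, Finset.mem_range] at h
    simp only
    congr 1
    omega
  · rintro ⟨i, j⟩ h
    simp only [Finset.mem_sigma, Finset.mem_range] at h
    simp only [Nat.add_sub_cancel_left]

/-- Alternating binomial sum over the reals. -/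
lemma alt_choose_sum (m : ℕ) :
    ∑ i ∈ Finset.range (m + 1), (-1 : ℝ) ^ i * (m.choose i : ℝ)
      = if m = 0 then 1 else 0 := by
  have h := Int.alternating_sum_range_choose (n := m)
  have := congrArg (fun z : ℤ => (z : ℝ)) h
  push_cast at this
  rw [this]

/-- Key identity: the double alternating binomial sum collapses to 1. -/
lemma key_identity (N M : ℕ) (hMN : M ≤ N) (x : ℝ) :
    ∑ i ∈ Finset.range (M + 1), ∑ j ∈ Finset.range (M + 1 - i),
      (-1 : ℝ) ^ j * (N.choose i : ℝ) * ((N - i).choose j : ℝ) * x ^ (i + j) = 1 := by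
  rw [diag_sum M (fun i j => (-1 : ℝ) ^ j * (N.choose i : ℝ) * ((N - i).choose j : ℝ) * x ^ (i + j))]
  have step : ∀ m ∈ Finset.range (M + 1),
      (∑ i ∈ Finset.range (m + 1),
        (-1 : ℝ) ^ (m - i) * (N.choose i : ℝ) * ((N - i).choose (m - i) : ℝ) * x ^ (i + (m - i)))
      = if m = 0 then 1 else 0 := by
    intro m hm
    rw [Finset.mem_range] at hm
    have hmN : m ≤ N := by omega
    have trans : ∀ i ∈ Finset.range (m + 1),
        (-1 : ℝ) ^ (m - i) * (N.choose i : ℝ) * ((N - i).choose (m - i) : ℝ) * x ^ (i + (m - i))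
        = ((N.choose m : ℝ) * x ^ m * (-1) ^ m) * ((-1) ^ i * (m.choose i : ℝ)) := by
      intro i hi
      rw [Finset.mem_range] at hi
      have him : i ≤ m := by omega
      have h1 : (N.choose i : ℝ) * ((N - i).choose (m - i) : ℝ)
          = (N.choose m : ℝ) * (m.choose i : ℝ) := by
        exact_mod_cast congrArg (fun z : ℕ => (z : ℝ)) (Nat.choose_mul (n := N) him).symm
      have h3 : (-1 : ℝ) ^ i * (-1) ^ i = 1 := by
        rw [← pow_add]; exact Even.neg_one_pow ⟨i, rfl⟩
      have h2 : (-1 : ℝ) ^ (m - i) = (-1) ^ m * (-1) ^ i := by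
        have hsum : (m - i) + i = m := by omega
        calc (-1 : ℝ) ^ (m - i) = (-1) ^ (m - i) * ((-1) ^ i * (-1) ^ i) := by
              rw [h3, mul_one]
          _ = ((-1) ^ (m - i) * (-1) ^ i) * (-1) ^ i := by ring
          _ = (-1) ^ m * (-1) ^ i := by rw [← pow_add, hsum]
      have h4 : i + (m - i) = m := by omega
      rw [h4, h2]
      linear_combination ((-1 : ℝ) ^ m * (-1) ^ i * x ^ m) * h1
    rw [Finset.sum_congr rfl trans, ← Finset.mul_sum, alt_choose_sum m]
    by_cases hm0 : m = 0
    · subst hm0; simp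
    · simp [hm0]
  rw [Finset.sum_congr rfl step]
  simp

/-- For every even `t ≥ 2` there are `C > 0` and `n₀` such that for all
`n ≥ n₀` there is a symmetric `t`-wise independent distribution (marginals `1/n`) over
subsets of `[n]` supported on sets of size at most `t`, whose probability of the empty
set is at least `∑_{b=0}^t (-1)^b/b! - C/n`. -/
theorem stmt_15 (t : ℕ) (ht : Even t) (ht2 : 2 ≤ t) :
    ∃ C : ℝ, 0 < C ∧ ∃ n₀ : ℕ, ∀ n : ℕ, n₀ ≤ n →
      ∃ p : Finset (Fin n) → ℝ,
        (∀ S, 0 ≤ p S) ∧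
        (∑ S : Finset (Fin n), p S = 1) ∧
        (∀ S : Finset (Fin n), t < S.card → p S = 0) ∧
        (∀ S T : Finset (Fin n), S.card = T.card → p S = p T) ∧
        (∀ S : Finset (Fin n), S.card ≤ t →
          ∑ T ∈ Finset.univ.filter (fun T : Finset (Fin n) => S ⊆ T), p T
            = ((n : ℝ) ^ S.card)⁻¹) ∧
        p ∅ ≥ (∑ b ∈ Finset.range (t + 1), (-1 : ℝ) ^ b / (b.factorial : ℝ)) - C / (n : ℝ) := by
  refine ⟨((t : ℝ) + 1) * (t : ℝ) ^ 2 + 1, by positivity, t, fun n hn => ?_⟩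
  have hn2 : 2 ≤ n := le_trans ht2 hn
  have hn0 : (0 : ℝ) < (n : ℝ) := by exact_mod_cast (show 0 < n by omega)
  -- the weight function
  set f : ℕ → ℝ := fun k => ∑ j ∈ Finset.range (t + 1 - k),
      (-1 : ℝ) ^ j * ((n - k).choose j : ℝ) / (n : ℝ) ^ (k + j) with hf
  -- nonnegativity
  have hpos : ∀ k, 0 ≤ f k := by
    intro k
    have ha0 : ∀ j, 0 ≤ ((n - k).choose j : ℝ) / (n : ℝ) ^ (k + j) := by
      intro j; positivity
    have hd : ∀ j, ((n - k).choose (j + 1) : ℝ) / (n : ℝ) ^ (k + (j + 1))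
        ≤ ((n - k).choose j : ℝ) / (n : ℝ) ^ (k + j) := by
      intro j
      have hN : (n - k).choose (j + 1) ≤ n * (n - k).choose j := by
        calc (n - k).choose (j + 1) ≤ (n - k).choose (j + 1) * (j + 1) :=
              Nat.le_mul_of_pos_right _ (by omega)
          _ = (n - k).choose j * ((n - k) - j) := Nat.choose_succ_right_eq _ _
          _ ≤ (n - k).choose j * n := Nat.mul_le_mul_left _ (by omega)
          _ = n * (n - k).choose j := Nat.mul_comm _ _
      have hNr : ((n - k).choose (j + 1) : ℝ) ≤ (n : ℝ) * ((n - k).choose j : ℝ) := by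
        exact_mod_cast hN
      rw [show k + (j + 1) = (k + j) + 1 by ring, pow_succ]
      rw [div_le_div_iff₀ (by positivity) (by positivity)]
      have hp : (0 : ℝ) < (n : ℝ) ^ (k + j) := by positivity
      nlinarith
    have := alt_nonneg_aux (fun j => ((n - k).choose j : ℝ) / (n : ℝ) ^ (k + j)) ha0 hd
      (t + 1 - k)
    rw [hf]
    refine le_trans this (le_of_eq (Finset.sum_congr rfl fun j _ => ?_))
    rw [mul_div_assoc]
  -- the marginal property
  have hmarg : ∀ S : Finset (Fin n), S.card ≤ t →
      ∑ T ∈ Finset.univ.filter (fun T : Finset (Fin n) => S ⊆ T), f T.card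
        = ((n : ℝ) ^ S.card)⁻¹ := by
    intro S hS
    set s := S.card with hs
    -- step 1: reindex by the complement part
    have step1 : ∑ T ∈ Finset.univ.filter (fun T : Finset (Fin n) => S ⊆ T), f T.card
        = ∑ X ∈ Sᶜ.powerset, f (s + X.card) := by
      refine Finset.sum_nbij' (fun T => T \ S) (fun X => S ∪ X) ?_ ?_ ?_ ?_ ?_
      · intro T hT
        rw [Finset.mem_filter] at hT
        rw [Finset.mem_powerset]
        intro x hx
        rw [Finset.mem_sdiff] at hx
        simpa using hx.2
      · intro X hX
        simp [Finset.subset_union_left]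
      · intro T hT
        rw [Finset.mem_filter] at hT
        exact Finset.union_sdiff_of_subset hT.2
      · intro X hX
        rw [Finset.mem_powerset] at hX
        have hdisj : Disjoint S X := by
          rw [Finset.disjoint_left]
          intro a haS haX
          have := hX haX
          simp [Finset.mem_compl] at this
          exact this haS
        exact Finset.union_sdiff_cancel_left hdisj
      · intro T hT
        rw [Finset.mem_filter] at hT
        have hsub : S ⊆ T := hT.2
        have hcard : (T \ S).card = T.card - s := by rw [Finset.card_sdiff_of_subset hsub]
        have : s + (T \ S).card = T.card := by
          rw [hcard]
          have := Finset.card_le_card hsub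
          omega
        rw [this]
    rw [step1]
    -- step 2: group by cardinality
    rw [Finset.sum_powerset_apply_card (fun m => f (s + m)) (x := Sᶜ)]
    have hcompl : Sᶜ.card = n - s := by
      rw [Finset.card_compl, Fintype.card_fin]
    rw [hcompl]
    simp only [nsmul_eq_mul]
    -- step 3: truncate to range (t - s + 1)
    have step3 : ∑ m ∈ Finset.range (n - s + 1), ((n - s).choose m : ℝ) * f (s + m)
        = ∑ m ∈ Finset.range (t - s + 1), ((n - s).choose m : ℝ) * f (s + m) := by
      refine (Finset.sum_subset ?_ ?_).symm
      · exact Finset.range_subset_range.mpr (by omega)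
      · intro m hm hnm
        rw [Finset.mem_range] at hm hnm
        have hzero : t + 1 - (s + m) = 0 := by omega
        have : f (s + m) = 0 := by rw [hf]; simp [hzero]
        rw [this, mul_zero]
    rw [step3]
    -- step 4: apply the key identity
    have step4 : ∀ m ∈ Finset.range (t - s + 1), ((n - s).choose m : ℝ) * f (s + m)
        = ((n : ℝ)⁻¹) ^ s * ∑ j ∈ Finset.range ((t - s) + 1 - m),
            (-1 : ℝ) ^ j * ((n - s).choose m : ℝ) * (((n - s) - m).choose j : ℝ)
              * ((n : ℝ)⁻¹) ^ (m + j) := by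
      intro m hm
      rw [Finset.mem_range] at hm
      have hrange : t + 1 - (s + m) = (t - s) + 1 - m := by omega
      rw [hf]
      simp only
      rw [hrange, Finset.mul_sum, Finset.mul_sum]
      refine Finset.sum_congr rfl fun j hj => ?_
      have hsub2 : n - (s + m) = (n - s) - m := by omega
      rw [hsub2]
      have hne : (n : ℝ) ^ (s + m + j) ≠ 0 := by positivity
      field_simp
      rw [mul_assoc _ _ ((1 / (n:ℝ)) ^ (m + j)), ← pow_add, ← add_assoc, mul_assoc, ← mul_pow,
        mul_one_div_cancel (ne_of_gt hn0), one_pow, mul_one]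
    rw [Finset.sum_congr rfl step4, ← Finset.mul_sum]
    rw [key_identity (n - s) (t - s) (by omega) ((n : ℝ)⁻¹)]
    rw [mul_one, inv_pow]
  -- assemble
  refine ⟨fun S => f S.card, fun S => hpos S.card, ?_, ?_, ?_, hmarg, ?_⟩
  · -- sums to 1
    have h0 := hmarg ∅ (by simp)
    rw [Finset.card_empty, pow_zero, inv_one] at h0
    rw [← h0]
    refine (Finset.sum_congr ?_ fun _ _ => rfl)
    rw [Finset.filter_true_of_mem]
    intro T _
    exact Finset.empty_subset T
  · -- support
    intro S hcard
    have hzero : t + 1 - S.card = 0 := by omega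
    rw [hf]; simp [hzero]
  · -- symmetric
    intro S T h
    simp only [h]
  · -- empty set probability
    have hempty : (fun S : Finset (Fin n) => f S.card) ∅ = ∑ b ∈ Finset.range (t + 1),
        (-1 : ℝ) ^ b * (n.choose b : ℝ) / (n : ℝ) ^ b := by
      simp only [Finset.card_empty, hf, Nat.sub_zero, zero_add]
    rw [ge_iff_le, hempty]
    -- termwise bound
    have hterm : ∀ b ∈ Finset.range (t + 1),
        (-1 : ℝ) ^ b / (b.factorial : ℝ) - (-1 : ℝ) ^ b * (n.choose b : ℝ) / (n : ℝ) ^ b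
          ≤ (t : ℝ) ^ 2 / (n : ℝ) := by
      intro b hb
      rw [Finset.mem_range] at hb
      have hbn : b ≤ n := by omega
      have hbt : b ≤ t := by omega
      have hP : (0 : ℝ) < (n : ℝ) ^ b := by positivity
      have hB : (1 : ℝ) ≤ (b.factorial : ℝ) := by exact_mod_cast Nat.succ_le_of_lt (Nat.factorial_pos b)
      have hB0 : (0 : ℝ) < (b.factorial : ℝ) := by linarith
      have hbtr : (b : ℝ) ^ 2 ≤ (t : ℝ) ^ 2 := by
        have : (b : ℝ) ≤ (t : ℝ) := by exact_mod_cast hbt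
        nlinarith [Nat.cast_nonneg (α := ℝ) b]
      have hD : ((n.choose b : ℝ)) * (b.factorial : ℝ) = (n.descFactorial b : ℝ) := by
        rw [Nat.descFactorial_eq_factorial_mul_choose]
        push_cast
        ring
      rcases Nat.even_or_odd b with hbe | hbo
      · -- even case: use Bernoulli lower bound on descFactorial
        have hsign : (-1 : ℝ) ^ b = 1 := Even.neg_one_pow hbe
        rw [hsign, one_mul, one_div]
        -- descFactorial lower bound
        have hdesc1 : ((n - b : ℕ) : ℝ) ^ b ≤ (n.descFactorial b : ℝ) := by
          have h1 : (n - b) ^ b ≤ n.descFactorial b :=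
            le_trans (Nat.pow_le_pow_left (by omega) b) (n.pow_sub_le_descFactorial b)
          exact_mod_cast h1
        have hcast : ((n - b : ℕ) : ℝ) = (n : ℝ) - (b : ℝ) := Nat.cast_sub hbn
        have hbern : (n : ℝ) ^ b * (1 - (b : ℝ) ^ 2 / n) ≤ ((n : ℝ) - b) ^ b := by
          have ha : (-2 : ℝ) ≤ -((b : ℝ) / n) := by
            have h1 : (b : ℝ) / n ≤ 1 := by
              rw [div_le_one hn0]; exact_mod_cast hbn
            linarith
          have hber := one_add_mul_le_pow ha b
          have hval : (1 : ℝ) + -((b : ℝ) / n) = ((n : ℝ) - b) / n := by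
            field_simp
            ring
          rw [hval] at hber
          have hexp : (((n : ℝ) - b) / n) ^ b = ((n : ℝ) - b) ^ b / (n : ℝ) ^ b := by
            rw [div_pow]
          rw [hexp] at hber
          have h2 := mul_le_mul_of_nonneg_right hber hP.le
          rw [div_mul_cancel₀ _ (ne_of_gt hP)] at h2
          calc (n : ℝ) ^ b * (1 - (b : ℝ) ^ 2 / n)
              = (1 + (b : ℝ) * -((b : ℝ) / n)) * (n : ℝ) ^ b := by ring
            _ ≤ ((n : ℝ) - b) ^ b := h2
        have hDP : (n : ℝ) ^ b - (n : ℝ) ^ b * ((b : ℝ) ^ 2 / n) ≤ (n.descFactorial b : ℝ) := by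
          rw [hcast] at hdesc1
          nlinarith
        -- now conclude
        have hCh : (n.choose b : ℝ) = (n.descFactorial b : ℝ) / (b.factorial : ℝ) := by
          rw [eq_div_iff (ne_of_gt hB0)]; exact hD
        have hval2 : ((b.factorial : ℝ))⁻¹ - (n.choose b : ℝ) / (n : ℝ) ^ b
            = ((n : ℝ) ^ b - (n.descFactorial b : ℝ)) / ((b.factorial : ℝ) * (n : ℝ) ^ b) := by
          rw [hCh]
          field_simp
        rw [hval2, div_le_div_iff₀ (by positivity) hn0]
        have hfrac : ((n : ℝ) ^ b - (n.descFactorial b : ℝ)) ≤ (n : ℝ) ^ b * ((b : ℝ) ^ 2 / n) := by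
          linarith
        have e1 : ((n : ℝ) ^ b - (n.descFactorial b : ℝ)) * (n : ℝ)
            ≤ ((n : ℝ) ^ b * ((b : ℝ) ^ 2 / n)) * (n : ℝ) :=
          mul_le_mul_of_nonneg_right hfrac hn0.le
        have e2 : ((n : ℝ) ^ b * ((b : ℝ) ^ 2 / n)) * (n : ℝ) = (b : ℝ) ^ 2 * (n : ℝ) ^ b := by
          field_simp
        rw [e2] at e1
        have e4 : (b : ℝ) ^ 2 * (n : ℝ) ^ b ≤ (t : ℝ) ^ 2 * (n : ℝ) ^ b :=
          mul_le_mul_of_nonneg_right hbtr hP.le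
        have e5 : (t : ℝ) ^ 2 * (n : ℝ) ^ b ≤ (t : ℝ) ^ 2 * ((b.factorial : ℝ) * (n : ℝ) ^ b) := by
          have e6 : (n : ℝ) ^ b ≤ (b.factorial : ℝ) * (n : ℝ) ^ b := by nlinarith
          have ht0 : (0 : ℝ) ≤ (t : ℝ) ^ 2 := by positivity
          exact mul_le_mul_of_nonneg_left e6 ht0
        linarith
      · -- odd case: the term is nonpositive
        have hsign : (-1 : ℝ) ^ b = -1 := Odd.neg_one_pow hbo
        rw [hsign]
        have hub : (n.choose b : ℝ) / (n : ℝ) ^ b ≤ 1 / (b.factorial : ℝ) := by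
          rw [div_le_div_iff₀ hP hB0]
          have h1 : n.descFactorial b ≤ n ^ b := Nat.descFactorial_le_pow n b
          have h1r : (n.descFactorial b : ℝ) ≤ (n : ℝ) ^ b := by exact_mod_cast h1
          nlinarith [hD]
        have hpos2 : (0 : ℝ) ≤ (t : ℝ) ^ 2 / n := by positivity
        have : -1 / (b.factorial : ℝ) - -1 * (n.choose b : ℝ) / (n : ℝ) ^ b
            = (n.choose b : ℝ) / (n : ℝ) ^ b - 1 / (b.factorial : ℝ) := by ring
        rw [this]
        linarith
    -- sum the termwise bounds
    have hsum2 := Finset.sum_le_sum hterm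
    rw [Finset.sum_sub_distrib] at hsum2
    rw [Finset.sum_const, Finset.card_range] at hsum2
    have hfinal : (t + 1) • ((t : ℝ) ^ 2 / n) ≤ (((t : ℝ) + 1) * (t : ℝ) ^ 2 + 1) / n := by
      rw [nsmul_eq_mul]
      push_cast
      rw [mul_div_assoc', div_le_div_iff₀ hn0 hn0]
      nlinarith [hn0]
    have h5 : ∑ b ∈ Finset.range (t + 1), (-1 : ℝ) ^ b / (b.factorial : ℝ)
        - ∑ b ∈ Finset.range (t + 1), (-1 : ℝ) ^ b * (n.choose b : ℝ) / (n : ℝ) ^ b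
        ≤ (((t : ℝ) + 1) * (t : ℝ) ^ 2 + 1) / n := le_trans hsum2 hfinal
    linarith
end

section
/- Let g = (√5 − 1)/2 and let F : [0,1] → ℝ be a measurable function satisfying t/(1+t) ≤ F(t) ≤ t for all t ∈ [0,1]. Then ∫_{g}^{1} F(t) dt − ∫_{0}^{g} F(t)/(1+t)² dt ≥ 3 − √5 − ln 2. -/
open Real MeasureTheory intervalIntegral Set

/-- With `g = (√5 - 1)/2`, for any measurable `F` with
`t/(1+t) ≤ F t ≤ t` on `[0,1]`,
`∫_g^1 F(t) dt - ∫_0^g F(t)/(1+t)² dt ≥ 3 - √5 - ln 2`. -/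
theorem stmt_16 (g : ℝ) (hg : g = (Real.sqrt 5 - 1) / 2)
    (F : ℝ → ℝ) (hF : Measurable F)
    (hlb : ∀ t ∈ Set.Icc (0 : ℝ) 1, t / (1 + t) ≤ F t)
    (hub : ∀ t ∈ Set.Icc (0 : ℝ) 1, F t ≤ t) :
    (∫ t in g..1, F t) - ∫ t in (0:ℝ)..g, F t / (1 + t) ^ 2
      ≥ 3 - Real.sqrt 5 - Real.log 2 := by
  have h5 : Real.sqrt 5 ^ 2 = 5 := Real.sq_sqrt (by norm_num)
  have h1lt : (1:ℝ) < Real.sqrt 5 := by nlinarith [Real.sqrt_nonneg 5]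
  have h3gt : Real.sqrt 5 < 3 := by nlinarith [Real.sqrt_nonneg 5]
  have hg0 : 0 < g := by rw [hg]; linarith
  have hg1 : g < 1 := by rw [hg]; linarith
  have hgg : g * (1 + g) = 1 := by rw [hg]; nlinarith
  have hpos : ∀ t ∈ Set.Icc (0:ℝ) 1, (0:ℝ) < 1 + t := fun t ht => by
    have := ht.1; linarith
  -- continuity of the comparison integrands
  have hc1 : ContinuousOn (fun t : ℝ => t / (1 + t)) (Set.uIcc g 1) := by
    apply ContinuousOn.div continuousOn_id (by fun_prop)
    intro t ht
    rw [Set.uIcc_of_le hg1.le] at ht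
    have h : (0:ℝ) < 1 + t := by linarith [ht.1]
    exact h.ne'
  have hc2 : ContinuousOn (fun t : ℝ => t / (1 + t) ^ 2) (Set.uIcc 0 g) := by
    apply ContinuousOn.div continuousOn_id (by fun_prop)
    intro t ht
    rw [Set.uIcc_of_le hg0.le] at ht
    have h : (0:ℝ) < 1 + t := by linarith [ht.1]
    exact (pow_pos h 2).ne'
  -- integrability of F on [g,1]
  have hFint : IntervalIntegrable F volume g 1 := by
    rw [intervalIntegrable_iff_integrableOn_Icc_of_le hg1.le]
    apply Measure.integrableOn_of_bounded (M := 1) (by simp) hF.aestronglyMeasurable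
    rw [ae_restrict_iff' measurableSet_Icc]
    refine ae_of_all _ fun t ht => ?_
    have ht' : t ∈ Set.Icc (0:ℝ) 1 := ⟨le_trans hg0.le ht.1, ht.2⟩
    have h1 := hlb t ht'
    have h2 := hub t ht'
    have h3 : 0 ≤ t / (1 + t) := div_nonneg ht'.1 (hpos t ht').le
    rw [Real.norm_eq_abs, abs_le]
    constructor <;> linarith [ht'.2]
  -- integrability of F/(1+t)^2 on [0,g]
  have hFint2 : IntervalIntegrable (fun t => F t / (1 + t) ^ 2) volume 0 g := by
    rw [intervalIntegrable_iff_integrableOn_Icc_of_le hg0.le]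
    apply Measure.integrableOn_of_bounded (M := 1) (by simp)
      ((hF.div (by fun_prop)).aestronglyMeasurable)
    rw [ae_restrict_iff' measurableSet_Icc]
    refine ae_of_all _ fun t ht => ?_
    have ht' : t ∈ Set.Icc (0:ℝ) 1 := ⟨ht.1, le_trans ht.2 hg1.le⟩
    have h1 := hlb t ht'
    have h2 := hub t ht'
    have hp := hpos t ht'
    have hF0 : 0 ≤ F t := le_trans (div_nonneg ht'.1 hp.le) h1
    have hsq : (1:ℝ) ≤ (1 + t) ^ 2 := by nlinarith [ht'.1]
    rw [Real.norm_eq_abs, Pi.div_apply, abs_of_nonneg (div_nonneg hF0 (by positivity))]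
    calc F t / (1 + t) ^ 2 ≤ F t := div_le_self hF0 hsq
      _ ≤ 1 := le_trans h2 ht'.2
  -- comparison integrals are intervalIntegrable
  have hI1 : IntervalIntegrable (fun t : ℝ => t / (1 + t)) volume g 1 :=
    hc1.intervalIntegrable
  have hI2 : IntervalIntegrable (fun t : ℝ => t / (1 + t) ^ 2) volume 0 g :=
    hc2.intervalIntegrable
  -- monotonicity
  have hmono1 : (∫ t in g..1, t / (1 + t)) ≤ ∫ t in g..1, F t := by
    apply intervalIntegral.integral_mono_on hg1.le hI1 hFint
    intro t ht
    exact hlb t ⟨le_trans hg0.le ht.1, ht.2⟩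
  have hmono2 : (∫ t in (0:ℝ)..g, F t / (1 + t) ^ 2) ≤ ∫ t in (0:ℝ)..g, t / (1 + t) ^ 2 := by
    apply intervalIntegral.integral_mono_on hg0.le hFint2 hI2
    intro t ht
    have ht' : t ∈ Set.Icc (0:ℝ) 1 := ⟨ht.1, le_trans ht.2 hg1.le⟩
    have hp := hpos t ht'
    exact div_le_div_of_nonneg_right (hub t ht') (pow_pos hp 2).le |>.trans (le_of_eq rfl)
  -- FTC computations
  have hcomp1 : (∫ t in g..1, t / (1 + t))
      = (1 - Real.log 2) - (g - Real.log (1 + g)) := by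
    have : ∀ t ∈ Set.uIcc g 1,
        HasDerivAt (fun u : ℝ => u - Real.log (1 + u)) (t / (1 + t)) t := by
      intro t ht
      rw [Set.uIcc_of_le hg1.le] at ht
      have hp : (0:ℝ) < 1 + t := by have := ht.1; linarith
      have h := ((hasDerivAt_id t).const_add 1).log hp.ne'
      have h2 := (hasDerivAt_id t).sub h
      convert h2 using 1
      · rfl
      · rfl
      · rfl
      simp only [id]
      field_simp
      ring
    rw [intervalIntegral.integral_eq_sub_of_hasDerivAt this hI1]
    norm_num
  have hcomp2 : (∫ t in (0:ℝ)..g, t / (1 + t) ^ 2)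
      = (Real.log (1 + g) + 1 / (1 + g)) - 1 := by
    have : ∀ t ∈ Set.uIcc (0:ℝ) g,
        HasDerivAt (fun u : ℝ => Real.log (1 + u) + 1 / (1 + u)) (t / (1 + t) ^ 2) t := by
      intro t ht
      rw [Set.uIcc_of_le hg0.le] at ht
      have hp : (0:ℝ) < 1 + t := by have := ht.1; linarith
      have h1 := ((hasDerivAt_id t).const_add 1).log hp.ne'
      have h2 : HasDerivAt (fun u : ℝ => 1 / (1 + u)) (-(1 / (1 + t) ^ 2)) t := by
        have := ((hasDerivAt_id t).const_add 1).inv hp.ne'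
        simpa [one_div, neg_div, Pi.inv_def] using this
      have h3 := h1.add h2
      convert h3 using 1
      · rfl
      · rfl
      · rfl
      simp only [id]
      field_simp
      ring
    rw [intervalIntegral.integral_eq_sub_of_hasDerivAt this hI2]
    norm_num
  -- key identity: 1/(1+g) = g
  have hginv : 1 / (1 + g) = g := by
    field_simp
    linarith [hgg]
  have hgval : 3 - Real.sqrt 5 = 2 - 2 * g := by rw [hg]; ring
  calc (∫ t in g..1, F t) - ∫ t in (0:ℝ)..g, F t / (1 + t) ^ 2
      ≥ (∫ t in g..1, t / (1 + t)) - ∫ t in (0:ℝ)..g, t / (1 + t) ^ 2 := by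
        linarith
    _ = ((1 - Real.log 2) - (g - Real.log (1 + g)))
        - ((Real.log (1 + g) + 1 / (1 + g)) - 1) := by rw [hcomp1, hcomp2]
    _ = 2 - Real.log 2 - 2 * g := by rw [hginv]; ring
    _ = 3 - Real.sqrt 5 - Real.log 2 := by rw [hgval]; ring
end

section
/- Let n ≥ 5 be odd and consider the complete graph K_n. Let R be the random edge set defined as follows: with probability n(n−1)/((n+3)(n−2)), choose a cycle of length (n+3)/2 in K_n uniformly at random and let R be its edge set; otherwise let R = ∅. Then for every edge e of K_n, Pr[e ∈ R] = 1/(n−2), and for every pair of distinct edges e ≠ f, Pr[e ∈ R and f ∈ R] = 1/(n−2)²; that is, the events {e ∈ R} over edges e are pairwise independent with marginals 1/(n−2). -/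
open Finset
set_option linter.unusedSectionVars false
set_option linter.unusedVariables false
set_option maxHeartbeats 1000000

-- from t1.lean
lemma exists_perm_comp {α β : Type*} [Fintype α] [Fintype β] (f g : α ↪ β) :
    ∃ σ : Equiv.Perm β, ∀ a, σ (f a) = g a := by
  classical
  have hc : Fintype.card ((Set.range f)ᶜ : Set β) = Fintype.card ((Set.range g)ᶜ : Set β) := by
    rw [Fintype.card_compl_set, Fintype.card_compl_set, Fintype.card_range, Fintype.card_range]
  obtain ⟨ec⟩ := Fintype.card_eq.mp hc
  refine ⟨((Equiv.Set.sumCompl (Set.range f)).symm.trans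
    ((((Equiv.ofInjective f f.injective).symm.trans
        (Equiv.ofInjective g g.injective)).sumCongr ec).trans
      (Equiv.Set.sumCompl (Set.range g)))), fun a => ?_⟩
  have hmem : f a ∈ Set.range (⇑f) := Set.mem_range_self a
  have h1 := Equiv.Set.sumCompl_symm_apply_of_mem hmem
  simp [h1, Equiv.ofInjective_symm_apply]

-- from t2.lean

lemma exists_perm_three {n : ℕ} {a b c a' b' c' : Fin n} (hab : a ≠ b) (hac : a ≠ c)
    (hbc : b ≠ c) (hab' : a' ≠ b') (hac' : a' ≠ c') (hbc' : b' ≠ c') :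
    ∃ σ : Equiv.Perm (Fin n), σ a = a' ∧ σ b = b' ∧ σ c = c' := by
  have h1 : Function.Injective ![a, b, c] := by
    intro i j hij; fin_cases i <;> fin_cases j <;> simp_all
  have h2 : Function.Injective ![a', b', c'] := by
    intro i j hij; fin_cases i <;> fin_cases j <;> simp_all
  obtain ⟨σ, hσ⟩ := exists_perm_comp ⟨![a, b, c], h1⟩ ⟨![a', b', c'], h2⟩
  exact ⟨σ, by simpa using hσ 0, by simpa using hσ 1, by simpa using hσ 2⟩

lemma exists_perm_two {n : ℕ} {a b a' b' : Fin n} (hab : a ≠ b) (hab' : a' ≠ b') :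
    ∃ σ : Equiv.Perm (Fin n), σ a = a' ∧ σ b = b' := by
  have h1 : Function.Injective ![a, b] := by
    intro i j hij; fin_cases i <;> fin_cases j <;> simp_all
  have h2 : Function.Injective ![a', b'] := by
    intro i j hij; fin_cases i <;> fin_cases j <;> simp_all
  obtain ⟨σ, hσ⟩ := exists_perm_comp ⟨![a, b], h1⟩ ⟨![a', b'], h2⟩
  exact ⟨σ, by simpa using hσ 0, by simpa using hσ 1⟩

lemma exists_perm_four {n : ℕ} {a b c d a' b' c' d' : Fin n} (hab : a ≠ b) (hac : a ≠ c)
    (had : a ≠ d) (hbc : b ≠ c) (hbd : b ≠ d) (hcd : c ≠ d)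
    (hab' : a' ≠ b') (hac' : a' ≠ c') (had' : a' ≠ d') (hbc' : b' ≠ c') (hbd' : b' ≠ d')
    (hcd' : c' ≠ d') :
    ∃ σ : Equiv.Perm (Fin n), σ a = a' ∧ σ b = b' ∧ σ c = c' ∧ σ d = d' := by
  have h1 : Function.Injective ![a, b, c, d] := by
    intro i j hij; fin_cases i <;> fin_cases j <;> simp_all
  have h2 : Function.Injective ![a', b', c', d'] := by
    intro i j hij; fin_cases i <;> fin_cases j <;> simp_all
  obtain ⟨σ, hσ⟩ := exists_perm_comp ⟨![a, b, c, d], h1⟩ ⟨![a', b', c', d'], h2⟩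
  exact ⟨σ, by simpa using hσ 0, by simpa using hσ 1, by simpa using hσ 2, by simpa using hσ 3⟩

lemma zmod_ne_zero {l : ℕ} (k : ℕ) (hk : k ≠ 0) (hkl : k < l) : (k : ZMod l) ≠ 0 := by
  intro h
  rw [ZMod.natCast_eq_zero_iff] at h
  exact absurd (Nat.le_of_dvd (Nat.pos_of_ne_zero hk) h) (by omega)

lemma sym2_rep {α : Type*} (e : Sym2 α) : ∃ a b, e = s(a, b) := by
  induction e using Sym2.inductionOn with
  | hf a b => exact ⟨a, b, rfl⟩

-- from t3.lean


section Cyc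
variable {n l : ℕ} [NeZero l] {v : ZMod l → Fin n}

lemma zmod_one_ne (hl4 : 4 ≤ l) : (1 : ZMod l) ≠ 0 := by
  have := zmod_ne_zero (l := l) 1 one_ne_zero (by omega); simpa using this

lemma zmod_two_ne (hl4 : 4 ≤ l) : (2 : ZMod l) ≠ 0 := by
  have := zmod_ne_zero (l := l) 2 two_ne_zero (by omega); push_cast at this; exact this

lemma cyc_inj (hl4 : 4 ≤ l) (hv : Function.Injective v) :
    Function.Injective (fun i : ZMod l => s(v i, v (i + 1))) := by
  intro i j hij
  simp only [Sym2.eq_iff] at hij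
  rcases hij with ⟨h1, h2⟩ | ⟨h1, h2⟩
  · exact hv h1
  · have e1 : i = j + 1 := hv h1
    have e2 : i + 1 = j := hv h2
    exfalso
    apply zmod_two_ne hl4
    have h : i = i + 1 + 1 := by conv_lhs => rw [e1, ← e2]
    rw [add_assoc] at h
    have h2 : (1 + 1 : ZMod l) = 0 := left_eq_add.mp h
    rw [one_add_one_eq_two] at h2
    exact h2

lemma cyc_nondiag (hl4 : 4 ≤ l) (hv : Function.Injective v) (i : ZMod l) :
    ¬ (s(v i, v (i + 1))).IsDiag := by
  rw [Sym2.mk_isDiag_iff]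
  intro h
  exact zmod_one_ne hl4 (left_eq_add.mp (hv h))

lemma cyc_adj_iff (hl4 : 4 ≤ l) (hv : Function.Injective v) (i j : ZMod l) :
    (∃ a, a ∈ s(v i, v (i + 1)) ∧ a ∈ s(v j, v (j + 1))) ↔ (j = i ∨ j = i + 1 ∨ j = i - 1) := by
  constructor
  · rintro ⟨a, ha, hb⟩
    rw [Sym2.mem_iff] at ha hb
    rcases ha with rfl | rfl <;> rcases hb with h | h
    · exact Or.inl (hv h).symm
    · right; right; exact eq_sub_of_add_eq (hv h).symm
    · right; left; exact (hv h).symm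
    · left; exact (add_right_cancel (hv h)).symm
  · rintro (rfl | rfl | rfl)
    · exact ⟨v j, by simp, by simp⟩
    · exact ⟨v (i + 1), by simp, by simp⟩
    · refine ⟨v i, by simp, ?_⟩
      rw [Sym2.mem_iff]
      right; rw [sub_add_cancel]
end Cyc

-- from t4.lean


section C2
variable {n l : ℕ} [NeZero l] {v : ZMod l → Fin n}

lemma zmod_graph_card (g : ZMod l → ZMod l) :
    ((univ ×ˢ univ : Finset (ZMod l × ZMod l)).filter (fun q => q.2 = g q.1)).card = l := by
  classical
  have h := Finset.card_nbij (s := (univ : Finset (ZMod l)))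
    (t := (univ ×ˢ univ : Finset (ZMod l × ZMod l)).filter (fun q => q.2 = g q.1))
    (fun i => (i, g i)) ?_ ?_ ?_
  · rw [← h, card_univ, ZMod.card]
  · intro i _; simp
  · intro i _ j _ hij; simpa using congrArg Prod.fst hij
  · rintro ⟨i, j⟩ hq
    simp only [coe_filter, Set.mem_setOf_eq, mem_product] at hq
    exact ⟨i, by simp, by simp [hq.2]⟩

lemma zmod_adj_card (hl4 : 4 ≤ l) :
    ((univ ×ˢ univ : Finset (ZMod l × ZMod l)).filter
      (fun q => q.2 = q.1 + 1 ∨ q.2 = q.1 - 1)).card = 2 * l := by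
  classical
  rw [filter_or, card_union_of_disjoint, zmod_graph_card (fun i => i + 1),
    zmod_graph_card (fun i => i - 1)]
  · ring
  · rw [disjoint_left]
    rintro ⟨i, j⟩ h1 h2
    simp only [mem_filter] at h1 h2
    apply zmod_two_ne hl4
    linear_combination h2.2 - h1.2

lemma zmod_seq_card (hl4 : 4 ≤ l) :
    ((univ ×ˢ univ : Finset (ZMod l × ZMod l)).filter
      (fun q => q.2 = q.1 ∨ q.2 = q.1 + 1 ∨ q.2 = q.1 - 1)).card = 3 * l := by
  classical
  rw [filter_or, card_union_of_disjoint, zmod_graph_card (fun i => i), zmod_adj_card hl4]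
  · ring
  · rw [disjoint_left]
    rintro ⟨i, j⟩ h1 h2
    simp only [mem_filter] at h1 h2
    rcases h2.2 with h | h
    · exact zmod_one_ne hl4 (by linear_combination h1.2 - h)
    · exact zmod_one_ne hl4 (by linear_combination h - h1.2)

lemma zmod_dis_card (hl4 : 4 ≤ l) :
    ((univ ×ˢ univ : Finset (ZMod l × ZMod l)).filter
      (fun q => ¬(q.2 = q.1 ∨ q.2 = q.1 + 1 ∨ q.2 = q.1 - 1))).card = l * l - 3 * l := by
  classical
  have h := Finset.card_filter_add_card_filter_not
    (s := (univ ×ˢ univ : Finset (ZMod l × ZMod l)))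
    (p := fun q => q.2 = q.1 ∨ q.2 = q.1 + 1 ∨ q.2 = q.1 - 1)
  rw [zmod_seq_card hl4] at h
  have hc : (univ ×ˢ univ : Finset (ZMod l × ZMod l)).card = l * l := by
    rw [card_product, card_univ, ZMod.card]
  omega

end C2

-- from t5.lean


section C3
variable {n l : ℕ} [NeZero l] {v : ZMod l → Fin n}

lemma cyc_card_E (hl4 : 4 ≤ l) (hv : Function.Injective v) :
    (image (fun i : ZMod l => s(v i, v (i + 1))) univ).card = l := by
  rw [card_image_of_injective _ (cyc_inj hl4 hv), card_univ, ZMod.card]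

lemma cyc_adj_pairs_card (hl4 : 4 ≤ l) (hv : Function.Injective v) :
    (((image (fun i : ZMod l => s(v i, v (i + 1))) univ) ×ˢ
      (image (fun i : ZMod l => s(v i, v (i + 1))) univ)).filter
      (fun q => q.1 ≠ q.2 ∧ ∃ a, a ∈ q.1 ∧ a ∈ q.2)).card = 2 * l := by
  classical
  have h := Finset.card_nbij
    (s := ((univ ×ˢ univ : Finset (ZMod l × ZMod l)).filter
      (fun q => q.2 = q.1 + 1 ∨ q.2 = q.1 - 1)))
    (t := (((image (fun i : ZMod l => s(v i, v (i + 1))) univ) ×ˢ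
      (image (fun i : ZMod l => s(v i, v (i + 1))) univ)).filter
      (fun q => q.1 ≠ q.2 ∧ ∃ a, a ∈ q.1 ∧ a ∈ q.2)))
    (fun q => (s(v q.1, v (q.1 + 1)), s(v q.2, v (q.2 + 1)))) ?_ ?_ ?_
  · rw [← h, zmod_adj_card hl4]
  · rintro ⟨i, j⟩ hq
    rw [mem_coe, mem_filter] at hq
    replace hq := hq.2
    rw [mem_coe, mem_filter]
    refine ⟨mem_product.mpr ⟨mem_image_of_mem _ (mem_univ i), mem_image_of_mem _ (mem_univ j)⟩,
      ?_, ?_⟩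
    · intro hh
      have heq := cyc_inj hl4 hv hh
      rcases hq with h' | h' <;> rw [← heq] at h'
      · exact zmod_one_ne hl4 (by linear_combination -h')
      · exact zmod_one_ne hl4 (by linear_combination h')
    · exact (cyc_adj_iff hl4 hv i j).mpr (Or.inr hq)
  · rintro ⟨i, j⟩ _ ⟨i', j'⟩ _ hq
    have h1 := congrArg Prod.fst hq
    have h2 := congrArg Prod.snd hq
    simp only at h1 h2
    exact Prod.ext (cyc_inj hl4 hv h1) (cyc_inj hl4 hv h2)
  · rintro ⟨e, f⟩ hq
    simp only [coe_filter, Set.mem_setOf_eq, mem_product, mem_image, mem_univ, true_and] at hq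
    obtain ⟨⟨⟨i, rfl⟩, ⟨j, rfl⟩⟩, hne, hsh⟩ := hq
    have hj := (cyc_adj_iff hl4 hv i j).mp hsh
    have hij : j ≠ i := fun hh => hne (by rw [hh])
    refine ⟨(i, j), ?_, rfl⟩
    rw [coe_filter]
    exact Set.mem_setOf_eq ▸ ⟨mem_product.mpr ⟨mem_univ _, mem_univ _⟩, hj.resolve_left hij⟩

lemma cyc_dis_pairs_card (hl4 : 4 ≤ l) (hv : Function.Injective v) :
    (((image (fun i : ZMod l => s(v i, v (i + 1))) univ) ×ˢ
      (image (fun i : ZMod l => s(v i, v (i + 1))) univ)).filter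
      (fun q => q.1 ≠ q.2 ∧ ¬∃ a, a ∈ q.1 ∧ a ∈ q.2)).card = l * l - 3 * l := by
  classical
  have h := Finset.card_nbij
    (s := ((univ ×ˢ univ : Finset (ZMod l × ZMod l)).filter
      (fun q => ¬(q.2 = q.1 ∨ q.2 = q.1 + 1 ∨ q.2 = q.1 - 1))))
    (t := (((image (fun i : ZMod l => s(v i, v (i + 1))) univ) ×ˢ
      (image (fun i : ZMod l => s(v i, v (i + 1))) univ)).filter
      (fun q => q.1 ≠ q.2 ∧ ¬∃ a, a ∈ q.1 ∧ a ∈ q.2)))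
    (fun q => (s(v q.1, v (q.1 + 1)), s(v q.2, v (q.2 + 1)))) ?_ ?_ ?_
  · rw [← h, zmod_dis_card hl4]
  · rintro ⟨i, j⟩ hq
    rw [mem_coe, mem_filter] at hq
    replace hq := hq.2
    rw [mem_coe, mem_filter]
    refine ⟨mem_product.mpr ⟨mem_image_of_mem _ (mem_univ i), mem_image_of_mem _ (mem_univ j)⟩,
      ?_, ?_⟩
    · intro hh
      exact hq (Or.inl (cyc_inj hl4 hv hh).symm)
    · intro hsh
      exact hq ((cyc_adj_iff hl4 hv i j).mp hsh)
  · rintro ⟨i, j⟩ _ ⟨i', j'⟩ _ hq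
    have h1 := congrArg Prod.fst hq
    have h2 := congrArg Prod.snd hq
    simp only at h1 h2
    exact Prod.ext (cyc_inj hl4 hv h1) (cyc_inj hl4 hv h2)
  · rintro ⟨e, f⟩ hq
    simp only [coe_filter, Set.mem_setOf_eq, mem_product, mem_image, mem_univ, true_and] at hq
    obtain ⟨⟨⟨i, rfl⟩, ⟨j, rfl⟩⟩, hne, hsh⟩ := hq
    refine ⟨(i, j), ?_, rfl⟩
    rw [coe_filter]
    exact Set.mem_setOf_eq ▸ ⟨mem_product.mpr ⟨mem_univ _, mem_univ _⟩,
      fun hh => hsh ((cyc_adj_iff hl4 hv i j).mpr hh)⟩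

end C3

-- from t6.lean

section Kn
variable {n : ℕ}

lemma A_card :
    (univ.filter (fun e : Sym2 (Fin n) => ¬ e.IsDiag)).card = n.choose 2 := by
  classical
  rw [← Fintype.card_subtype, Sym2.card_subtype_not_diag, Fintype.card_fin]

lemma adj_count {a b : Fin n} (hab : a ≠ b) :
    ((univ.filter (fun e : Sym2 (Fin n) => ¬ e.IsDiag)).filter
      (fun f => s(a, b) ≠ f ∧ ∃ x, x ∈ s(a, b) ∧ x ∈ f)).card = 2 * (n - 2) := by
  classical
  have himg : (univ.filter (fun e : Sym2 (Fin n) => ¬ e.IsDiag)).filter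
      (fun f => s(a, b) ≠ f ∧ ∃ x, x ∈ s(a, b) ∧ x ∈ f)
      = (({a, b}ᶜ : Finset (Fin n)).image (fun x => s(a, x))) ∪
        (({a, b}ᶜ : Finset (Fin n)).image (fun x => s(b, x))) := by
    ext f
    simp only [mem_filter, mem_univ, true_and, mem_union, mem_image, mem_compl,
      mem_insert, mem_singleton]
    constructor
    · rintro ⟨hnd, hne, x, hx1, hx2⟩
      rw [Sym2.mem_iff] at hx1
      obtain ⟨y, rfl⟩ := Sym2.mem_iff_exists.mp hx2
      rcases hx1 with rfl | rfl
      · refine Or.inl ⟨y, ?_, rfl⟩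
        push_neg
        refine ⟨fun hy => hnd ?_, fun hy => hne ?_⟩
        · rw [hy]; exact Sym2.mk_isDiag_iff.mpr rfl
        · rw [hy]
      · refine Or.inr ⟨y, ?_, rfl⟩
        push_neg
        refine ⟨fun hy => hne ?_, fun hy => hnd ?_⟩
        · rw [hy, Sym2.eq_swap]
        · rw [hy]; exact Sym2.mk_isDiag_iff.mpr rfl
    · rintro (⟨y, hy, rfl⟩ | ⟨y, hy, rfl⟩) <;> push_neg at hy
      · refine ⟨fun hd => hy.1 (Sym2.mk_isDiag_iff.mp hd).symm, ?_, a, by simp, by simp⟩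
        intro hh
        exact hy.2 (Sym2.congr_right.mp hh.symm)
      · refine ⟨fun hd => hy.2 (Sym2.mk_isDiag_iff.mp hd).symm, ?_, b, by simp, by simp⟩
        intro hh
        rw [Sym2.eq_iff] at hh
        rcases hh with ⟨h1, h2⟩ | ⟨h1, h2⟩ <;> simp_all
  rw [himg, card_union_of_disjoint, card_image_of_injective, card_image_of_injective,
    card_compl]
  · rw [card_insert_of_notMem (by simpa using hab), card_singleton, Fintype.card_fin]
    omega
  · intro x y hxy; exact Sym2.congr_right.mp hxy
  · intro x y hxy; exact Sym2.congr_right.mp hxy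
  · rw [disjoint_left]
    rintro e he1 he2
    simp only [mem_image, mem_compl, mem_insert, mem_singleton] at he1 he2
    obtain ⟨x, hx, rfl⟩ := he1
    obtain ⟨y, hy, he⟩ := he2
    push_neg at hx hy
    rw [Sym2.eq_iff] at he
    rcases he with ⟨h1, h2⟩ | ⟨h1, h2⟩ <;> simp_all
end Kn

-- from t8.lean


section Kn2
variable {n : ℕ}

lemma dis_count {a b : Fin n} (hab : a ≠ b) :
    ((univ.filter (fun e : Sym2 (Fin n) => ¬ e.IsDiag)).filter
      (fun f => s(a, b) ≠ f ∧ ¬∃ x, x ∈ s(a, b) ∧ x ∈ f)).card + (2 * (n - 2) + 1)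
      = (univ.filter (fun e : Sym2 (Fin n) => ¬ e.IsDiag)).card := by
  classical
  have h1 := Finset.card_filter_add_card_filter_not
    (s := univ.filter (fun e : Sym2 (Fin n) => ¬ e.IsDiag)) (p := fun f => s(a, b) = f)
  have hff1 : (((univ.filter (fun e : Sym2 (Fin n) => ¬ e.IsDiag)).filter
        (fun f => ¬ s(a, b) = f)).filter (fun f => ∃ x, x ∈ s(a, b) ∧ x ∈ f))
      = (univ.filter (fun e : Sym2 (Fin n) => ¬ e.IsDiag)).filter
        (fun f => s(a, b) ≠ f ∧ ∃ x, x ∈ s(a, b) ∧ x ∈ f) := filter_filter _ _ _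
  have hff2 : (((univ.filter (fun e : Sym2 (Fin n) => ¬ e.IsDiag)).filter
        (fun f => ¬ s(a, b) = f)).filter (fun f => ¬∃ x, x ∈ s(a, b) ∧ x ∈ f))
      = (univ.filter (fun e : Sym2 (Fin n) => ¬ e.IsDiag)).filter
        (fun f => s(a, b) ≠ f ∧ ¬∃ x, x ∈ s(a, b) ∧ x ∈ f) := filter_filter _ _ _
  have h2 := Finset.card_filter_add_card_filter_not
    (s := (univ.filter (fun e : Sym2 (Fin n) => ¬ e.IsDiag)).filter (fun f => ¬ s(a, b) = f))
    (p := fun f => ∃ x, x ∈ s(a, b) ∧ x ∈ f)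
  rw [hff1, hff2, adj_count hab] at h2
  have e1 : (univ.filter (fun e : Sym2 (Fin n) => ¬ e.IsDiag)).filter (fun f => s(a, b) = f)
      = {s(a, b)} := by
    rw [Finset.filter_eq]
    simp [Sym2.mk_isDiag_iff, hab]
  rw [e1, card_singleton] at h1
  omega

lemma adj_rep {e f : Sym2 (Fin n)} (he : ¬e.IsDiag) (hf : ¬f.IsDiag) (hef : e ≠ f)
    (hsh : ∃ a, a ∈ e ∧ a ∈ f) :
    ∃ x y z : Fin n, x ≠ y ∧ x ≠ z ∧ y ≠ z ∧ e = s(x, y) ∧ f = s(x, z) := by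
  obtain ⟨a, hae, haf⟩ := hsh
  obtain ⟨y, rfl⟩ := Sym2.mem_iff_exists.mp hae
  obtain ⟨z, rfl⟩ := Sym2.mem_iff_exists.mp haf
  exact ⟨a, y, z, fun h => he (Sym2.mk_isDiag_iff.mpr h), fun h => hf (Sym2.mk_isDiag_iff.mpr h),
    fun h => hef (by rw [h]), rfl, rfl⟩

lemma dis_rep {e f : Sym2 (Fin n)} (he : ¬e.IsDiag) (hf : ¬f.IsDiag)
    (hdis : ¬∃ a, a ∈ e ∧ a ∈ f) :
    ∃ a b c d : Fin n, a ≠ b ∧ a ≠ c ∧ a ≠ d ∧ b ≠ c ∧ b ≠ d ∧ c ≠ d ∧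
      e = s(a, b) ∧ f = s(c, d) := by
  obtain ⟨a, b, rfl⟩ : ∃ a b, e = s(a, b) := by
    induction e using Sym2.inductionOn with | hf a b => exact ⟨a, b, rfl⟩
  obtain ⟨c, d, rfl⟩ : ∃ c d, f = s(c, d) := by
    induction f using Sym2.inductionOn with | hf a b => exact ⟨a, b, rfl⟩
  refine ⟨a, b, c, d, fun h => he (Sym2.mk_isDiag_iff.mpr h), ?_, ?_, ?_, ?_,
    fun h => hf (Sym2.mk_isDiag_iff.mpr h), rfl, rfl⟩
  · rintro rfl; exact hdis ⟨a, by simp, by simp⟩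
  · rintro rfl; exact hdis ⟨a, by simp, by simp⟩
  · rintro rfl; exact hdis ⟨b, by simp, by simp⟩
  · rintro rfl; exact hdis ⟨b, by simp, by simp⟩
end Kn2

-- from t7.lean

lemma card_prod_filter {α β : Type*} (s : Finset α) (t : Finset β) (P : α → β → Prop)
    [∀ a, DecidablePred (P a)] :
    ((s ×ˢ t).filter (fun q => P q.1 q.2)).card = ∑ e ∈ s, (t.filter (P e)).card := by
  rw [card_filter, Finset.sum_product]
  simp_rw [card_filter]

lemma double_count {α β : Type*} (s : Finset α) (t : Finset β) (Q : α → β → Prop)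
    [∀ a, DecidablePred (Q a)] [∀ b, DecidablePred (Q · b)] :
    ∑ x ∈ s, (t.filter (fun E => Q x E)).card = ∑ E ∈ t, (s.filter (fun x => Q x E)).card := by
  simp_rw [card_filter]
  exact Finset.sum_comm

def CycS (n l : ℕ) [NeZero l] : Set (Finset (Sym2 (Fin n))) :=
  {E | ∃ v : ZMod l → Fin n, Function.Injective v ∧
      E = Finset.image (fun i => s(v i, v (i + 1))) Finset.univ}

section Orb
variable {n l : ℕ} [NeZero l] [DecidablePred (· ∈ CycS n l)]

lemma CycS_map (σ : Equiv.Perm (Fin n)) {E : Finset (Sym2 (Fin n))} (hE : E ∈ CycS n l) :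
    E.image (Sym2.map σ) ∈ CycS n l := by
  obtain ⟨v, hv, rfl⟩ := hE
  refine ⟨σ ∘ v, σ.injective.comp hv, ?_⟩
  rw [Finset.image_image]
  apply Finset.image_congr
  intro i _
  simp [Sym2.map_pair_eq]

lemma image_symm_image (σ : Equiv.Perm (Fin n)) (E : Finset (Sym2 (Fin n))) :
    (E.image (Sym2.map σ.symm)).image (Sym2.map σ) = E := by
  rw [Finset.image_image]
  rw [show (Sym2.map ⇑σ ∘ Sym2.map ⇑σ.symm) = id from ?_]
  · exact Finset.image_id
  · funext x
    simp [Sym2.map_map]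

lemma image_symm_image' (σ : Equiv.Perm (Fin n)) (E : Finset (Sym2 (Fin n))) :
    (E.image (Sym2.map σ)).image (Sym2.map σ.symm) = E := by
  rw [Finset.image_image]
  rw [show (Sym2.map ⇑σ.symm ∘ Sym2.map ⇑σ) = id from ?_]
  · exact Finset.image_id
  · funext x
    simp [Sym2.map_map]

lemma count_map (σ : Equiv.Perm (Fin n)) (P : Finset (Sym2 (Fin n)) → Prop)
    (Q : Finset (Sym2 (Fin n)) → Prop) [DecidablePred P] [DecidablePred Q]
    (hPQ : ∀ E ∈ CycS n l, (P E ↔ Q (E.image (Sym2.map σ)))) :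
    ((univ.filter (· ∈ CycS n l)).filter P).card
      = ((univ.filter (· ∈ CycS n l)).filter Q).card := by
  classical
  refine Finset.card_bij' (fun E _ => E.image (Sym2.map σ))
    (fun E _ => E.image (Sym2.map σ.symm)) ?_ ?_ (fun E _ => image_symm_image' σ E)
    (fun E _ => image_symm_image σ E)
  · intro E hE
    rw [mem_filter, mem_filter] at hE ⊢
    exact ⟨⟨mem_univ _, CycS_map σ hE.1.2⟩, (hPQ E hE.1.2).mp hE.2⟩
  · intro E hE
    rw [mem_filter, mem_filter] at hE ⊢
    have h1 : E.image (Sym2.map σ.symm) ∈ CycS n l := CycS_map σ.symm hE.1.2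
    refine ⟨⟨mem_univ _, h1⟩, ?_⟩
    rw [hPQ _ h1, image_symm_image]
    exact hE.2
end Orb

-- from t9.lean




section Main
variable {n l : ℕ} [NeZero l] [DecidablePred (· ∈ CycS n l)]

lemma mem_image_sym2 {E : Finset (Sym2 (Fin n))} (σ : Equiv.Perm (Fin n)) (e : Sym2 (Fin n)) :
    e ∈ E ↔ Sym2.map σ e ∈ E.image (Sym2.map σ) := by
  constructor
  · exact fun h => mem_image_of_mem _ h
  · intro h
    obtain ⟨x, hx, hxe⟩ := mem_image.mp h
    rwa [← Sym2.map.injective σ.injective hxe]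

lemma E_subset_A {E : Finset (Sym2 (Fin n))} (hl4 : 4 ≤ l) (hE : E ∈ CycS n l) :
    (univ.filter (fun e : Sym2 (Fin n) => ¬ e.IsDiag)).filter (fun x => x ∈ E) = E := by
  obtain ⟨v, hv, rfl⟩ := hE
  ext x
  simp only [mem_filter, mem_univ, true_and]
  refine ⟨fun h => h.2, fun h => ⟨?_, h⟩⟩
  obtain ⟨i, _, rfl⟩ := mem_image.mp h
  exact cyc_nondiag hl4 hv i

lemma CycS_card_pos (hl4 : 4 ≤ l) (hln : l ≤ n) :
    0 < (univ.filter (· ∈ CycS n l)).card := by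
  rw [card_pos]
  have hemb : Nonempty (ZMod l ↪ Fin n) := by
    apply Function.Embedding.nonempty_of_card_le
    rwa [ZMod.card, Fintype.card_fin]
  obtain ⟨emb⟩ := hemb
  exact ⟨_, mem_filter.mpr ⟨mem_univ _, ⟨emb, emb.injective, rfl⟩⟩⟩

lemma N1_eq (hl4 : 4 ≤ l) {e : Sym2 (Fin n)} (he : ¬e.IsDiag) :
    ((univ.filter (· ∈ CycS n l)).filter (fun E => e ∈ E)).card * Nat.choose n 2
      = (univ.filter (· ∈ CycS n l)).card * l := by
  classical
  obtain ⟨a, b, rfl⟩ := sym2_rep e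
  have hab : a ≠ b := fun h => he (Sym2.mk_isDiag_iff.mpr h)
  have hconst : ∀ f ∈ univ.filter (fun e : Sym2 (Fin n) => ¬ e.IsDiag),
      ((univ.filter (· ∈ CycS n l)).filter (fun E => f ∈ E)).card
        = ((univ.filter (· ∈ CycS n l)).filter (fun E => s(a, b) ∈ E)).card := by
    intro f hf
    obtain ⟨c, d, rfl⟩ := sym2_rep f
    have hcd : c ≠ d := fun h => (mem_filter.mp hf).2 (Sym2.mk_isDiag_iff.mpr h)
    obtain ⟨σ, hσ1, hσ2⟩ := exists_perm_two hab hcd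
    refine (count_map σ _ _ ?_).symm
    intro E _
    rw [mem_image_sym2 σ s(a, b), Sym2.map_pair_eq, hσ1, hσ2]
  have hdc := double_count (univ.filter (fun e : Sym2 (Fin n) => ¬ e.IsDiag))
    (univ.filter (· ∈ CycS n l)) (fun x E => x ∈ E)
  rw [Finset.sum_congr rfl hconst, Finset.sum_const, smul_eq_mul] at hdc
  have hper : ∀ E ∈ univ.filter (· ∈ CycS n l),
      ((univ.filter (fun e : Sym2 (Fin n) => ¬ e.IsDiag)).filter (fun x => x ∈ E)).card = l := by
    intro E hE
    have hE' := (mem_filter.mp hE).2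
    rw [E_subset_A hl4 hE']
    obtain ⟨v, hv, rfl⟩ := hE'
    exact cyc_card_E hl4 hv
  rw [Finset.sum_congr rfl hper, Finset.sum_const, smul_eq_mul] at hdc
  rw [← A_card (n := n), mul_comm]
  exact hdc

lemma pair_filter_eq (hl4 : 4 ≤ l) {E : Finset (Sym2 (Fin n))} (hE : E ∈ CycS n l)
    (R : Sym2 (Fin n) → Sym2 (Fin n) → Prop) [∀ x, DecidablePred (R x)] :
    (((univ.filter (fun e : Sym2 (Fin n) => ¬ e.IsDiag)) ×ˢ
        (univ.filter (fun e : Sym2 (Fin n) => ¬ e.IsDiag))).filter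
      (fun q => R q.1 q.2)).filter (fun q => q.1 ∈ E ∧ q.2 ∈ E)
      = (E ×ˢ E).filter (fun q => R q.1 q.2) := by
  have hnd : ∀ x ∈ E, ¬ (x : Sym2 (Fin n)).IsDiag := by
    obtain ⟨v, hv, rfl⟩ := hE
    intro x hx
    obtain ⟨i, _, rfl⟩ := mem_image.mp hx
    exact cyc_nondiag hl4 hv i
  ext ⟨x, y⟩
  simp only [mem_filter, mem_product, mem_univ, true_and]
  constructor
  · rintro ⟨⟨_, hR⟩, hx, hy⟩
    exact ⟨⟨hx, hy⟩, hR⟩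
  · rintro ⟨⟨hx, hy⟩, hR⟩
    exact ⟨⟨⟨hnd x hx, hnd y hy⟩, hR⟩, hx, hy⟩

lemma N2adj_eq (hl4 : 4 ≤ l) {e f : Sym2 (Fin n)} (he : ¬e.IsDiag) (hf : ¬f.IsDiag)
    (hef : e ≠ f) (hsh : ∃ a, a ∈ e ∧ a ∈ f) :
    ((univ.filter (· ∈ CycS n l)).filter (fun E => e ∈ E ∧ f ∈ E)).card
        * (Nat.choose n 2 * (2 * (n - 2)))
      = (univ.filter (· ∈ CycS n l)).card * (2 * l) := by
  classical
  set A := univ.filter (fun e : Sym2 (Fin n) => ¬ e.IsDiag) with hAdef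
  -- constancy over adjacent pairs
  have hconst : ∀ q ∈ (A ×ˢ A).filter
      (fun q : Sym2 (Fin n) × Sym2 (Fin n) => q.1 ≠ q.2 ∧ ∃ a, a ∈ q.1 ∧ a ∈ q.2),
      ((univ.filter (· ∈ CycS n l)).filter (fun E => q.1 ∈ E ∧ q.2 ∈ E)).card
        = ((univ.filter (· ∈ CycS n l)).filter (fun E => e ∈ E ∧ f ∈ E)).card := by
    rintro ⟨e', f'⟩ hq
    rw [mem_filter, mem_product] at hq
    obtain ⟨⟨he'A, hf'A⟩, hne', hsh'⟩ := hq
    have he' := (mem_filter.mp he'A).2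
    have hf' := (mem_filter.mp hf'A).2
    obtain ⟨x, y, z, hxy, hxz, hyz, rfl, rfl⟩ := adj_rep he hf hef hsh
    obtain ⟨x', y', z', hxy', hxz', hyz', rfl, rfl⟩ := adj_rep he' hf' hne' hsh'
    obtain ⟨σ, hσ1, hσ2, hσ3⟩ := exists_perm_three hxy hxz hyz hxy' hxz' hyz'
    refine (count_map σ _ _ ?_).symm
    intro E _
    rw [mem_image_sym2 σ s(x, y), mem_image_sym2 σ s(x, z), Sym2.map_pair_eq,
      Sym2.map_pair_eq, hσ1, hσ2, hσ3]
  have hdc := double_count ((A ×ˢ A).filter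
      (fun q : Sym2 (Fin n) × Sym2 (Fin n) => q.1 ≠ q.2 ∧ ∃ a, a ∈ q.1 ∧ a ∈ q.2))
    (univ.filter (· ∈ CycS n l)) (fun q E => q.1 ∈ E ∧ q.2 ∈ E)
  rw [Finset.sum_congr rfl hconst, Finset.sum_const, smul_eq_mul] at hdc
  have hper : ∀ E ∈ univ.filter (· ∈ CycS n l),
      (((A ×ˢ A).filter
        (fun q : Sym2 (Fin n) × Sym2 (Fin n) => q.1 ≠ q.2 ∧ ∃ a, a ∈ q.1 ∧ a ∈ q.2)).filter
        (fun q => q.1 ∈ E ∧ q.2 ∈ E)).card = 2 * l := by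
    intro E hE
    have hE' := (mem_filter.mp hE).2
    rw [pair_filter_eq hl4 hE' (fun x y => x ≠ y ∧ ∃ a, a ∈ x ∧ a ∈ y)]
    obtain ⟨v, hv, rfl⟩ := hE'
    exact cyc_adj_pairs_card hl4 hv
  rw [Finset.sum_congr rfl hper, Finset.sum_const, smul_eq_mul] at hdc
  have hPadj : ((A ×ˢ A).filter
      (fun q : Sym2 (Fin n) × Sym2 (Fin n) => q.1 ≠ q.2 ∧ ∃ a, a ∈ q.1 ∧ a ∈ q.2)).card
      = Nat.choose n 2 * (2 * (n - 2)) := by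
    rw [card_prod_filter A A (fun x y => x ≠ y ∧ ∃ a, a ∈ x ∧ a ∈ y)]
    have hfib : ∀ e' ∈ A, (A.filter (fun y => e' ≠ y ∧ ∃ a, a ∈ e' ∧ a ∈ y)).card
        = 2 * (n - 2) := by
      intro e' he'A
      obtain ⟨a, b, rfl⟩ := sym2_rep e'
      have hab : a ≠ b := fun h => (mem_filter.mp he'A).2 (Sym2.mk_isDiag_iff.mpr h)
      exact adj_count hab
    rw [Finset.sum_congr rfl hfib, Finset.sum_const, smul_eq_mul, A_card]
  rw [hPadj] at hdc
  rw [mul_comm]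
  exact hdc

lemma N2dis_eq (hl4 : 4 ≤ l) {e f : Sym2 (Fin n)} (he : ¬e.IsDiag) (hf : ¬f.IsDiag)
    (hdis : ¬∃ a, a ∈ e ∧ a ∈ f) :
    ((univ.filter (· ∈ CycS n l)).filter (fun E => e ∈ E ∧ f ∈ E)).card
        * (Nat.choose n 2 * (Nat.choose n 2 - (2 * (n - 2) + 1)))
      = (univ.filter (· ∈ CycS n l)).card * (l * l - 3 * l) := by
  classical
  set A := univ.filter (fun e : Sym2 (Fin n) => ¬ e.IsDiag) with hAdef
  have hef : e ≠ f := by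
    rintro rfl
    obtain ⟨a, b, rfl⟩ := sym2_rep e
    exact hdis ⟨a, by simp, by simp⟩
  have hconst : ∀ q ∈ (A ×ˢ A).filter
      (fun q : Sym2 (Fin n) × Sym2 (Fin n) => q.1 ≠ q.2 ∧ ¬∃ a, a ∈ q.1 ∧ a ∈ q.2),
      ((univ.filter (· ∈ CycS n l)).filter (fun E => q.1 ∈ E ∧ q.2 ∈ E)).card
        = ((univ.filter (· ∈ CycS n l)).filter (fun E => e ∈ E ∧ f ∈ E)).card := by
    rintro ⟨e', f'⟩ hq
    rw [mem_filter, mem_product] at hq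
    obtain ⟨⟨he'A, hf'A⟩, hne', hsh'⟩ := hq
    have he' := (mem_filter.mp he'A).2
    have hf' := (mem_filter.mp hf'A).2
    obtain ⟨a, b, c, d, h1, h2, h3, h4, h5, h6, rfl, rfl⟩ := dis_rep he hf hdis
    obtain ⟨a', b', c', d', h1', h2', h3', h4', h5', h6', rfl, rfl⟩ := dis_rep he' hf' hsh'
    obtain ⟨σ, hσ1, hσ2, hσ3, hσ4⟩ := exists_perm_four h1 h2 h3 h4 h5 h6 h1' h2' h3' h4' h5' h6'
    refine (count_map σ _ _ ?_).symm
    intro E _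
    rw [mem_image_sym2 σ s(a, b), mem_image_sym2 σ s(c, d), Sym2.map_pair_eq,
      Sym2.map_pair_eq, hσ1, hσ2, hσ3, hσ4]
  have hdc := double_count ((A ×ˢ A).filter
      (fun q : Sym2 (Fin n) × Sym2 (Fin n) => q.1 ≠ q.2 ∧ ¬∃ a, a ∈ q.1 ∧ a ∈ q.2))
    (univ.filter (· ∈ CycS n l)) (fun q E => q.1 ∈ E ∧ q.2 ∈ E)
  rw [Finset.sum_congr rfl hconst, Finset.sum_const, smul_eq_mul] at hdc
  have hper : ∀ E ∈ univ.filter (· ∈ CycS n l),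
      (((A ×ˢ A).filter
        (fun q : Sym2 (Fin n) × Sym2 (Fin n) => q.1 ≠ q.2 ∧ ¬∃ a, a ∈ q.1 ∧ a ∈ q.2)).filter
        (fun q => q.1 ∈ E ∧ q.2 ∈ E)).card = l * l - 3 * l := by
    intro E hE
    have hE' := (mem_filter.mp hE).2
    rw [pair_filter_eq hl4 hE' (fun x y => x ≠ y ∧ ¬∃ a, a ∈ x ∧ a ∈ y)]
    obtain ⟨v, hv, rfl⟩ := hE'
    exact cyc_dis_pairs_card hl4 hv
  rw [Finset.sum_congr rfl hper, Finset.sum_const, smul_eq_mul] at hdc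
  have hPdis : ((A ×ˢ A).filter
      (fun q : Sym2 (Fin n) × Sym2 (Fin n) => q.1 ≠ q.2 ∧ ¬∃ a, a ∈ q.1 ∧ a ∈ q.2)).card
      = Nat.choose n 2 * (Nat.choose n 2 - (2 * (n - 2) + 1)) := by
    rw [card_prod_filter A A (fun x y => x ≠ y ∧ ¬∃ a, a ∈ x ∧ a ∈ y)]
    have hfib : ∀ e' ∈ A, (A.filter (fun y => e' ≠ y ∧ ¬∃ a, a ∈ e' ∧ a ∈ y)).card
        = Nat.choose n 2 - (2 * (n - 2) + 1) := by
      intro e' he'A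
      obtain ⟨a, b, rfl⟩ := sym2_rep e'
      have hab : a ≠ b := fun h => (mem_filter.mp he'A).2 (Sym2.mk_isDiag_iff.mpr h)
      have hdd := dis_count hab
      rw [A_card] at hdd
      rw [← hAdef] at hdd
      omega
    rw [Finset.sum_congr rfl hfib, Finset.sum_const, smul_eq_mul, A_card]
  rw [hPdis] at hdc
  rw [mul_comm]
  exact hdc

end Main

-- from t10.lean




lemma sum_p_eq {n l : ℕ} [NeZero l] [DecidablePred (· ∈ CycS n l)]
    (P : Finset (Sym2 (Fin n)) → Prop) [DecidablePred P] (hP : ¬ P ∅) (c d : ℝ) :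
    ∑ E ∈ univ.filter P, (Set.indicator (CycS n l) (fun _ => c) E
        + Set.indicator {(∅ : Finset (Sym2 (Fin n)))} (fun _ => d) E)
      = c * ((univ.filter (· ∈ CycS n l)).filter P).card := by
  rw [Finset.sum_add_distrib]
  have h2 : ∑ E ∈ univ.filter P,
      Set.indicator {(∅ : Finset (Sym2 (Fin n)))} (fun _ => d) E = 0 := by
    apply Finset.sum_eq_zero
    intro E hE
    apply Set.indicator_of_notMem
    intro h
    rw [Set.mem_singleton_iff] at h
    subst h
    exact hP (mem_filter.mp hE).2
  rw [h2, add_zero]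
  have h1 : ∀ E ∈ univ.filter P, Set.indicator (CycS n l) (fun _ => c) E
      = if E ∈ CycS n l then c else 0 := fun E _ => Set.indicator_apply _ _ _
  rw [Finset.sum_congr rfl h1, ← Finset.sum_filter, Finset.sum_const, nsmul_eq_mul,
    Finset.filter_comm]
  ring

lemma ncard_eq {n l : ℕ} [NeZero l] [DecidablePred (· ∈ CycS n l)] :
    (CycS n l).ncard = (univ.filter (· ∈ CycS n l)).card := by
  have h : CycS n l = ((univ.filter (· ∈ CycS n l) : Finset (Finset (Sym2 (Fin n)))) :
      Set (Finset (Sym2 (Fin n)))) := by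
    ext E; simp
  conv_lhs => rw [h]
  exact Set.ncard_coe_finset _

/-- For odd `n ≥ 5`, let `R` be the random edge set of `K_n` that, with
probability `n(n-1)/((n+3)(n-2))`, is a uniformly random cycle of length `(n+3)/2`
(encoded by `l` with `2l = n+3`), and otherwise is empty.  Then every non-loop edge `e`
has `Pr[e ∈ R] = 1/(n-2)`, and every pair of distinct non-loop edges `e ≠ f` has
`Pr[e ∈ R and f ∈ R] = 1/(n-2)²`: the events `{e ∈ R}` are pairwise independent. -/
theorem stmt_17 (n l : ℕ) [NeZero l] (hn : 5 ≤ n) (hodd : Odd n) (hl : 2 * l = n + 3)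
    (Cyc : Set (Finset (Sym2 (Fin n))))
    (hCyc : Cyc = {E | ∃ v : ZMod l → Fin n, Function.Injective v ∧
        E = Finset.image (fun i => s(v i, v (i + 1))) Finset.univ})
    (p : Finset (Sym2 (Fin n)) → ℝ)
    (hp : p = fun E =>
      Set.indicator Cyc
        (fun _ => ((n : ℝ) * ((n : ℝ) - 1)) / (((n : ℝ) + 3) * ((n : ℝ) - 2))
          / (Cyc.ncard : ℝ)) E
      + Set.indicator {(∅ : Finset (Sym2 (Fin n)))}
        (fun _ => 1 - ((n : ℝ) * ((n : ℝ) - 1)) / (((n : ℝ) + 3) * ((n : ℝ) - 2))) E) :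
    (∀ e : Sym2 (Fin n), ¬ e.IsDiag →
      ∑ E ∈ Finset.univ.filter (fun E : Finset (Sym2 (Fin n)) => e ∈ E), p E
        = 1 / ((n : ℝ) - 2)) ∧
    (∀ e f : Sym2 (Fin n), ¬ e.IsDiag → ¬ f.IsDiag → e ≠ f →
      ∑ E ∈ Finset.univ.filter (fun E : Finset (Sym2 (Fin n)) => e ∈ E ∧ f ∈ E), p E
        = 1 / ((n : ℝ) - 2) ^ 2) := by
  classical
  have hl4 : 4 ≤ l := by omega
  have hCyc' : Cyc = CycS n l := hCyc
  subst hCyc'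
  subst hp
  have hln : l ≤ n := by omega
  have hCpos := CycS_card_pos (n := n) (l := l) hl4 hln
  have hx5 : (5 : ℝ) ≤ (n : ℝ) := by exact_mod_cast hn
  have hC0 : (((univ.filter (· ∈ CycS n l)).card : ℕ) : ℝ) ≠ 0 :=
    Nat.cast_ne_zero.mpr hCpos.ne'
  have hch : ((n.choose 2 : ℕ) : ℝ) = (n : ℝ) * ((n : ℝ) - 1) / 2 := by
    rw [Nat.cast_choose_two]
  have hlr : (l : ℝ) = ((n : ℝ) + 3) / 2 := by
    have h : ((2 * l : ℕ) : ℝ) = ((n + 3 : ℕ) : ℝ) := by rw [hl]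
    push_cast at h
    linarith
  have hn2 : (2 : ℕ) ≤ n := by omega
  have hsub2 : (((n - 2 : ℕ)) : ℝ) = (n : ℝ) - 2 := by
    rw [Nat.cast_sub hn2]; norm_num
  constructor
  · intro e he
    rw [ncard_eq, sum_p_eq (fun E => e ∈ E) (by simp) _ _]
    have keyR : (((univ.filter (· ∈ CycS n l)).filter (fun E => e ∈ E)).card : ℝ)
          * ((n.choose 2 : ℕ) : ℝ)
        = (((univ.filter (· ∈ CycS n l)).card : ℕ) : ℝ) * (l : ℝ) := by
      exact_mod_cast N1_eq hl4 he
    rw [hch, hlr] at keyR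
    set C := (((univ.filter (· ∈ CycS n l)).card : ℕ) : ℝ) with hCdef
    set N := (((univ.filter (· ∈ CycS n l)).filter (fun E => e ∈ E)).card : ℝ) with hNdef
    have h2 : (n:ℝ) - 2 ≠ 0 := by linarith
    have h3 : (n:ℝ) + 3 ≠ 0 := by linarith
    have h0 : (n:ℝ) ≠ 0 := by linarith
    have h1 : (n:ℝ) - 1 ≠ 0 := by linarith
    have hN : N = C * ((n:ℝ) + 3) / ((n:ℝ) * ((n:ℝ) - 1)) := by
      rw [eq_div_iff (mul_ne_zero h0 h1)]
      linear_combination 2 * keyR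
    rw [hN]
    field_simp
  · intro e f he hf hef
    rw [ncard_eq, sum_p_eq (fun E => e ∈ E ∧ f ∈ E) (by simp) _ _]
    set C := (((univ.filter (· ∈ CycS n l)).card : ℕ) : ℝ) with hCdef
    set N := (((univ.filter (· ∈ CycS n l)).filter (fun E => e ∈ E ∧ f ∈ E)).card : ℝ)
      with hNdef
    have h2 : (n:ℝ) - 2 ≠ 0 := by linarith
    have h3 : (n:ℝ) + 3 ≠ 0 := by linarith
    have h0 : (n:ℝ) ≠ 0 := by linarith
    have h1 : (n:ℝ) - 1 ≠ 0 := by linarith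
    have h4 : (n:ℝ) - 3 ≠ 0 := by linarith
    by_cases hsh : ∃ a, a ∈ e ∧ a ∈ f
    · have keyR : N * (((n.choose 2 : ℕ) : ℝ) * (((2 * (n - 2) : ℕ)) : ℝ))
          = C * ((2 : ℝ) * (l : ℝ)) := by
        rw [hCdef, hNdef]
        exact_mod_cast N2adj_eq hl4 he hf hef hsh
      rw [hch, hlr] at keyR
      rw [Nat.cast_mul, hsub2] at keyR
      push_cast at keyR
      have hN : N = C * ((n:ℝ) + 3) / ((n:ℝ) * ((n:ℝ) - 1) * ((n:ℝ) - 2)) := by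
        rw [eq_div_iff (mul_ne_zero (mul_ne_zero h0 h1) h2)]
        linear_combination keyR
      rw [hN]
      field_simp
    · -- disjoint case
      have hDle : 2 * (n - 2) + 1 ≤ n.choose 2 := by
        obtain ⟨a, b, rfl⟩ := sym2_rep e
        have hab : a ≠ b := fun h => he (Sym2.mk_isDiag_iff.mpr h)
        have hdd := dis_count hab
        rw [A_card] at hdd
        omega
      have hMle : 3 * l ≤ l * l := Nat.mul_le_mul_right l (by omega)
      have keyR : N * (((n.choose 2 : ℕ) : ℝ)
            * (((n.choose 2 - (2 * (n - 2) + 1) : ℕ)) : ℝ))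
          = C * (((l * l - 3 * l : ℕ)) : ℝ) := by
        rw [hCdef, hNdef]
        exact_mod_cast N2dis_eq hl4 he hf hsh
      rw [Nat.cast_sub hDle, Nat.cast_sub hMle] at keyR
      push_cast at keyR
      rw [hch, hlr, hsub2] at keyR
      have hN : N = C * (((n:ℝ) + 3) * ((n:ℝ) - 3))
          / ((n:ℝ) * ((n:ℝ) - 1) * ((n:ℝ) - 2) * ((n:ℝ) - 3)) := by
        rw [eq_div_iff (mul_ne_zero (mul_ne_zero (mul_ne_zero h0 h1) h2) h4)]
        linear_combination 4 * keyR
      rw [hN]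
      field_simp
end

section
/- Let G = (U, V, E) be a finite bipartite graph with E ⊆ U × V in which every vertex of U has at least one neighbor, let b > 0, and let x : U → ℝ_{≥0}. For S ⊆ U let ν(S) denote the maximum size of a subset T ⊆ S admitting an injection f : T → V with (i, f(i)) ∈ E for all i ∈ T (the maximum size of a matching whose left endpoints lie in S). Suppose Σ_{i∈S} x_i ≤ b·ν(S) for every S ⊆ U. Then there exist numbers y_{i,j} ∈ [0,1] for (i,j) ∈ E such that Σ_{j : (i,j)∈E} y_{i,j} = 1 for every i ∈ U, and Σ_{i : (i,j)∈E} x_i·y_{i,j} ≤ b for every j ∈ V. -/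
open Finset

lemma stmt18_integral_flow {U V : Type*} [Fintype U] [Fintype V] [DecidableEq U] [DecidableEq V]
    (E : Finset (U × V)) (p : U → ℕ) (q : ℕ)
    (hp : ∀ S : Finset U, ∑ i ∈ S, p i ≤
      q * (S.biUnion (fun i => univ.filter (fun j => (i, j) ∈ E))).card) :
    ∃ z : U → V → ℕ,
      (∀ i, ∑ j ∈ univ.filter (fun j => (i, j) ∈ E), z i j = p i) ∧
      (∀ i j, z i j ≠ 0 → (i, j) ∈ E) ∧
      (∀ j, ∑ i, z i j ≤ q) := by
  set Nbr : U → Finset V := fun i => univ.filter (fun j => (i, j) ∈ E) with hNbr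
  set t : (Σ i : U, Fin (p i)) → Finset (V × Fin q) := fun a => (Nbr a.1) ×ˢ univ with ht
  have hhall : ∀ s : Finset (Σ i : U, Fin (p i)), s.card ≤ (s.biUnion t).card := by
    intro s
    have h1 : s ⊆ (s.image Sigma.fst).sigma fun _ => univ :=
      fun a ha => mem_sigma.mpr ⟨mem_image_of_mem _ ha, mem_univ _⟩
    have hcard1 : s.card ≤ ∑ i ∈ s.image Sigma.fst, p i := by
      calc s.card ≤ ((s.image Sigma.fst).sigma fun _ => univ).card := card_le_card h1
        _ = ∑ i ∈ s.image Sigma.fst, p i := by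
          rw [card_sigma]; simp
    have h2 : s.biUnion t = ((s.image Sigma.fst).biUnion Nbr) ×ˢ (univ : Finset (Fin q)) := by
      ext ⟨v, l⟩
      simp only [mem_biUnion, Finset.mem_product, mem_image, mem_univ, and_true, ht]
      constructor
      · rintro ⟨a, ha, hv⟩
        exact ⟨a.1, ⟨a, ha, rfl⟩, hv⟩
      · rintro ⟨i, ⟨a, ha, rfl⟩, hv⟩
        exact ⟨a, ha, hv⟩
    calc s.card ≤ ∑ i ∈ s.image Sigma.fst, p i := hcard1
      _ ≤ q * ((s.image Sigma.fst).biUnion Nbr).card := hp _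
      _ = (s.biUnion t).card := by
          rw [h2, card_product, card_univ, Fintype.card_fin, mul_comm]
  obtain ⟨f, hfinj, hft⟩ := (Finset.all_card_le_biUnion_card_iff_exists_injective t).mp hhall
  have hfmem : ∀ a : (Σ i : U, Fin (p i)), (f a).1 ∈ Nbr a.1 :=
    fun a => (mem_product.mp (hft a)).1
  refine ⟨fun i j => (univ.filter fun k : Fin (p i) => (f ⟨i, k⟩).1 = j).card, ?_, ?_, ?_⟩
  · intro i
    have := Finset.card_eq_sum_card_fiberwise
      (f := fun k : Fin (p i) => (f ⟨i, k⟩).1) (s := univ) (t := Nbr i)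
      (fun k _ => hfmem ⟨i, k⟩)
    simpa using this.symm
  · intro i j hz
    obtain ⟨k, hk⟩ := Finset.card_pos.mp (Nat.pos_of_ne_zero hz)
    have := hfmem ⟨i, k⟩
    rw [(mem_filter.mp hk).2] at this
    exact (mem_filter.mp this).2
  · intro j
    have hs : ∑ i, (univ.filter fun k : Fin (p i) => (f ⟨i, k⟩).1 = j).card =
        ((univ : Finset U).sigma fun i => univ.filter fun k : Fin (p i) => (f ⟨i, k⟩).1 = j).card :=
      (Finset.card_sigma _ _).symm
    rw [hs]
    have : ((univ : Finset U).sigma fun i => univ.filter fun k : Fin (p i) => (f ⟨i, k⟩).1 = j).card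
        ≤ (univ : Finset (Fin q)).card := by
      apply Finset.card_le_card_of_injOn (fun a => (f a).2) (fun a _ => mem_univ _)
      rintro ⟨i, k⟩ ha ⟨i', k'⟩ hb hab
      simp only [Finset.coe_sigma, Set.mem_sigma_iff, mem_coe, mem_filter] at ha hb
      have h1 : (f ⟨i, k⟩).1 = (f ⟨i', k'⟩).1 := by rw [ha.2.2, hb.2.2]
      exact hfinj (Prod.ext h1 hab)
    simpa using this

lemma stmt18_approx {U V : Type*} [Fintype U] [Fintype V] [DecidableEq U] [DecidableEq V]
    (E : Finset (U × V)) (hne : ∀ i : U, ∃ j : V, (i, j) ∈ E)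
    (b : ℝ) (hb : 0 < b) (x : U → ℝ) (hx : ∀ i, 0 ≤ x i)
    (ν : Finset U → ℕ)
    (hν : ∀ S : Finset U, IsGreatest
      {m : ℕ | ∃ T : Finset U, T ⊆ S ∧ T.card = m ∧
        ∃ f : U → V, Set.InjOn f (T : Set U) ∧ ∀ i ∈ T, (i, f i) ∈ E}
      (ν S))
    (hrank : ∀ S : Finset U, ∑ i ∈ S, x i ≤ b * (ν S : ℝ))
    (D : ℕ) (hD : 0 < D) :
    ∃ y : U × V → ℝ,
      (∀ e, y e ∈ Set.Icc (0 : ℝ) 1) ∧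
      (∀ i : U, ∑ j ∈ univ.filter (fun j : V => (i, j) ∈ E), y (i, j) = 1) ∧
      (∀ j : V, ∑ i ∈ univ.filter (fun i : U => (i, j) ∈ E), x i * y (i, j) ≤
        ((⌈b * D⌉₊ + Fintype.card U : ℕ) : ℝ) / D) := by
  set p : U → ℕ := fun i => ⌈x i * D⌉₊ with hpdef
  set q : ℕ := ⌈b * D⌉₊ + Fintype.card U with hqdef
  have hD' : (0 : ℝ) < D := by exact_mod_cast hD
  -- ν S ≥ 1 for nonempty S
  have hν1 : ∀ S : Finset U, S.Nonempty → 1 ≤ ν S := by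
    intro S ⟨i, hi⟩
    obtain ⟨j, hj⟩ := hne i
    exact (hν S).2 ⟨{i}, by simpa using hi, by simp, fun _ => j,
      by rw [Finset.coe_singleton]; exact Set.injOn_singleton _ _, by simpa using hj⟩
  -- ν S ≤ card of neighborhood
  have hνN : ∀ S : Finset U,
      ν S ≤ (S.biUnion (fun i => univ.filter (fun j => (i, j) ∈ E))).card := by
    intro S
    obtain ⟨T, hTS, hTcard, f, hfinj, hfE⟩ := (hν S).1
    calc ν S = (T.image f).card := by
          rw [Finset.card_image_of_injOn hfinj, hTcard]
      _ ≤ _ := by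
          apply card_le_card
          intro v hv
          obtain ⟨i, hi, rfl⟩ := mem_image.mp hv
          exact mem_biUnion.mpr ⟨i, hTS hi, mem_filter.mpr ⟨mem_univ _, hfE i hi⟩⟩
  have hp : ∀ S : Finset U, ∑ i ∈ S, p i ≤
      q * (S.biUnion (fun i => univ.filter (fun j => (i, j) ∈ E))).card := by
    intro S
    rcases S.eq_empty_or_nonempty with rfl | hS
    · simp
    have key : ∑ i ∈ S, p i ≤ q * ν S := by
      have : ((∑ i ∈ S, p i : ℕ) : ℝ) ≤ ((q * ν S : ℕ) : ℝ) := by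
        push_cast
        have h1 : ∀ i ∈ S, ((p i : ℝ)) ≤ x i * D + 1 := by
          intro i _
          exact (Nat.ceil_lt_add_one (mul_nonneg (hx i) hD'.le)).le
        have h2 : ((∑ i ∈ S, p i : ℕ) : ℝ) ≤ ∑ i ∈ S, (x i * D + 1) := by
          push_cast
          exact Finset.sum_le_sum h1
        have h3 : ∑ i ∈ S, (x i * D + 1) = (∑ i ∈ S, x i) * D + S.card := by
          rw [Finset.sum_add_distrib, ← Finset.sum_mul]
          simp
        have h4 : (∑ i ∈ S, x i) * D ≤ b * D * (ν S : ℝ) := by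
          have := hrank S
          nlinarith [hD'.le, (Nat.cast_nonneg (ν S) : (0:ℝ) ≤ _)]
        have h5 : b * D ≤ (⌈b * D⌉₊ : ℝ) := Nat.le_ceil _
        have h6 : (S.card : ℝ) ≤ Fintype.card U := by
          exact_mod_cast Finset.card_le_univ S
        have h7 : (1 : ℝ) ≤ (ν S : ℝ) := by exact_mod_cast hν1 S hS
        have hq : (q : ℝ) = (⌈b * D⌉₊ : ℝ) + (Fintype.card U : ℝ) := by
          rw [hqdef]; push_cast; ring
        have e1 : b * D * (ν S : ℝ) ≤ (⌈b * D⌉₊ : ℝ) * (ν S : ℝ) :=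
          mul_le_mul_of_nonneg_right h5 (by linarith)
        have e2 : (Fintype.card U : ℝ) ≤ (Fintype.card U : ℝ) * (ν S : ℝ) :=
          le_mul_of_one_le_right (Nat.cast_nonneg _) h7
        push_cast at h2 ⊢
        nlinarith [hq, e1, e2]
      exact_mod_cast this
    exact key.trans (Nat.mul_le_mul_left q (hνN S))
  obtain ⟨z, hzrow, hzsupp, hzcol⟩ := stmt18_integral_flow E p q hp
  -- z i j ≤ p i
  have hzle : ∀ i j, z i j ≤ p i := by
    intro i j
    by_cases hij : (i, j) ∈ E
    · rw [← hzrow i]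
      exact Finset.single_le_sum (fun _ _ => Nat.zero_le _)
        (mem_filter.mpr ⟨mem_univ _, hij⟩)
    · have h0 : z i j = 0 := by
        by_contra h
        exact hij (hzsupp i j h)
      simp [h0]
  set ch : U → V := fun i => (hne i).choose with hch
  have hchE : ∀ i, (i, ch i) ∈ E := fun i => (hne i).choose_spec
  refine ⟨fun e => if p e.1 = 0 then (if e.2 = ch e.1 then 1 else 0)
    else (z e.1 e.2 : ℝ) / p e.1, ?_, ?_, ?_⟩
  · rintro ⟨i, j⟩
    by_cases h0 : p i = 0
    · simp only [h0, if_true]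
      split <;> simp
    · have hp0 : (0 : ℝ) < p i := by exact_mod_cast Nat.pos_of_ne_zero h0
      simp only [h0, if_false]
      constructor
      · positivity
      · rw [div_le_one hp0]
        exact_mod_cast hzle i j
  · intro i
    by_cases h0 : p i = 0
    · simp only [h0, if_true]
      rw [Finset.sum_ite_eq' (univ.filter fun j : V => (i, j) ∈ E) (ch i) (fun _ => (1:ℝ))]
      simp [hchE i]
    · have hp0 : (0 : ℝ) < p i := by exact_mod_cast Nat.pos_of_ne_zero h0
      simp only [h0, if_false]
      rw [← Finset.sum_div]
      rw [show ∑ j ∈ univ.filter (fun j : V => (i, j) ∈ E), ((z i j : ℝ)) = ((p i : ℝ)) by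
        exact_mod_cast congrArg (fun n : ℕ => (n : ℝ)) (hzrow i)]
      exact div_self hp0.ne'
  · intro j
    have step : ∀ i ∈ univ.filter (fun i : U => (i, j) ∈ E),
        x i * (if p i = 0 then (if j = ch i then 1 else 0) else (z i j : ℝ) / p i)
          ≤ (z i j : ℝ) / D := by
      intro i _
      have hxp : x i ≤ (p i : ℝ) / D := by
        rw [le_div_iff₀ hD']
        exact Nat.le_ceil _
      by_cases h0 : p i = 0
      · have hx0 : x i = 0 := le_antisymm (by simpa [h0] using hxp) (hx i)
        rw [hx0, zero_mul]
        positivity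
      · have hp0 : (0 : ℝ) < p i := by exact_mod_cast Nat.pos_of_ne_zero h0
        simp only [h0, if_false]
        have : x i * ((z i j : ℝ) / p i) ≤ ((p i : ℝ) / D) * ((z i j : ℝ) / p i) := by
          apply mul_le_mul_of_nonneg_right hxp
          positivity
        refine this.trans (le_of_eq ?_)
        field_simp
    calc ∑ i ∈ univ.filter (fun i : U => (i, j) ∈ E),
          x i * (if p i = 0 then (if j = ch i then 1 else 0) else (z i j : ℝ) / p i)
        ≤ ∑ i ∈ univ.filter (fun i : U => (i, j) ∈ E), (z i j : ℝ) / D :=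
          Finset.sum_le_sum step
      _ ≤ ∑ i, (z i j : ℝ) / D := by
          apply Finset.sum_le_sum_of_subset_of_nonneg (Finset.subset_univ _)
          intro i _ _
          positivity
      _ ≤ (q : ℝ) / D := by
          rw [← Finset.sum_div]
          gcongr
          exact_mod_cast hzcol j
      _ = ((⌈b * D⌉₊ + Fintype.card U : ℕ) : ℝ) / D := by rw [hqdef]



/-- Let `G = (U, V, E)` be a finite bipartite graph where every `i ∈ U`
has a neighbor, `b > 0`, and `x : U → ℝ≥0`.  If `ν S` is the maximum size of a subset
of `S` matchable into `V` along `E` (rank in the transversal matroid) and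
`∑_{i∈S} x i ≤ b · ν S` for all `S ⊆ U`, then there exist `y_{i,j} ∈ [0,1]` for
`(i,j) ∈ E` with `∑_j y_{i,j} = 1` for all `i` and `∑_i x i · y_{i,j} ≤ b` for all `j`. -/
theorem stmt_18 {U V : Type*} [Fintype U] [Fintype V] [DecidableEq U] [DecidableEq V]
    (E : Finset (U × V)) (hne : ∀ i : U, ∃ j : V, (i, j) ∈ E)
    (b : ℝ) (hb : 0 < b) (x : U → ℝ) (hx : ∀ i, 0 ≤ x i)
    (ν : Finset U → ℕ)
    (hν : ∀ S : Finset U, IsGreatest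
      {m : ℕ | ∃ T : Finset U, T ⊆ S ∧ T.card = m ∧
        ∃ f : U → V, Set.InjOn f (T : Set U) ∧ ∀ i ∈ T, (i, f i) ∈ E}
      (ν S))
    (hrank : ∀ S : Finset U, ∑ i ∈ S, x i ≤ b * (ν S : ℝ)) :
    ∃ y : U × V → ℝ,
      (∀ e ∈ E, y e ∈ Set.Icc (0 : ℝ) 1) ∧
      (∀ i : U, ∑ j ∈ Finset.univ.filter (fun j : V => (i, j) ∈ E), y (i, j) = 1) ∧
      (∀ j : V, ∑ i ∈ Finset.univ.filter (fun i : U => (i, j) ∈ E), x i * y (i, j) ≤ b) := by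
  classical
  choose w hw1 hw2 hw3 using fun n : ℕ =>
    stmt18_approx E hne b hb x hx ν hν hrank (n + 1) (Nat.succ_pos n)
  set c : ℕ → ℝ := fun n => ((⌈b * ((n + 1 : ℕ) : ℝ)⌉₊ + Fintype.card U : ℕ) : ℝ) / ((n + 1 : ℕ) : ℝ)
    with hc
  have hcb : Filter.Tendsto c Filter.atTop (nhds b) := by
    have hlow : ∀ n : ℕ, b ≤ c n := by
      intro n
      have hn : (0 : ℝ) < ((n + 1 : ℕ) : ℝ) := by positivity
      rw [hc, le_div_iff₀ hn]
      push_cast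
      have := Nat.le_ceil (b * ((n + 1 : ℕ) : ℝ))
      push_cast at this
      nlinarith [(Nat.cast_nonneg (Fintype.card U) : (0:ℝ) ≤ _)]
    have hup : ∀ n : ℕ, c n ≤ b + (1 + Fintype.card U) / ((n + 1 : ℕ) : ℝ) := by
      intro n
      have hn : (0 : ℝ) < ((n + 1 : ℕ) : ℝ) := by positivity
      have hceil : (⌈b * ((n + 1 : ℕ) : ℝ)⌉₊ : ℝ) ≤ b * ((n + 1 : ℕ) : ℝ) + 1 :=
        (Nat.ceil_lt_add_one (by positivity)).le
      have h1 : c n = ((⌈b * ((n + 1 : ℕ) : ℝ)⌉₊ : ℝ) + Fintype.card U) / ((n + 1 : ℕ) : ℝ) := by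
        rw [hc]; push_cast; ring
      rw [h1]
      have h2 : ((⌈b * ((n + 1 : ℕ) : ℝ)⌉₊ : ℝ) + Fintype.card U) / ((n + 1 : ℕ) : ℝ)
          ≤ (b * ((n + 1 : ℕ) : ℝ) + 1 + Fintype.card U) / ((n + 1 : ℕ) : ℝ) := by
        gcongr
      refine h2.trans (le_of_eq ?_)
      field_simp
      ring
    have h0 : Filter.Tendsto (fun n : ℕ => (1 + Fintype.card U : ℝ) / ((n + 1 : ℕ) : ℝ))
        Filter.atTop (nhds 0) := by
      have := tendsto_one_div_add_atTop_nhds_zero_nat.const_mul ((1 : ℝ) + Fintype.card U)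
      simp only [mul_one_div, mul_zero] at this
      convert this using 2 with n
      push_cast
      ring
    have hbb : Filter.Tendsto (fun n : ℕ => b + (1 + Fintype.card U : ℝ) / ((n + 1 : ℕ) : ℝ))
        Filter.atTop (nhds b) := by
      have := Filter.Tendsto.add (tendsto_const_nhds (x := b) (f := Filter.atTop (α := ℕ))) h0
      simpa using this
    exact tendsto_of_tendsto_of_tendsto_of_le_of_le tendsto_const_nhds hbb hlow hup
  -- compactness
  set K : Set (U × V → ℝ) := Set.univ.pi fun _ : U × V => Set.Icc (0 : ℝ) 1 with hK
  have hKc : IsCompact K := isCompact_univ_pi fun _ => isCompact_Icc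
  have hwK : ∀ n, w n ∈ K := by
    intro n
    rw [hK, Set.mem_univ_pi]
    exact fun e => hw1 n e
  obtain ⟨ylim, hylimK, φ, hφ, htend⟩ := hKc.tendsto_subseq hwK
  have hcoord : ∀ e : U × V, Filter.Tendsto (fun n => w (φ n) e) Filter.atTop (nhds (ylim e)) :=
    fun e => tendsto_pi_nhds.mp htend e
  refine ⟨ylim, ?_, ?_, ?_⟩
  · intro e _
    rw [hK, Set.mem_univ_pi] at hylimK
    exact hylimK e
  · intro i
    have hA : Filter.Tendsto (fun n => ∑ j ∈ univ.filter (fun j : V => (i, j) ∈ E), w (φ n) (i, j))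
        Filter.atTop (nhds (∑ j ∈ univ.filter (fun j : V => (i, j) ∈ E), ylim (i, j))) :=
      tendsto_finset_sum _ fun j _ => hcoord (i, j)
    have hB : Filter.Tendsto (fun n => ∑ j ∈ univ.filter (fun j : V => (i, j) ∈ E), w (φ n) (i, j))
        Filter.atTop (nhds 1) := by
      simp only [fun n => hw2 (φ n) i]
      exact tendsto_const_nhds
    exact tendsto_nhds_unique hA hB
  · intro j
    have hA : Filter.Tendsto
        (fun n => ∑ i ∈ univ.filter (fun i : U => (i, j) ∈ E), x i * w (φ n) (i, j))
        Filter.atTop (nhds (∑ i ∈ univ.filter (fun i : U => (i, j) ∈ E), x i * ylim (i, j))) :=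
      tendsto_finset_sum _ fun i _ => (hcoord (i, j)).const_mul (x i)
    have hB : Filter.Tendsto (fun n => c (φ n)) Filter.atTop (nhds b) :=
      hcb.comp (hφ.tendsto_atTop)
    refine le_of_tendsto_of_tendsto' hA hB ?_
    intro n
    exact hw3 (φ n) j
end

section
/- Let W_1, …, W_n be nonnegative integrable random variables on a probability space, let I be a random subset of [n] on the same space, set p_i := Pr[i ∈ I], and let τ_1, …, τ_n be real numbers with Pr[W_i ≥ τ_i] = p_i for every i. Then E[ Σ_{i ∈ I} W_i ] ≤ Σ_{i=1}^n E[ W_i · 1_{W_i ≥ τ_i} ]; equivalently, E[ Σ_{i ∈ I} W_i ] ≤ Σ_{i=1}^n p_i · E[W_i | W_i ≥ τ_i] (where terms with p_i = 0 are interpreted as 0). -/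
open MeasureTheory

lemma key_swap {Ω : Type*} [MeasurableSpace Ω] (μ : Measure Ω) [IsFiniteMeasure μ]
    (f : Ω → ℝ) (hm : Measurable f) (hi : Integrable f μ)
    (B : Set Ω) (hB : MeasurableSet B) (τ : ℝ)
    (h : μ {ω | τ ≤ f ω} = μ B) :
    ∫ ω in B, f ω ∂μ ≤ ∫ ω in {ω | τ ≤ f ω}, f ω ∂μ := by
  set A : Set Ω := {ω | τ ≤ f ω} with hAdef
  have hA : MeasurableSet A := measurableSet_le measurable_const hm
  have hmeq : μ (B \ A) = μ (A \ B) := by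
    have h1 : μ (B \ A) + μ (B ∩ A) = μ B := measure_diff_add_inter B hA
    have h2 : μ (A \ B) + μ (A ∩ B) = μ A := measure_diff_add_inter A hB
    rw [Set.inter_comm] at h2
    have hfin : μ (B ∩ A) ≠ ⊤ := (measure_lt_top μ _).ne
    rw [h] at h2
    have := h1.trans h2.symm
    exact WithTop.add_right_cancel hfin this
  have split : ∀ (s t : Set Ω), MeasurableSet s → MeasurableSet t →
      ∫ ω in s, f ω ∂μ = ∫ ω in s ∩ t, f ω ∂μ + ∫ ω in s \ t, f ω ∂μ := by
    intro s t hs ht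
    nth_rewrite 1 [← Set.inter_union_diff s t]
    exact setIntegral_union Set.disjoint_sdiff_inter.symm (hs.diff ht)
      hi.integrableOn hi.integrableOn
  rw [split B A hB hA, split A B hA hB, Set.inter_comm A B]
  gcongr _ + ?_
  have hb : ∫ ω in B \ A, f ω ∂μ ≤ τ * (μ (B \ A)).toReal := by
    have : ∫ ω in B \ A, f ω ∂μ ≤ ∫ _ω in B \ A, τ ∂μ := by
      apply setIntegral_mono_on hi.integrableOn (integrableOn_const (measure_lt_top μ _).ne enorm_ne_top)
        (hB.diff hA)
      intro ω hω
      exact le_of_lt (not_le.1 hω.2)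
    simpa [mul_comm, measureReal_def] using this
  have ha : τ * (μ (A \ B)).toReal ≤ ∫ ω in A \ B, f ω ∂μ := by
    have : ∫ _ω in A \ B, τ ∂μ ≤ ∫ ω in A \ B, f ω ∂μ := by
      apply setIntegral_mono_on (integrableOn_const (measure_lt_top μ _).ne enorm_ne_top)
        hi.integrableOn (hA.diff hB)
      intro ω hω
      exact hω.1
    simpa [mul_comm, measureReal_def] using this
  calc ∫ ω in B \ A, f ω ∂μ ≤ τ * (μ (B \ A)).toReal := hb
    _ = τ * (μ (A \ B)).toReal := by rw [hmeq]
    _ ≤ ∫ ω in A \ B, f ω ∂μ := ha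

/-- For nonnegative integrable random variables `W i`, a random subset
`I` of `[n]`, and thresholds `τ i` with `Pr[W i ≥ τ i] = Pr[i ∈ I]`, we have
`E[∑_{i ∈ I} W i] ≤ ∑ i E[W i · 1_{W i ≥ τ i}]`. -/
theorem stmt_19 {Ω : Type*} [MeasurableSpace Ω] (μ : Measure Ω) [IsProbabilityMeasure μ]
    (n : ℕ) (W : Fin n → Ω → ℝ)
    (hWmeas : ∀ i, Measurable (W i))
    (hWint : ∀ i, Integrable (W i) μ)
    (hWpos : ∀ i ω, 0 ≤ W i ω)
    (I : Ω → Finset (Fin n))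
    (hImeas : ∀ i, MeasurableSet {ω | i ∈ I ω})
    (τ : Fin n → ℝ)
    (hτ : ∀ i, μ {ω | τ i ≤ W i ω} = μ {ω | i ∈ I ω}) :
    (∫ ω, ∑ i ∈ I ω, W i ω ∂μ) ≤
      ∑ i : Fin n, ∫ ω, Set.indicator {ω | τ i ≤ W i ω} (W i) ω ∂μ := by
  have hrw : ∀ ω, ∑ i ∈ I ω, W i ω =
      ∑ i : Fin n, Set.indicator {ω | i ∈ I ω} (W i) ω := by
    intro ω
    rw [Finset.sum_indicator_eq_sum_filter]
    · congr 1
      ext i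
      simp
  calc (∫ ω, ∑ i ∈ I ω, W i ω ∂μ)
      = ∑ i : Fin n, ∫ ω, Set.indicator {ω | i ∈ I ω} (W i) ω ∂μ := by
        simp_rw [hrw]
        exact integral_finset_sum _ (fun i _ => (hWint i).indicator (hImeas i))
    _ ≤ ∑ i : Fin n, ∫ ω, Set.indicator {ω | τ i ≤ W i ω} (W i) ω ∂μ := by
        apply Finset.sum_le_sum
        intro i _
        rw [integral_indicator (hImeas i), integral_indicator (measurableSet_le measurable_const (hWmeas i))]
        exact key_swap μ (W i) (hWmeas i) (hWint i) _ (hImeas i) (τ i) (hτ i)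
end
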